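/- arXiv:1905.05868 — 8 statements merged into one kernel-verified Lean document; each statement's English description precedes it below -/
import Mathlib

section
/- Let M be an n×n Metzler matrix. Then M is Hurwitz if and only if all leading principal minors of -M are positive, i.e., for every i ∈ {1,...,n}, det of the top-left i×i submatrix of -M is positive. -/
open Matrix Polynomial Filter Finset

namespace MetzlerAux

/-- Existence of a positive vector mapped to a negative vector. -/
def PosV {n : ℕ} (M : Matrix (Fin n) (Fin n) ℝ) : Prop :=
  ∃ x : Fin n → ℝ, (∀ i, 0 < x i) ∧ ∀ i, M.mulVec x i < 0

lemma mem_spectrum_iff_det {m : ℕ} (A : Matrix (Fin m) (Fin m) ℂ) (μ : ℂ) :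
    μ ∈ spectrum ℂ A ↔ (Matrix.diagonal (fun _ => μ) - A).det = 0 := by
  have : algebraMap ℂ (Matrix (Fin m) (Fin m) ℂ) μ = Matrix.diagonal (fun _ => μ) := by
    rw [Matrix.algebraMap_eq_diagonal]; rfl
  rw [spectrum.mem_iff, this, Matrix.isUnit_iff_isUnit_det, isUnit_iff_ne_zero, not_not]

lemma exists_eigvec {m : ℕ} (A : Matrix (Fin m) (Fin m) ℂ) (μ : ℂ)
    (h : μ ∈ spectrum ℂ A) : ∃ v : Fin m → ℂ, v ≠ 0 ∧ A.mulVec v = μ • v := by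
  rw [mem_spectrum_iff_det] at h
  obtain ⟨v, hv, hv2⟩ := (Matrix.exists_mulVec_eq_zero_iff).2 h
  refine ⟨v, hv, ?_⟩
  have := hv2
  rw [Matrix.sub_mulVec] at this
  have hd : Matrix.diagonal (fun _ => μ) *ᵥ v = μ • v := by
    ext i; rw [Matrix.mulVec_diagonal]; simp
  rw [hd] at this
  exact (sub_eq_zero.mp this).symm

lemma pos_to_hurwitz {n : ℕ} (M : Matrix (Fin n) (Fin n) ℝ)
    (hM : ∀ i j, i ≠ j → 0 ≤ M i j) (hP : PosV M) :
    ∀ μ ∈ spectrum ℂ (M.map Complex.ofReal), μ.re < 0 := by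
  obtain ⟨x, hx, hMx⟩ := hP
  intro μ hμ
  by_contra hre
  push_neg at hre
  obtain ⟨v, hv, hvec⟩ := exists_eigvec _ μ hμ
  obtain ⟨j₀, hj₀⟩ := Function.ne_iff.mp hv
  obtain ⟨i, -, hi⟩ := Finset.exists_max_image Finset.univ (fun i => ‖v i‖ / x i)
    ⟨j₀, Finset.mem_univ _⟩
  set t : ℝ := ‖v i‖ / x i with ht
  have htpos : 0 < t := lt_of_lt_of_le (div_pos (norm_pos_iff.mpr hj₀) (hx j₀))
    (hi j₀ (Finset.mem_univ _))
  have hvi : ‖v i‖ = t * x i := by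
    rw [ht, div_mul_cancel₀]; exact ne_of_gt (hx i)
  have hbound : ∀ j, ‖v j‖ ≤ t * x j := by
    intro j
    have := hi j (Finset.mem_univ _)
    rwa [div_le_iff₀ (hx j)] at this
  -- row i of eigen equation
  have hrow : ∑ j, (M i j : ℂ) * v j = μ * v i := by
    have := congrFun hvec i
    simpa [Matrix.mulVec, dotProduct, Matrix.map_apply] using this
  have hsplit : (μ - (M i i : ℂ)) * v i = ∑ j ∈ Finset.univ.erase i, (M i j : ℂ) * v j := by
    have := Finset.add_sum_erase Finset.univ (fun j => (M i j : ℂ) * v j) (Finset.mem_univ i)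
    rw [hrow] at this
    rw [sub_mul]
    linear_combination -this
  have hnorm : ‖μ - (M i i : ℂ)‖ * ‖v i‖ ≤ ∑ j ∈ Finset.univ.erase i, M i j * ‖v j‖ := by
    rw [← norm_mul, hsplit]
    refine (norm_sum_le _ _).trans (le_of_eq ?_)
    refine Finset.sum_congr rfl fun j hj => ?_
    rw [norm_mul, Complex.norm_real, Real.norm_eq_abs,
      abs_of_nonneg (hM i j (Finset.ne_of_mem_erase hj).symm)]
  have hstep : ∑ j ∈ Finset.univ.erase i, M i j * ‖v j‖ ≤
      t * ∑ j ∈ Finset.univ.erase i, M i j * x j := by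
    rw [Finset.mul_sum]
    refine Finset.sum_le_sum fun j hj => ?_
    have hMij : 0 ≤ M i j := hM i j (Finset.ne_of_mem_erase hj).symm
    calc M i j * ‖v j‖ ≤ M i j * (t * x j) := by
          exact mul_le_mul_of_nonneg_left (hbound j) hMij
      _ = t * (M i j * x j) := by ring
  have hsum : ∑ j ∈ Finset.univ.erase i, M i j * x j < -M i i * x i := by
    have := Finset.add_sum_erase Finset.univ (fun j => M i j * x j) (Finset.mem_univ i)
    have hmv : M.mulVec x i = ∑ j, M i j * x j := by
      simp [Matrix.mulVec, dotProduct]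
    have := hMx i
    rw [hmv, ← Finset.add_sum_erase Finset.univ (fun j => M i j * x j) (Finset.mem_univ i)]
      at this
    linarith
  have hlb : -M i i ≤ ‖μ - (M i i : ℂ)‖ := by
    calc -M i i ≤ μ.re - M i i := by linarith
      _ = (μ - (M i i : ℂ)).re := by simp
      _ ≤ ‖μ - (M i i : ℂ)‖ := Complex.re_le_norm _
  have hfinal : ‖μ - (M i i : ℂ)‖ * ‖v i‖ < -M i i * (t * x i) := by
    calc ‖μ - (M i i : ℂ)‖ * ‖v i‖ ≤ t * ∑ j ∈ Finset.univ.erase i, M i j * x j :=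
          hnorm.trans hstep
      _ < t * (-M i i * x i) := by
          exact mul_lt_mul_of_pos_left hsum htpos
      _ = -M i i * (t * x i) := by ring
  rw [hvi] at hfinal
  nlinarith [mul_pos htpos (hx i), hlb, mul_le_mul_of_nonneg_right hlb
    (le_of_lt (mul_pos htpos (hx i)))]

lemma eval_charpoly {n : ℕ} (M : Matrix (Fin n) (Fin n) ℝ) (t : ℝ) :
    M.charpoly.eval t = (Matrix.diagonal (fun _ => t) - M).det := by
  rw [Matrix.charpoly, ← Polynomial.coe_evalRingHom, RingHom.map_det]
  congr 1
  ext i j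
  by_cases h : i = j <;>
    simp [Matrix.charmatrix_apply, Matrix.diagonal_apply, h, Matrix.map_apply]

lemma hurwitz_det {n : ℕ} (M : Matrix (Fin n) (Fin n) ℝ)
    (h : ∀ μ ∈ spectrum ℂ (M.map Complex.ofReal), μ.re < 0) : 0 < (-M).det := by
  rcases Nat.eq_zero_or_pos n with hn | hn
  · subst hn
    simp [Matrix.det_fin_zero]
  -- no nonnegative real root of charpoly
  have hroot : ∀ t : ℝ, 0 ≤ t → M.charpoly.eval t ≠ 0 := by
    intro t ht h0
    rw [eval_charpoly] at h0
    have hdetC : (Matrix.diagonal (fun _ : Fin n => (t : ℂ)) - M.map Complex.ofReal).det = 0 := by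
      have : (Matrix.diagonal (fun _ : Fin n => (t : ℂ)) - M.map Complex.ofReal) =
          (Matrix.diagonal (fun _ : Fin n => t) - M).map Complex.ofRealHom := by
        ext i j
        by_cases hij : i = j <;>
          simp [Matrix.diagonal_apply, hij, Matrix.map_apply]
      rw [this]
      rw [show ((Matrix.diagonal (fun _ : Fin n => t) - M).map Complex.ofRealHom) =
        Complex.ofRealHom.mapMatrix ((Matrix.diagonal (fun _ : Fin n => t) - M)) from rfl,
        ← RingHom.map_det, h0, map_zero]
    have := h (t : ℂ) ((mem_spectrum_iff_det _ _).mpr hdetC)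
    simp at this
    linarith
  have hmonic := M.charpoly_monic
  have hdeg : 0 < M.charpoly.degree := by
    rw [Matrix.charpoly_degree_eq_dim]
    simpa [Fintype.card_fin] using (by exact_mod_cast hn : (0 : WithBot ℕ) < (n : ℕ))
  have htop := M.charpoly.tendsto_atTop_of_leadingCoeff_nonneg hdeg
    (by rw [hmonic.leadingCoeff]; norm_num)
  obtain ⟨T, hT1, hT0⟩ := ((htop.eventually_ge_atTop 1).and (eventually_ge_atTop 0)).exists
  have hpos : 0 < M.charpoly.eval 0 := by
    rcases lt_trichotomy (M.charpoly.eval 0) 0 with hneg | hzero | hpos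
    · exfalso
      have hsub : (0 : ℝ) ∈ Set.Icc (M.charpoly.eval 0) (M.charpoly.eval T) :=
        ⟨le_of_lt hneg, by linarith⟩
      have hcont : ContinuousOn (fun z => M.charpoly.eval z) (Set.Icc 0 T) :=
        (M.charpoly.continuous).continuousOn
      obtain ⟨c, hcmem, hc0⟩ := intermediate_value_Icc hT0 hcont hsub
      exact hroot c hcmem.1 hc0
    · exact absurd hzero (hroot 0 le_rfl)
    · exact hpos
  have : M.charpoly.eval 0 = (-M).det := by
    rw [eval_charpoly]
    congr 1
    ext i j
    simp [Matrix.diagonal_apply]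
  linarith [hpos, this ▸ hpos]

lemma nonneg_of_mulVec_nonpos {n : ℕ} {M : Matrix (Fin n) (Fin n) ℝ}
    (hM : ∀ i j, i ≠ j → 0 ≤ M i j) (hP : PosV M) {z : Fin n → ℝ}
    (hz : ∀ i, M.mulVec z i ≤ 0) : ∀ i, 0 ≤ z i := by
  obtain ⟨x, hx, hMx⟩ := hP
  by_contra hneg
  push_neg at hneg
  obtain ⟨i₁, hi₁⟩ := hneg
  obtain ⟨i₀, -, hmax⟩ := Finset.exists_max_image Finset.univ (fun j => -z j / x j)
    ⟨i₁, Finset.mem_univ _⟩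
  set t : ℝ := -z i₀ / x i₀ with htdef
  have htpos : 0 < t := lt_of_lt_of_le (div_pos (by linarith) (hx i₁)) (hmax i₁ (Finset.mem_univ _))
  set y : Fin n → ℝ := fun j => z j + t * x j with hy
  have hynn : ∀ j, 0 ≤ y j := by
    intro j
    have := hmax j (Finset.mem_univ _)
    rw [div_le_iff₀ (hx j)] at this
    simp only [hy]
    linarith
  have hyi₀ : y i₀ = 0 := by
    have h := div_mul_cancel₀ (-z i₀) (ne_of_gt (hx i₀))
    simp only [hy, htdef]
    linarith
  have h1 : M.mulVec y i₀ < 0 := by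
    have : M.mulVec y i₀ = M.mulVec z i₀ + t * M.mulVec x i₀ := by
      simp only [hy, Matrix.mulVec, dotProduct, ← Finset.sum_add_distrib,
        Finset.mul_sum]
      exact Finset.sum_congr rfl fun j _ => by ring
    rw [this]
    have := mul_pos htpos (neg_pos.mpr (hMx i₀))
    nlinarith [hz i₀]
  have h2 : 0 ≤ M.mulVec y i₀ := by
    have : M.mulVec y i₀ = ∑ j, M i₀ j * y j := by
      simp [Matrix.mulVec, dotProduct]
    rw [this, ← Finset.add_sum_erase Finset.univ _ (Finset.mem_univ i₀), hyi₀, mul_zero,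
      zero_add]
    refine Finset.sum_nonneg fun j hj => ?_
    exact mul_nonneg (hM i₀ j (Finset.ne_of_mem_erase hj).symm) (hynn j)
  linarith

lemma pow_entry_nonneg {n : ℕ} {B : Matrix (Fin n) (Fin n) ℝ}
    (hB : ∀ i j, 0 ≤ B i j) : ∀ (N : ℕ) i j, 0 ≤ (B ^ N) i j := by
  intro N
  induction N with
  | zero => intro i j; by_cases h : i = j <;> simp [Matrix.one_apply, h]
  | succ k ih =>
    intro i j
    rw [pow_succ, Matrix.mul_apply]
    exact Finset.sum_nonneg fun l _ => mul_nonneg (ih i l) (hB l j)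

section Analytic

attribute [local instance] Matrix.linftyOpNormedRing Matrix.linftyOpNormedAlgebra

lemma hurwitz_to_pos {n : ℕ} (M : Matrix (Fin n) (Fin n) ℝ)
    (hMet : ∀ i j, i ≠ j → 0 ≤ M i j)
    (h : ∀ μ ∈ spectrum ℂ (M.map Complex.ofReal), μ.re < 0) : PosV M := by
  rcases Nat.eq_zero_or_pos n with hn | hn
  · subst hn; exact ⟨fun _ => 1, fun i => i.elim0, fun i => i.elim0⟩
  have hne : Nonempty (Fin n) := ⟨⟨0, hn⟩⟩
  set M' := M.map Complex.ofReal with hM'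
  -- the spectrum is compact and nonempty
  have hcpt : IsCompact (spectrum ℂ M') := spectrum.isCompact M'
  have hnonempty : (spectrum ℂ M').Nonempty := spectrum.nonempty M'
  obtain ⟨z, hzmem, hzmax⟩ := hcpt.exists_isMaxOn hnonempty
    (Complex.continuous_re.continuousOn)
  obtain ⟨w, hwmem, hwmax⟩ := hcpt.exists_isMaxOn hnonempty
    (continuous_norm.continuousOn)
  set δ : ℝ := -z.re with hδdef
  have hδ : 0 < δ := by have := h z hzmem; linarith
  set R : ℝ := ‖w‖ with hRdef
  have hR : 0 ≤ R := norm_nonneg _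
  have hspez : ∀ μ ∈ spectrum ℂ M', μ.re ≤ -δ := fun μ hμ => by
    have := hzmax hμ; simpa [hδdef] using this
  have hspeR : ∀ μ ∈ spectrum ℂ M', ‖μ‖ ≤ R := fun μ hμ => hwmax hμ
  -- choice of the shift s
  set s : ℝ := max (max 1 (1 + Finset.univ.sup' (Finset.univ_nonempty) (fun i => -M i i)))
    ((R ^ 2 + 1) / (2 * δ)) with hsdef
  have hs1 : 1 ≤ s := le_trans (le_max_left _ _) (le_max_left _ _)
  have hs0 : 0 < s := by linarith
  have hsdiag : ∀ i, 0 ≤ M i i + s := by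
    intro i
    have h1 : -M i i ≤ Finset.univ.sup' (Finset.univ_nonempty) (fun i => -M i i) :=
      Finset.le_sup' (fun i => -M i i) (Finset.mem_univ i)
    have h2 : (1 + Finset.univ.sup' (Finset.univ_nonempty) (fun i => -M i i)) ≤ s :=
      le_trans (le_max_right _ _) (le_max_left _ _)
    linarith
  have hsspec : 2 * s * δ ≥ R ^ 2 + 1 := by
    have h2 : (R ^ 2 + 1) / (2 * δ) ≤ s := le_max_right _ _
    rw [div_le_iff₀ (by linarith)] at h2
    nlinarith
  -- B = M + s • 1 is entrywise nonnegative
  set B : Matrix (Fin n) (Fin n) ℝ := M + s • (1 : Matrix (Fin n) (Fin n) ℝ) with hBdef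
  have hBnn : ∀ i j, 0 ≤ B i j := by
    intro i j
    by_cases hij : i = j
    · subst hij; simpa [hBdef, Matrix.one_apply] using hsdiag i
    · simpa [hBdef, Matrix.one_apply, hij] using hMet i j hij
  set B' : Matrix (Fin n) (Fin n) ℂ := B.map Complex.ofReal with hB'def
  -- spectral bound for B'
  set r : ℝ := Real.sqrt (s ^ 2 - 1) with hrdef
  have hr0 : 0 ≤ r := Real.sqrt_nonneg _
  have hrs : r < s := by
    rw [hrdef]
    calc Real.sqrt (s ^ 2 - 1) < Real.sqrt (s ^ 2) := by
          apply Real.sqrt_lt_sqrt <;> nlinarith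
      _ = s := by rw [Real.sqrt_sq (by linarith)]
  have hspecB : ∀ μ ∈ spectrum ℂ B', ‖μ‖ ≤ r := by
    intro μ hμ
    rw [mem_spectrum_iff_det] at hμ
    have hkey : (Matrix.diagonal (fun _ : Fin n => μ) - B') =
        (Matrix.diagonal (fun _ : Fin n => μ - (s : ℂ)) - M') := by
      ext i j
      by_cases hij : i = j <;>
        simp [hB'def, hBdef, hM', Matrix.diagonal_apply, hij, Matrix.map_apply,
          Matrix.one_apply, Matrix.add_apply, Matrix.smul_apply] <;> ring
    rw [hkey] at hμ
    have hmem : μ - (s : ℂ) ∈ spectrum ℂ M' := (mem_spectrum_iff_det _ _).mpr hμ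
    have h1 : (μ - (s : ℂ)).re ≤ -δ := hspez _ hmem
    have h2 : ‖μ - (s : ℂ)‖ ≤ R := hspeR _ hmem
    have hsq : ‖μ‖ ^ 2 ≤ s ^ 2 - 1 := by
      have hprod : s * (μ - (s:ℂ)).re ≤ s * (-δ) :=
        mul_le_mul_of_nonneg_left h1 (le_of_lt hs0)
      set lam : ℂ := μ - (s : ℂ) with hl
      have hμeq : μ = lam + (s : ℂ) := by rw [hl]; ring
      have hre : μ.re = lam.re + s := by rw [hμeq]; simp
      have him : μ.im = lam.im := by rw [hμeq]; simp
      have e1 : ‖μ‖ ^ 2 = μ.re ^ 2 + μ.im ^ 2 := by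
        rw [Complex.sq_norm, Complex.normSq_apply]; ring
      have e2 : ‖lam‖ ^ 2 = lam.re ^ 2 + lam.im ^ 2 := by
        rw [Complex.sq_norm, Complex.normSq_apply]; ring
      have h3 : ‖lam‖ ^ 2 ≤ R ^ 2 := by nlinarith [norm_nonneg lam]
      have key : ‖μ‖ ^ 2 = ‖lam‖ ^ 2 + 2 * (s * lam.re) + s ^ 2 := by
        rw [e1, e2, hre, him]; ring
      have hprod' : s * lam.re ≤ -(s * δ) := by linarith [hprod]
      linarith [hsspec, h3, key, hprod']
    have he : ‖μ‖ = Real.sqrt (‖μ‖ ^ 2) := (Real.sqrt_sq (norm_nonneg _)).symm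
    rw [he, hrdef]
    exact Real.sqrt_le_sqrt hsq
  -- spectral radius bound
  have hsr : spectralRadius ℂ B' ≤ ENNReal.ofReal r := by
    rw [spectralRadius]
    refine iSup₂_le fun μ hμ => ?_
    rw [show (‖μ‖₊ : ENNReal) = ENNReal.ofReal ‖μ‖ from (ofReal_norm μ).symm]
    exact ENNReal.ofReal_le_ofReal (hspecB μ hμ)
  have hsrs : spectralRadius ℂ B' < ENNReal.ofReal s :=
    lt_of_le_of_lt hsr ((ENNReal.ofReal_lt_ofReal_iff hs0).mpr hrs)
  -- Gelfand's formula: find N with ‖B'^N‖ < s^N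
  have hgel := spectrum.pow_norm_pow_one_div_tendsto_nhds_spectralRadius B'
  obtain ⟨N, hNlt, hN1⟩ := ((hgel.eventually_lt_const hsrs).and (eventually_ge_atTop 1)).exists
  have hNnorm : ‖B' ^ N‖ < s ^ N := by
    have hlt : ‖B' ^ N‖ ^ (1 / (N : ℝ)) < s := by
      rw [ENNReal.ofReal_lt_ofReal_iff hs0] at hNlt
      exact hNlt
    have hNne : (N : ℝ) ≠ 0 := by positivity
    calc ‖B' ^ N‖ = (‖B' ^ N‖ ^ (1 / (N : ℝ))) ^ (N : ℕ) := by
          rw [← Real.rpow_natCast (‖B' ^ N‖ ^ (1 / (N : ℝ))) N, ← Real.rpow_mul (norm_nonneg _),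
            one_div_mul_cancel hNne, Real.rpow_one]
      _ < s ^ N := by
          apply pow_lt_pow_left₀ hlt (Real.rpow_nonneg (norm_nonneg _) _)
          omega
  -- row sums of B^N are < s^N
  have hB'N : B' ^ N = (B ^ N).map Complex.ofReal := by
    rw [hB'def]
    rw [show B.map Complex.ofReal = Complex.ofRealHom.mapMatrix B from rfl, ← map_pow]
    rfl
  have hrow : ∀ i, ∑ j, (B ^ N) i j < s ^ N := by
    intro i
    have h1 : (∑ j, ‖(B' ^ N) i j‖₊) ≤ ‖B' ^ N‖₊ := by
      rw [Matrix.linfty_opNNNorm_def]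
      exact Finset.le_sup (f := fun i => ∑ j, ‖(B' ^ N) i j‖₊) (Finset.mem_univ i)
    have h2 : (∑ j, ‖(B' ^ N) i j‖) ≤ ‖B' ^ N‖ := by
      have := NNReal.coe_le_coe.mpr h1
      rw [NNReal.coe_sum] at this
      simpa [coe_nnnorm] using this
    have h3 : ∀ j, ‖(B' ^ N) i j‖ = (B ^ N) i j := by
      intro j
      rw [hB'N, Matrix.map_apply, Complex.norm_real, Real.norm_eq_abs,
        abs_of_nonneg (pow_entry_nonneg hBnn N i j)]
    calc ∑ j, (B ^ N) i j = ∑ j, ‖(B' ^ N) i j‖ := by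
          exact Finset.sum_congr rfl fun j _ => (h3 j).symm
      _ ≤ ‖B' ^ N‖ := h2
      _ < s ^ N := hNnorm
  -- construct the positive vector
  set g : ℕ → Fin n → ℝ := fun k => (B ^ k).mulVec (fun _ => 1) with hgdef
  have hg0 : g 0 = fun _ => 1 := by
    simp [hgdef, Matrix.one_mulVec]
  have hgs : ∀ k, g (k + 1) = B.mulVec (g k) := by
    intro k
    rw [hgdef]
    simp only [Matrix.mulVec_mulVec, ← pow_succ']
  have hgnn : ∀ k i, 0 ≤ g k i := by
    intro k i
    have : g k i = ∑ j, (B ^ k) i j * 1 := by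
      simp [hgdef, Matrix.mulVec, dotProduct]
    rw [this]
    exact Finset.sum_nonneg fun j _ => mul_nonneg (pow_entry_nonneg hBnn k i j) zero_le_one
  set xv : Fin n → ℝ := ∑ k ∈ Finset.range N, ((s⁻¹) ^ (k + 1)) • g k with hxvdef
  have hxvpos : ∀ i, 0 < xv i := by
    intro i
    rw [hxvdef]
    rw [Finset.sum_apply]
    apply Finset.sum_pos' (fun k _ => by
      have h1 : (0:ℝ) < (s⁻¹) ^ (k + 1) := by positivity
      have h2 := hgnn k i
      simp only [Pi.smul_apply, smul_eq_mul]
      positivity) ?_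
    · refine ⟨0, Finset.mem_range.mpr (by omega), ?_⟩
      simp only [Pi.smul_apply, smul_eq_mul, hg0, pow_one]
      positivity
  have hMeq : M = B - s • (1 : Matrix (Fin n) (Fin n) ℝ) := by
    rw [hBdef]; abel
  have hmv : ∀ k, M.mulVec (g k) = g (k + 1) - s • g k := by
    intro k
    rw [hMeq, Matrix.sub_mulVec, Matrix.smul_mulVec, Matrix.one_mulVec, hgs]
  have hMxv : M.mulVec xv = (s⁻¹) ^ N • g N - g 0 := by
    have h1 : M.mulVec xv = ∑ k ∈ Finset.range N, ((s⁻¹) ^ (k + 1)) • M.mulVec (g k) := by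
      rw [hxvdef]
      rw [show ∀ v, M.mulVec v = M.mulVecLin v from fun _ => rfl]
      rw [map_sum]
      exact Finset.sum_congr rfl fun k _ => by rw [LinearMap.map_smul]; rfl
    rw [h1]
    have h2 : ∀ k ∈ Finset.range N, ((s⁻¹) ^ (k + 1)) • M.mulVec (g k) =
        ((s⁻¹) ^ (k + 1)) • g (k + 1) - ((s⁻¹) ^ k) • g k := by
      intro k _
      rw [hmv, smul_sub, smul_smul]
      congr 2
      field_simp
      rw [pow_succ', ← mul_assoc, mul_one_div_cancel (ne_of_gt hs0), one_mul]
    rw [Finset.sum_congr rfl h2, Finset.sum_range_sub (fun k => ((s⁻¹) ^ k) • g k)]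
    simp
  refine ⟨xv, hxvpos, fun i => ?_⟩
  have := congrFun hMxv i
  rw [this]
  have hgN : g N i = ∑ j, (B ^ N) i j := by
    simp [hgdef, Matrix.mulVec, dotProduct]
  have hrowi := hrow i
  have hsN : (0:ℝ) < s ^ N := by positivity
  have : (s⁻¹) ^ N * g N i < 1 := by
    rw [hgN, inv_pow]
    rw [inv_mul_lt_iff₀ hsN]
    linarith
  simp only [Pi.sub_apply, Pi.smul_apply, smul_eq_mul, hg0]
  linarith

end Analytic

lemma minors_to_posv : ∀ (n : ℕ) (M : Matrix (Fin n) (Fin n) ℝ),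
    (∀ i j, i ≠ j → 0 ≤ M i j) →
    (∀ (k : ℕ) (hk : k < n), 0 < ((-M).submatrix (Fin.castLE hk) (Fin.castLE hk)).det) →
    PosV M := by
  intro n
  induction n with
  | zero =>
    intro M _ _
    exact ⟨fun _ => 1, fun i => i.elim0, fun i => i.elim0⟩
  | succ n ih =>
    intro M hMet hminor
    -- the leading n×n submatrix
    set M' : Matrix (Fin n) (Fin n) ℝ := M.submatrix (Fin.castLE (Nat.le_succ n))
      (Fin.castLE (Nat.le_succ n)) with hM'def
    have hMet' : ∀ i j, i ≠ j → 0 ≤ M' i j := by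
      intro i j hij
      exact hMet _ _ fun hc => hij (Fin.castLE_injective _ hc)
    have hminor' : ∀ (k : ℕ) (hk : k < n),
        0 < ((-M').submatrix (Fin.castLE hk) (Fin.castLE hk)).det := by
      intro k hk
      have hkk : k < n + 1 := by omega
      have hEq : ((-M').submatrix (Fin.castLE hk) (Fin.castLE hk)) =
          ((-M).submatrix (Fin.castLE hkk) (Fin.castLE hkk)) := by
        ext i j; rfl
      rw [hEq]
      exact hminor k hkk
    have hPos' : PosV M' := ih M' hMet' hminor'
    obtain ⟨x', hx', hMx'⟩ := hPos'
    have hHur' : ∀ μ ∈ spectrum ℂ (M'.map Complex.ofReal), μ.re < 0 :=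
      pos_to_hurwitz M' hMet' ⟨x', hx', hMx'⟩
    have hdetA' : 0 < (-M').det := hurwitz_det M' hHur'
    have hdetA : 0 < (-M).det := by
      have := hminor n (Nat.lt_succ_self n)
      have hid : ((-M).submatrix (Fin.castLE (Nat.lt_succ_self n))
          (Fin.castLE (Nat.lt_succ_self n))) = -M := by
        ext i j; rfl
      rwa [hid] at this
    -- auxiliary vectors
    set bv : Fin n → ℝ := fun j => M (Fin.castSucc j) (Fin.last n) with hbv
    set cv : Fin n → ℝ := fun j => M (Fin.last n) (Fin.castSucc j) with hcv
    have hbvnn : ∀ j, 0 ≤ bv j := fun j =>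
      hMet _ _ (fun hc => absurd (congrArg Fin.val hc) (by simp [Fin.ext_iff]; omega))
    have hcvnn : ∀ j, 0 ≤ cv j := fun j =>
      hMet _ _ (fun hc => absurd (congrArg Fin.val hc) (by simp [Fin.ext_iff]; omega))
    have hunit : IsUnit (-M').det := isUnit_iff_ne_zero.mpr (ne_of_gt hdetA')
    set u : Fin n → ℝ := (-M')⁻¹.mulVec bv with hu
    have hAu : (-M').mulVec u = bv := by
      rw [hu, Matrix.mulVec_mulVec, Matrix.mul_nonsing_inv _ hunit, Matrix.one_mulVec]
    have hMu : M'.mulVec u = -bv := by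
      have h0 := hAu
      rw [Matrix.neg_mulVec] at h0
      exact neg_eq_iff_eq_neg.mp h0
    have hunn : ∀ j, 0 ≤ u j := by
      refine nonneg_of_mulVec_nonpos hMet' ⟨x', hx', hMx'⟩ fun i => ?_
      rw [hMu]
      simpa using hbvnn i
    -- Schur complement positivity via block determinant
    have hσpos : 0 < -M (Fin.last n) (Fin.last n) - ∑ j, cv j * u j := by
      have hF : (-M).det = ((-M).submatrix finSumFinEquiv finSumFinEquiv).det :=
        (Matrix.det_submatrix_equiv_self finSumFinEquiv (-M)).symm
      set F := (-M).submatrix finSumFinEquiv finSumFinEquiv with hFdef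
      have hblocks : F = Matrix.fromBlocks F.toBlocks₁₁ F.toBlocks₁₂ F.toBlocks₂₁
          F.toBlocks₂₂ := (Matrix.fromBlocks_toBlocks F).symm
      have h11 : F.toBlocks₁₁ = -M' := by
        ext i j; rfl
      have : Invertible (-M') := (-M').invertibleOfIsUnitDet hunit
      have hInv : Invertible F.toBlocks₁₁ := by rw [h11]; infer_instance
      have hdet := Matrix.det_fromBlocks₁₁ F.toBlocks₁₁ F.toBlocks₁₂ F.toBlocks₂₁ F.toBlocks₂₂
      rw [← hblocks] at hdet
      rw [hdet] at hF
      have hschur : (F.toBlocks₂₂ - F.toBlocks₂₁ * ⅟F.toBlocks₁₁ * F.toBlocks₁₂).det =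
          -M (Fin.last n) (Fin.last n) - ∑ j, cv j * u j := by
        rw [Matrix.det_fin_one]
        have hinvOf : ⅟F.toBlocks₁₁ = (-M')⁻¹ := by
          rw [Matrix.invOf_eq_nonsing_inv, h11]
        have h22 : F.toBlocks₂₂ 0 0 = -M (Fin.last n) (Fin.last n) := rfl
        have hsum : (F.toBlocks₂₁ * ⅟F.toBlocks₁₁ * F.toBlocks₁₂) 0 0 = ∑ j, cv j * u j := by
          rw [hinvOf, hu]
          simp only [Matrix.mul_apply, Matrix.mulVec, dotProduct, Finset.sum_mul,
            Finset.mul_sum]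
          rw [Finset.sum_comm]
          refine Finset.sum_congr rfl fun j _ => Finset.sum_congr rfl fun k _ => ?_
          have e1 : F.toBlocks₂₁ 0 j = -cv j := rfl
          have e2 : F.toBlocks₁₂ k 0 = -bv k := rfl
          rw [e1, e2]
          ring
        rw [Matrix.sub_apply, h22, hsum]
      rw [hschur] at hF
      have hd11 : F.toBlocks₁₁.det = (-M').det := by rw [h11]
      rw [hd11] at hF
      by_contra hcon
      push_neg at hcon
      nlinarith
    -- choose epsilon
    set τ : ℝ := ∑ j, cv j * x' j with hτ
    set σ : ℝ := -M (Fin.last n) (Fin.last n) - ∑ j, cv j * u j with hσ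
    set ε : ℝ := min 1 (σ / (2 * (|τ| + 1))) with hε
    have hεpos : 0 < ε := by
      apply lt_min one_pos
      apply div_pos hσpos
      positivity
    have hετ : ε * τ < σ := by
      have h1 : ε ≤ σ / (2 * (|τ| + 1)) := min_le_right _ _
      have h2 : ε * τ ≤ ε * |τ| := mul_le_mul_of_nonneg_left (le_abs_self τ) (le_of_lt hεpos)
      have h3 : ε * |τ| ≤ (σ / (2 * (|τ| + 1))) * |τ| :=
        mul_le_mul_of_nonneg_right h1 (abs_nonneg τ)
      have h4 : (σ / (2 * (|τ| + 1))) * |τ| < σ := by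
        rw [div_mul_eq_mul_div, div_lt_iff₀ (by positivity)]
        nlinarith [abs_nonneg τ]
      linarith
    -- the positive vector
    set x : Fin (n + 1) → ℝ := Fin.lastCases 1 (fun j => u j + ε * x' j) with hx
    have hxpos : ∀ i, 0 < x i := by
      intro i
      induction i using Fin.lastCases with
      | last => simp [hx]
      | cast j =>
        rw [hx]
        simp only [Fin.lastCases_castSucc]
        have := hx' j
        have := hunn j
        nlinarith
    refine ⟨x, hxpos, fun i => ?_⟩
    have hexp : M.mulVec x i = (∑ j, M i (Fin.castSucc j) * (u j + ε * x' j)) +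
        M i (Fin.last n) := by
      rw [Matrix.mulVec, dotProduct, Fin.sum_univ_castSucc]
      simp [hx]
    induction i using Fin.lastCases with
    | last =>
      rw [hexp]
      have : ∑ j, M (Fin.last n) (Fin.castSucc j) * (u j + ε * x' j) =
          (∑ j, cv j * u j) + ε * τ := by
        rw [hτ, Finset.mul_sum, ← Finset.sum_add_distrib]
        refine Finset.sum_congr rfl fun j _ => ?_
        rw [hcv]; ring
      rw [this]
      rw [hσ] at hετ
      linarith
    | cast i₀ =>
      rw [hexp]
      have hsum : ∑ j, M (Fin.castSucc i₀) (Fin.castSucc j) * (u j + ε * x' j) =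
          M'.mulVec u i₀ + ε * M'.mulVec x' i₀ := by
        simp only [Matrix.mulVec, dotProduct, Finset.mul_sum, ← Finset.sum_add_distrib]
        refine Finset.sum_congr rfl fun j _ => ?_
        have : M' i₀ j = M (Fin.castSucc i₀) (Fin.castSucc j) := rfl
        rw [this]; ring
      rw [hsum, hMu]
      have hb : M (Fin.castSucc i₀) (Fin.last n) = bv i₀ := rfl
      rw [hb]
      have hq := hMx' i₀
      have : ε * (M'.mulVec x' i₀) < 0 := mul_neg_of_pos_of_neg hεpos hq
      simp only [Pi.neg_apply]
      linarith

end MetzlerAux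

/-- A matrix is Metzler if all off-diagonal entries are nonnegative. -/
def Metzler {n : ℕ} (M : Matrix (Fin n) (Fin n) ℝ) : Prop :=
  ∀ i j, i ≠ j → 0 ≤ M i j

/-- A real matrix is Hurwitz if every (complex) eigenvalue has negative real part. -/
def Hurwitz {n : ℕ} (M : Matrix (Fin n) (Fin n) ℝ) : Prop :=
  ∀ μ ∈ spectrum ℂ (M.map Complex.ofReal), μ.re < 0

theorem metzler_hurwitz_iff_leading_minors_pos {n : ℕ} (M : Matrix (Fin n) (Fin n) ℝ)
    (hM : Metzler M) :
    Hurwitz M ↔ ∀ k : Fin n,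
      0 < Matrix.det ((-M).submatrix
        (fun j : Fin (k.1 + 1) => Fin.castLE k.isLt j)
        (fun j : Fin (k.1 + 1) => Fin.castLE k.isLt j)) := by
  constructor
  · intro hH k
    obtain ⟨x, hx, hMx⟩ := MetzlerAux.hurwitz_to_pos M hM hH
    set f : Fin (k.1 + 1) → Fin n := Fin.castLE k.isLt with hf
    set Mk := M.submatrix f f with hMk
    have hMetk : ∀ i j, i ≠ j → 0 ≤ Mk i j := fun i j hij =>
      hM _ _ fun hc => hij (Fin.castLE_injective _ hc)
    have hPosk : MetzlerAux.PosV Mk := by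
      refine ⟨x ∘ f, fun i => hx (f i), fun i => ?_⟩
      have himg : Mk.mulVec (x ∘ f) i = ∑ j ∈ Finset.univ.image f, M (f i) j * x j := by
        rw [Finset.sum_image (fun a _ b _ h => Fin.castLE_injective _ h)]
        simp [hMk, Matrix.mulVec, dotProduct, Matrix.submatrix_apply]
        rfl
      have hle : ∑ j ∈ Finset.univ.image f, M (f i) j * x j ≤ ∑ j, M (f i) j * x j := by
        refine Finset.sum_le_sum_of_subset_of_nonneg (Finset.subset_univ _) fun j _ hj => ?_
        refine mul_nonneg (hM _ j fun hc => hj ?_) (le_of_lt (hx j))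
        rw [← hc]
        exact Finset.mem_image_of_mem f (Finset.mem_univ i)
      have hlt : (∑ j, M (f i) j * x j) < 0 := by
        have := hMx (f i)
        simpa [Matrix.mulVec, dotProduct] using this
      rw [himg]
      linarith
    have hHk := MetzlerAux.pos_to_hurwitz Mk hMetk hPosk
    have hdet := MetzlerAux.hurwitz_det Mk hHk
    have heq : (-M).submatrix f f = -Mk := by
      ext i j; rfl
    rw [show ((-M).submatrix (fun j : Fin (k.1 + 1) => Fin.castLE k.isLt j)
        (fun j : Fin (k.1 + 1) => Fin.castLE k.isLt j)) = (-M).submatrix f f from rfl, heq]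
    exact hdet
  · intro hmin
    refine MetzlerAux.pos_to_hurwitz M hM (MetzlerAux.minors_to_posv n M hM ?_)
    intro k hk
    exact hmin ⟨k, hk⟩
end

section
/- Let M be an n×n Metzler matrix. Then M is Hurwitz if and only if there exists a positive definite diagonal matrix P such that Mᵀ P + P M is negative definite. -/
open Matrix

open Filter

attribute [local instance] Matrix.linftyOpNormedRing Matrix.linftyOpNormedAlgebra
  Matrix.linftyOpNormedAddCommGroup

namespace MHaux

lemma spec_det {n : ℕ} (A : Matrix (Fin n) (Fin n) ℂ) (μ : ℂ) :
    μ ∈ spectrum ℂ A ↔ (μ • (1 : Matrix (Fin n) (Fin n) ℂ) - A).det = 0 := by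
  rw [spectrum.mem_iff, Matrix.isUnit_iff_isUnit_det, isUnit_iff_ne_zero, not_not,
    Algebra.algebraMap_eq_smul_one]

lemma entry_norm_le {n : ℕ} (A : Matrix (Fin n) (Fin n) ℂ) (i j : Fin n) : ‖A i j‖ ≤ ‖A‖ := by
  rw [Matrix.linfty_opNorm_def]
  calc ‖A i j‖ ≤ ∑ k, ‖A i k‖ := Finset.single_le_sum (fun k _ => norm_nonneg _) (Finset.mem_univ j)
  _ = ((∑ k, ‖A i k‖₊ : NNReal) : ℝ) := by push_cast; rfl
  _ ≤ _ := by
      exact_mod_cast Finset.le_sup (f := fun i => ∑ k, ‖A i k‖₊) (Finset.mem_univ i)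

lemma nat_div_tendsto_atTop {m : ℕ} (hm : 0 < m) :
    Tendsto (fun N : ℕ => N / m) atTop atTop := by
  apply Filter.tendsto_atTop_atTop.mpr
  intro b
  exact ⟨b * m, fun n hn => (Nat.le_div_iff_mul_le hm).mpr hn⟩

lemma pow_norm_tendsto_zero {A : Type*} [NormedRing A] {x : A} {m : ℕ} (hm : 0 < m)
    (h : ‖x ^ m‖ < 1) : Tendsto (fun N : ℕ => ‖x ^ N‖) atTop (nhds 0) := by
  set c := ‖x ^ m‖ with hc
  have hc0 : 0 ≤ c := norm_nonneg _
  set L := max ‖(1 : A)‖ 1 with hL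
  have hL1 : 1 ≤ L := le_max_right _ _
  have hL0 : 0 ≤ L := le_trans zero_le_one hL1
  set K := ∑ r ∈ Finset.range m, ‖x ^ r‖ with hK
  have hpow : ∀ q : ℕ, ‖(x ^ m) ^ q‖ ≤ L * c ^ q := by
    intro q
    rcases Nat.eq_zero_or_pos q with h0 | h0
    · simp [h0, hL]
    · calc ‖(x ^ m) ^ q‖ ≤ c ^ q := norm_pow_le' _ h0
      _ ≤ L * c ^ q := le_mul_of_one_le_left (pow_nonneg hc0 _) hL1
  have hbound : ∀ N : ℕ, ‖x ^ N‖ ≤ L * c ^ (N / m) * K := by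
    intro N
    have hKb : ‖x ^ (N % m)‖ ≤ K :=
      Finset.single_le_sum (fun r _ => norm_nonneg _) (Finset.mem_range.mpr (Nat.mod_lt _ hm))
    calc ‖x ^ N‖ = ‖(x ^ m) ^ (N / m) * x ^ (N % m)‖ := by
          rw [← pow_mul, ← pow_add, Nat.div_add_mod]
    _ ≤ ‖(x ^ m) ^ (N / m)‖ * ‖x ^ (N % m)‖ := norm_mul_le _ _
    _ ≤ (L * c ^ (N / m)) * K :=
        mul_le_mul (hpow _) hKb (norm_nonneg _) (by positivity)
  have hlim : Tendsto (fun N : ℕ => L * c ^ (N / m) * K) atTop (nhds 0) := by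
    have := (((tendsto_pow_atTop_nhds_zero_of_lt_one hc0 h).comp
      (nat_div_tendsto_atTop hm)).const_mul L).mul_const K
    simpa using this
  exact squeeze_zero (fun N => norm_nonneg _) hbound hlim

lemma exists_pow_norm_lt_one {A : Type*} [NormedRing A] [NormedAlgebra ℂ A] [CompleteSpace A]
    (x : A) (h : spectralRadius ℂ x < 1) : ∃ m : ℕ, 0 < m ∧ ‖x ^ m‖ < 1 := by
  have hg := spectrum.pow_nnnorm_pow_one_div_tendsto_nhds_spectralRadius x
  have hev : ∀ᶠ k : ℕ in atTop, (‖x ^ k‖₊ : ENNReal) ^ (1 / k : ℝ) < 1 :=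
    hg.eventually_lt_const h
  obtain ⟨m, hmlt, hm1⟩ := (hev.and (eventually_ge_atTop 1)).exists
  refine ⟨m, hm1, ?_⟩
  have hm0 : (0:ℝ) < (m : ℝ) := by exact_mod_cast hm1
  have key : (‖x ^ m‖₊ : ENNReal) < 1 := by
    have h2 : ((‖x ^ m‖₊ : ENNReal) ^ (1 / m : ℝ)) ^ (m : ℝ) < 1 :=
      ENNReal.rpow_lt_one hmlt hm0
    rwa [← ENNReal.rpow_mul, one_div,
      inv_mul_cancel₀ (ne_of_gt hm0), ENNReal.rpow_one] at h2
  have : ‖x ^ m‖₊ < 1 := by exact_mod_cast key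
  exact_mod_cast this

lemma map_pow_ofReal {n : ℕ} (B : Matrix (Fin n) (Fin n) ℝ) (N : ℕ) :
    (B.map Complex.ofReal) ^ N = (B ^ N).map Complex.ofReal := by
  exact (map_pow (Complex.ofRealHom.mapMatrix) B N).symm

/-- Core lemma: a Metzler Hurwitz matrix admits a positive vector `d` with `M d < 0`. -/
lemma exists_pos_mulVec_neg {n : ℕ} (M : Matrix (Fin n) (Fin n) ℝ)
    (hM : Metzler M) (hH : Hurwitz M) :
    ∃ d : Fin n → ℝ, (∀ i, 0 < d i) ∧ ∀ i, M.mulVec d i < 0 := by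
  classical
  set Mc := M.map Complex.ofReal with hMc
  set F := (Matrix.finite_spectrum (R := ℂ) Mc).toFinset with hF
  set g : ℂ → ℝ := fun μ => max 0 (‖μ‖ ^ 2 / (2 * (-μ.re))) with hgdef
  set gd : Fin n → ℝ := fun i => max 0 (-M i i) with hgddef
  set α : ℝ := 1 + (∑ μ ∈ F, g μ) + ∑ i, gd i with hαdef
  have hgnn : ∀ μ, 0 ≤ g μ := fun μ => le_max_left _ _
  have hgdnn : ∀ i, 0 ≤ gd i := fun i => le_max_left _ _
  have hS1 : 0 ≤ ∑ μ ∈ F, g μ := Finset.sum_nonneg fun μ _ => hgnn μ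
  have hS2 : 0 ≤ ∑ i, gd i := Finset.sum_nonneg fun i _ => hgdnn i
  have hα1 : 1 ≤ α := by simp only [hαdef]; linarith
  have hα0 : 0 < α := lt_of_lt_of_le one_pos hα1
  have hαne : α ≠ 0 := ne_of_gt hα0
  have hdiag : ∀ i, 0 ≤ M i i + α := by
    intro i
    have h1 : gd i ≤ ∑ k, gd k :=
      Finset.single_le_sum (fun k _ => hgdnn k) (Finset.mem_univ i)
    have h2 : -M i i ≤ gd i := le_max_right _ _
    simp only [hαdef]; linarith
  have hspec : ∀ μ ∈ spectrum ℂ Mc, ‖μ + (α : ℂ)‖ < α := by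
    intro μ hμ
    have hre : μ.re < 0 := hH μ hμ
    have hmem : μ ∈ F := (Matrix.finite_spectrum (R := ℂ) Mc).mem_toFinset.mpr hμ
    have h1 : ‖μ‖ ^ 2 / (2 * (-μ.re)) ≤ ∑ ν ∈ F, g ν := by
      refine le_trans (le_max_right 0 _) ?_
      exact Finset.single_le_sum (fun ν _ => hgnn ν) hmem
    have hgt : ‖μ‖ ^ 2 / (2 * (-μ.re)) < α := by simp only [hαdef]; linarith
    have hpos : 0 < 2 * (-μ.re) := by linarith
    have hkey : ‖μ‖ ^ 2 < α * (2 * (-μ.re)) := (div_lt_iff₀ hpos).mp hgt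
    have hnsq : ‖μ + (α : ℂ)‖ ^ 2 = (μ.re + α) ^ 2 + μ.im ^ 2 := by
      rw [Complex.sq_norm, Complex.normSq_apply]
      simp [Complex.add_re, Complex.add_im]
      ring
    have hnormμ : ‖μ‖ ^ 2 = μ.re ^ 2 + μ.im ^ 2 := by
      rw [Complex.sq_norm, Complex.normSq_apply]; ring
    have hlt : ‖μ + (α : ℂ)‖ ^ 2 < α ^ 2 := by
      rw [hnsq]; rw [hnormμ] at hkey; nlinarith
    nlinarith [norm_nonneg (μ + (α : ℂ))]
  -- the shifted nonnegative matrix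
  set B : Matrix (Fin n) (Fin n) ℝ := α⁻¹ • (M + α • (1 : Matrix (Fin n) (Fin n) ℝ)) with hBdef
  have hBnn : ∀ i j, 0 ≤ B i j := by
    intro i j
    have hinv : 0 ≤ α⁻¹ := inv_nonneg.mpr hα0.le
    rcases eq_or_ne i j with rfl | hij
    · have := hdiag i
      simp only [hBdef, Matrix.smul_apply, Matrix.add_apply, Matrix.one_apply_eq, smul_eq_mul]
      nlinarith
    · have := hM i j hij
      simp only [hBdef, Matrix.smul_apply, Matrix.add_apply, Matrix.one_apply_ne hij,
        smul_eq_mul]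
      nlinarith
  set Bc := B.map Complex.ofReal with hBcdef
  have hBc_entry : ∀ i j, Bc i j = ((B i j : ℝ) : ℂ) := fun i j => rfl
  -- relate spectra
  have hBspec : ∀ lam ∈ spectrum ℂ Bc, ∃ μ ∈ spectrum ℂ Mc, lam = (μ + α) / α := by
    intro lam hlam
    have hdet : (lam • (1 : Matrix (Fin n) (Fin n) ℂ) - Bc).det = 0 := (spec_det _ _).mp hlam
    have hfac : lam • (1 : Matrix (Fin n) (Fin n) ℂ) - Bc
        = ((α : ℂ))⁻¹ • (((α : ℂ) * lam - α) • (1 : Matrix (Fin n) (Fin n) ℂ) - Mc) := by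
      ext i j
      simp only [Matrix.sub_apply, Matrix.smul_apply, Matrix.one_apply, hBcdef, hBdef, hMc,
        Matrix.map_apply, Matrix.add_apply, smul_eq_mul]
      have hαc : ((α : ℂ)) ≠ 0 := by exact_mod_cast hαne
      rcases eq_or_ne i j with rfl | hij
      · simp only [if_pos rfl]
        first
        | (push_cast; field_simp; ring)
        | (push_cast; field_simp)
      · simp only [if_neg hij]
        first
        | (push_cast; field_simp; ring)
        | (push_cast; field_simp)
    have hαc : ((α : ℂ)) ≠ 0 := by exact_mod_cast hαne
    rw [hfac, Matrix.det_smul] at hdet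
    have hdet2 : (((α : ℂ) * lam - α) • (1 : Matrix (Fin n) (Fin n) ℂ) - Mc).det = 0 := by
      have := mul_eq_zero.mp hdet
      rcases this with h | h
      · exact absurd h (pow_ne_zero _ (inv_ne_zero hαc))
      · exact h
    refine ⟨(α : ℂ) * lam - α, (spec_det _ _).mpr hdet2, ?_⟩
    field_simp
    ring
  have haNN : (0 : NNReal) < ‖((α : ℝ))‖₊ := by
    simpa using hαne
  set c : NNReal := F.sup fun μ => ‖μ + (α : ℂ)‖₊ / ‖(α : ℝ)‖₊ with hcdef
  have hnormα : ‖(α : ℝ)‖ = α := abs_of_pos hα0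
  have hc1 : c < 1 := by
    rw [hcdef]
    apply Finset.sup_lt_iff (by norm_num : (⊥ : NNReal) < 1) |>.mpr
    intro μ hμF
    have hμ : μ ∈ spectrum ℂ Mc := (Matrix.finite_spectrum (R := ℂ) Mc).mem_toFinset.mp hμF
    have := hspec μ hμ
    rw [div_lt_one haNN]
    apply NNReal.coe_lt_coe.mp
    simpa [hnormα] using this
  have hlamle : ∀ lam ∈ spectrum ℂ Bc, ‖lam‖₊ ≤ c := by
    intro lam hlam
    obtain ⟨μ, hμ, rfl⟩ := hBspec lam hlam
    have hμF : μ ∈ F := (Matrix.finite_spectrum (R := ℂ) Mc).mem_toFinset.mpr hμ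
    have : ‖(μ + α) / (α : ℂ)‖₊ = ‖μ + (α : ℂ)‖₊ / ‖(α : ℝ)‖₊ := by
      rw [nnnorm_div]
      congr 1
      apply NNReal.coe_injective
      simp [hnormα]
    rw [this]
    exact Finset.le_sup (f := fun μ => ‖μ + (α : ℂ)‖₊ / ‖(α : ℝ)‖₊) hμF
  have hsr : spectralRadius ℂ Bc < 1 := by
    have hle : spectralRadius ℂ Bc ≤ (c : ENNReal) := by
      rw [spectralRadius]
      exact iSup₂_le fun lam hlam => ENNReal.coe_le_coe.mpr (hlamle lam hlam)
    refine lt_of_le_of_lt hle ?_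
    exact_mod_cast hc1
  obtain ⟨m, hm, hnorm⟩ := exists_pow_norm_lt_one Bc hsr
  have htend0 : Tendsto (fun N : ℕ => ‖Bc ^ N‖) atTop (nhds 0) := pow_norm_tendsto_zero hm hnorm
  have hentry : ∀ k j, Tendsto (fun N : ℕ => (B ^ N) k j) atTop (nhds 0) := by
    intro k j
    apply squeeze_zero_norm (fun N => ?_) htend0
    have : (Bc ^ N) k j = (((B ^ N) k j : ℝ) : ℂ) := by
      rw [map_pow_ofReal]; rfl
    calc ‖(B ^ N) k j‖ = ‖(Bc ^ N) k j‖ := by rw [this]; simp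
    _ ≤ ‖Bc ^ N‖ := entry_norm_le _ _ _
  -- invertibility of 1 - B
  have hone_not : (1 : ℂ) ∉ spectrum ℂ Bc := by
    intro h
    have := hlamle 1 h
    simp only [nnnorm_one] at this
    exact absurd (lt_of_le_of_lt this hc1) (lt_irrefl _)
  have hdetBc : ((1 : ℂ) • (1 : Matrix (Fin n) (Fin n) ℂ) - Bc).det ≠ 0 := by
    intro h
    exact hone_not ((spec_det _ _).mpr h)
  have hmap_sub : ((1 : Matrix (Fin n) (Fin n) ℝ) - B).map Complex.ofReal
      = (1 : ℂ) • (1 : Matrix (Fin n) (Fin n) ℂ) - Bc := by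
    ext i j
    simp [Matrix.one_apply, apply_ite, hBcdef]
  have hdetmap : (((1 : Matrix (Fin n) (Fin n) ℝ) - B).map Complex.ofReal).det
      = (((1 : Matrix (Fin n) (Fin n) ℝ) - B).det : ℂ) := by
    exact (RingHom.map_det Complex.ofRealHom ((1 : Matrix (Fin n) (Fin n) ℝ) - B)).symm
  have hdetB : IsUnit ((1 : Matrix (Fin n) (Fin n) ℝ) - B).det := by
    rw [isUnit_iff_ne_zero]
    intro h
    apply hdetBc
    rw [← hmap_sub, hdetmap, h]
    simp
  set C := ((1 : Matrix (Fin n) (Fin n) ℝ) - B)⁻¹ with hCdef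
  have hCB : ((1 : Matrix (Fin n) (Fin n) ℝ) - B) * C = 1 := Matrix.mul_nonsing_inv _ hdetB
  have hBC : C * ((1 : Matrix (Fin n) (Fin n) ℝ) - B) = 1 := Matrix.nonsing_inv_mul _ hdetB
  -- geometric sum identity
  have hgeom : ∀ N : ℕ, (∑ k ∈ Finset.range N, B ^ k) = C - B ^ N * C := by
    intro N
    have h1 : (∑ k ∈ Finset.range N, B ^ k) * (B - 1) = B ^ N - 1 := geom_sum_mul B N
    have h2 : (∑ k ∈ Finset.range N, B ^ k) * (1 - B) = 1 - B ^ N := by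
      have hrw : (1 : Matrix (Fin n) (Fin n) ℝ) - B = -(B - 1) := (neg_sub B 1).symm
      rw [hrw, mul_neg, h1, neg_sub]
    calc (∑ k ∈ Finset.range N, B ^ k)
        = (∑ k ∈ Finset.range N, B ^ k) * (((1 : Matrix (Fin n) (Fin n) ℝ) - B) * C) := by
          rw [hCB, mul_one]
    _ = ((∑ k ∈ Finset.range N, B ^ k) * ((1 : Matrix (Fin n) (Fin n) ℝ) - B)) * C := by
          rw [mul_assoc]
    _ = ((1 : Matrix (Fin n) (Fin n) ℝ) - B ^ N) * C := by rw [h2]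
    _ = C - B ^ N * C := by rw [Matrix.sub_mul, one_mul]
  have hpow_nn : ∀ N (i j : Fin n), 0 ≤ (B ^ N) i j := by
    intro N
    induction N with
    | zero => intro i j; simp [Matrix.one_apply]; split <;> norm_num
    | succ N ih =>
        intro i j
        rw [pow_succ, Matrix.mul_apply]
        exact Finset.sum_nonneg fun k _ => mul_nonneg (ih i k) (hBnn k j)
  have hCnn : ∀ i j, 0 ≤ C i j := by
    intro i j
    have hf : ∀ N : ℕ, 0 ≤ C i j - (B ^ N * C) i j := by
      intro N
      have := hgeom N
      have hsum : (∑ k ∈ Finset.range N, B ^ k) i j = C i j - (B ^ N * C) i j := by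
        rw [this, Matrix.sub_apply]
      rw [← hsum, Matrix.sum_apply]
      exact Finset.sum_nonneg fun k _ => hpow_nn k i j
    have htend : Tendsto (fun N : ℕ => C i j - (B ^ N * C) i j) atTop (nhds (C i j)) := by
      have h1 : Tendsto (fun N : ℕ => (B ^ N * C) i j) atTop (nhds 0) := by
        have : ∀ N : ℕ, (B ^ N * C) i j = ∑ l, (B ^ N) i l * C l j := fun N => Matrix.mul_apply
        simp only [this]
        have := tendsto_finset_sum (Finset.univ : Finset (Fin n))
          (fun l _ => (hentry i l).mul_const (C l j))
        simpa using this
      have := tendsto_const_nhds (x := C i j) (f := atTop (α := ℕ)) |>.sub h1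
      simpa using this
    exact ge_of_tendsto htend (Filter.Eventually.of_forall hf)
  set d : Fin n → ℝ := C.mulVec (fun _ => 1) with hddef
  have hd_sum : ∀ i, d i = ∑ j, C i j := by
    intro i
    simp [hddef, Matrix.mulVec, dotProduct]
  have hd_nonneg : ∀ i, 0 ≤ d i := by
    intro i
    rw [hd_sum]
    exact Finset.sum_nonneg fun j _ => hCnn i j
  have hdpos : ∀ i, 0 < d i := by
    intro i
    rcases lt_or_eq_of_le (hd_nonneg i) with h | h
    · exact h
    · exfalso
      have hsum : ∑ j, C i j = 0 := by rw [← hd_sum]; exact h.symm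
      have hzero : ∀ j, C i j = 0 := fun j =>
        (Finset.sum_eq_zero_iff_of_nonneg (fun j _ => hCnn i j)).mp hsum j (Finset.mem_univ j)
      have h1 : (C * ((1 : Matrix (Fin n) (Fin n) ℝ) - B)) i i = 1 := by
        rw [hBC]; simp [Matrix.one_apply]
      rw [Matrix.mul_apply] at h1
      simp only [hzero, zero_mul, Finset.sum_const_zero] at h1
      exact zero_ne_one h1
  refine ⟨d, hdpos, ?_⟩
  have hBd : ((1 : Matrix (Fin n) (Fin n) ℝ) - B).mulVec d = fun _ => 1 := by
    rw [hddef, Matrix.mulVec_mulVec, hCB, Matrix.one_mulVec]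
  have hMeq : M = α • B - α • (1 : Matrix (Fin n) (Fin n) ℝ) := by
    have hαB : α • B = M + α • (1 : Matrix (Fin n) (Fin n) ℝ) := by
      rw [hBdef, smul_smul, mul_inv_cancel₀ hαne, one_smul]
    rw [hαB]
    abel
  intro i
  have hMd2 : M.mulVec d i = α * (B.mulVec d i) - α * d i := by
    rw [hMeq, Matrix.sub_mulVec]
    simp [Matrix.smul_mulVec, Matrix.one_mulVec, Pi.sub_apply]
  have hBdi : B.mulVec d i = d i - 1 := by
    have hthis := congrFun hBd i
    rw [Matrix.sub_mulVec, Matrix.one_mulVec] at hthis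
    have h2 : d i - B.mulVec d i = 1 := hthis
    linarith
  rw [hMd2, hBdi]
  nlinarith [hα0]

lemma quad_expand {n : ℕ} (S : Matrix (Fin n) (Fin n) ℝ) (w : Fin n → ℝ) :
    w ⬝ᵥ S.mulVec w = ∑ i, ∑ j, S i j * (w i * w j) := by
  simp only [dotProduct, Matrix.mulVec, Finset.mul_sum]
  exact Finset.sum_congr rfl fun i _ => Finset.sum_congr rfl fun j _ => by ring

lemma S_entry {n : ℕ} (M : Matrix (Fin n) (Fin n) ℝ) (p : Fin n → ℝ) (i j : Fin n) :
    (Mᵀ * Matrix.diagonal p + Matrix.diagonal p * M) i j = M j i * p j + p i * M i j := by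
  simp [Matrix.mul_diagonal, Matrix.diagonal_mul, Matrix.transpose_apply]

lemma quad_eq {n : ℕ} (M : Matrix (Fin n) (Fin n) ℝ) (p : Fin n → ℝ) (w : Fin n → ℝ) :
    w ⬝ᵥ (Mᵀ * Matrix.diagonal p + Matrix.diagonal p * M).mulVec w
      = 2 * ∑ i, p i * w i * (M.mulVec w) i := by
  rw [quad_expand]
  have h1 : ∀ i j, (Mᵀ * Matrix.diagonal p + Matrix.diagonal p * M) i j * (w i * w j)
      = M j i * p j * (w i * w j) + p i * M i j * (w i * w j) := by
    intro i j; rw [S_entry]; ring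
  simp only [h1, Finset.sum_add_distrib]
  have h2 : ∑ i, ∑ j, M j i * p j * (w i * w j) = ∑ i, ∑ j, p i * M i j * (w i * w j) := by
    rw [Finset.sum_comm]
    exact Finset.sum_congr rfl fun i _ => Finset.sum_congr rfl fun j _ => by ring
  have h3 : ∀ i, p i * w i * (M.mulVec w) i = ∑ j, p i * M i j * (w i * w j) := by
    intro i
    simp only [Matrix.mulVec, dotProduct, Finset.mul_sum]
    exact Finset.sum_congr rfl fun j _ => by ring
  rw [h2, ← Finset.sum_add_distrib, Finset.mul_sum]
  exact Finset.sum_congr rfl fun i _ => by rw [h3 i]; ring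

end MHaux

theorem metzler_hurwitz_iff_diag_stable {n : ℕ} (M : Matrix (Fin n) (Fin n) ℝ)
    (hM : Metzler M) :
    Hurwitz M ↔ ∃ p : Fin n → ℝ, (∀ i, 0 < p i) ∧
      ∀ x : Fin n → ℝ, x ≠ 0 →
        x ⬝ᵥ (Mᵀ * Matrix.diagonal p + Matrix.diagonal p * M).mulVec x < 0 := by
  constructor
  · intro hH
    obtain ⟨d, hd, hMd⟩ := MHaux.exists_pos_mulVec_neg M hM hH
    have hMt : Metzler Mᵀ := fun i j hij => hM j i (Ne.symm hij)
    have hHt : Hurwitz Mᵀ := by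
      intro μ hμ
      apply hH μ
      have hmapt : (Mᵀ).map Complex.ofReal = (M.map Complex.ofReal)ᵀ := rfl
      rw [hmapt] at hμ
      rw [MHaux.spec_det] at hμ ⊢
      rw [← hμ, ← Matrix.det_transpose (μ • 1 - M.map Complex.ofReal)]
      congr 1
      rw [Matrix.transpose_sub, Matrix.transpose_smul, Matrix.transpose_one]
    obtain ⟨e, he, hMe⟩ := MHaux.exists_pos_mulVec_neg Mᵀ hMt hHt
    refine ⟨fun i => e i / d i, fun i => div_pos (he i) (hd i), ?_⟩
    set p : Fin n → ℝ := fun i => e i / d i with hpdef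
    have hp : ∀ i, 0 < p i := fun i => div_pos (he i) (hd i)
    have hpd : ∀ i, p i * d i = e i := fun i => div_mul_cancel₀ _ (ne_of_gt (hd i))
    intro x hx0
    set y : Fin n → ℝ := fun i => x i / d i with hydef
    have hxy : ∀ i, x i = d i * y i := by
      intro i
      have h := div_mul_cancel₀ (x i) (ne_of_gt (hd i))
      rw [hydef]
      dsimp only
      rw [mul_comm]
      exact h.symm
    set T : Fin n → Fin n → ℝ := fun i j => (M j i * p j + p i * M i j) * (d i * d j) with hTdef
    have hTsym : ∀ i j, T i j = T j i := fun i j => by simp only [hTdef]; ring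
    set r : Fin n → ℝ := fun i => (Mᵀ.mulVec e) i + p i * (M.mulVec d) i with hrdef
    have hr : ∀ i, r i < 0 := fun i =>
      add_neg (hMe i) (mul_neg_of_pos_of_neg (hp i) (hMd i))
    have hrow : ∀ i, ∑ j, T i j = d i * r i := by
      intro i
      have hterm : ∀ j, T i j = d i * (M j i * e j + p i * (M i j * d j)) := by
        intro j
        rw [hTdef, ← hpd j]
        ring
      rw [Finset.sum_congr rfl fun j _ => hterm j, ← Finset.mul_sum]
      have he1 : ∑ j, M j i * e j = (Mᵀ.mulVec e) i := by
        simp [Matrix.mulVec, dotProduct, Matrix.transpose_apply]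
      have he2 : ∑ j, M i j * d j = (M.mulVec d) i := by
        simp [Matrix.mulVec, dotProduct]
      rw [Finset.sum_add_distrib, ← Finset.mul_sum, he1, he2, hrdef]
    have hToff : ∀ i j, i ≠ j → 0 ≤ T i j := by
      intro i j hij
      rw [hTdef]
      have h1 := hM i j hij
      have h2 := hM j i (Ne.symm hij)
      have := (hp i).le
      have := (hp j).le
      have := (hd i).le
      have := (hd j).le
      positivity
    have hq := MHaux.quad_expand (Mᵀ * Matrix.diagonal p + Matrix.diagonal p * M) x
    have hq2 : x ⬝ᵥ (Mᵀ * Matrix.diagonal p + Matrix.diagonal p * M).mulVec x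
        = ∑ i, ∑ j, T i j * (y i * y j) := by
      rw [hq]
      refine Finset.sum_congr rfl fun i _ => Finset.sum_congr rfl fun j _ => ?_
      rw [MHaux.S_entry, hTdef, hxy i, hxy j]
      ring
    have hstep1 : ∑ i, ∑ j, T i j * (y i * y j)
        ≤ ∑ i, ∑ j, T i j * ((y i ^ 2 + y j ^ 2) / 2) := by
      refine Finset.sum_le_sum fun i _ => Finset.sum_le_sum fun j _ => ?_
      rcases eq_or_ne i j with rfl | hij
      · apply le_of_eq
        ring
      · apply mul_le_mul_of_nonneg_left ?_ (hToff i j hij)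
        nlinarith [sq_nonneg (y i - y j)]
    have hstep2 : ∑ i, ∑ j, T i j * ((y i ^ 2 + y j ^ 2) / 2)
        = ∑ i, (d i * r i) * y i ^ 2 := by
      have hsplit : ∀ i j, T i j * ((y i ^ 2 + y j ^ 2) / 2)
          = T i j * (y i ^ 2 / 2) + T i j * (y j ^ 2 / 2) := by intro i j; ring
      simp only [hsplit, Finset.sum_add_distrib]
      have hA : ∑ i, ∑ j, T i j * (y i ^ 2 / 2) = ∑ i, (d i * r i) * (y i ^ 2 / 2) := by
        refine Finset.sum_congr rfl fun i _ => ?_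
        rw [← Finset.sum_mul, hrow]
      have hB : ∑ i, ∑ j, T i j * (y j ^ 2 / 2) = ∑ j, (d j * r j) * (y j ^ 2 / 2) := by
        rw [Finset.sum_comm]
        refine Finset.sum_congr rfl fun j _ => ?_
        have : ∀ i, T i j = T j i := fun i => hTsym i j
        rw [Finset.sum_congr rfl fun i _ => congrArg (· * (y j ^ 2 / 2)) (this i),
          ← Finset.sum_mul, hrow]
      rw [hA, hB, ← Finset.sum_add_distrib]
      exact Finset.sum_congr rfl fun i _ => by ring
    have hfinal : ∑ i, (d i * r i) * y i ^ 2 < 0 := by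
      obtain ⟨i₀, hi₀⟩ := Function.ne_iff.mp hx0
      have hy₀ : y i₀ ≠ 0 := by
        rw [hydef]
        exact div_ne_zero hi₀ (ne_of_gt (hd i₀))
      have := Finset.sum_lt_sum (s := Finset.univ)
        (f := fun i => (d i * r i) * y i ^ 2) (g := fun _ => (0 : ℝ))
        (fun i _ => mul_nonpos_of_nonpos_of_nonneg
          (le_of_lt (mul_neg_of_pos_of_neg (hd i) (hr i))) (sq_nonneg _))
        ⟨i₀, Finset.mem_univ i₀,
          mul_neg_of_neg_of_pos (mul_neg_of_pos_of_neg (hd i₀) (hr i₀))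
            (by positivity)⟩
      simpa using this
    calc x ⬝ᵥ (Mᵀ * Matrix.diagonal p + Matrix.diagonal p * M).mulVec x
        = ∑ i, ∑ j, T i j * (y i * y j) := hq2
    _ ≤ ∑ i, ∑ j, T i j * ((y i ^ 2 + y j ^ 2) / 2) := hstep1
    _ = ∑ i, (d i * r i) * y i ^ 2 := hstep2
    _ < 0 := hfinal
  · rintro ⟨p, hp, hq⟩
    intro μ hμ
    have hdet := (MHaux.spec_det _ _).mp hμ
    obtain ⟨v, hv0, hv⟩ := (Matrix.exists_mulVec_eq_zero_iff).mpr hdet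
    have hveq : (M.map Complex.ofReal).mulVec v = μ • v := by
      rw [Matrix.sub_mulVec, Matrix.smul_mulVec, Matrix.one_mulVec] at hv
      have := sub_eq_zero.mp hv
      exact this.symm
    set a : Fin n → ℝ := fun i => (v i).re with hadef
    set b : Fin n → ℝ := fun i => (v i).im with hbdef
    have hMa : ∀ i, M.mulVec a i = μ.re * a i - μ.im * b i := by
      intro i
      have h := congrFun hveq i
      have hre := congrArg Complex.re h
      have hlhs : ((M.map Complex.ofReal).mulVec v i).re = M.mulVec a i := by
        simp only [Matrix.mulVec, dotProduct, Matrix.map_apply, Complex.re_sum]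
        exact Finset.sum_congr rfl fun j _ => by
          simp [Complex.mul_re, hadef]
      have hrhs : ((μ • v) i).re = μ.re * a i - μ.im * b i := by
        simp [Complex.mul_re, hadef, hbdef]
      rw [hlhs, hrhs] at hre
      exact hre
    have hMb : ∀ i, M.mulVec b i = μ.im * a i + μ.re * b i := by
      intro i
      have h := congrFun hveq i
      have him := congrArg Complex.im h
      have hlhs : ((M.map Complex.ofReal).mulVec v i).im = M.mulVec b i := by
        simp only [Matrix.mulVec, dotProduct, Matrix.map_apply, Complex.im_sum]
        exact Finset.sum_congr rfl fun j _ => by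
          simp [Complex.mul_im, hbdef]
      have hrhs : ((μ • v) i).im = μ.im * a i + μ.re * b i := by
        simp [Complex.mul_im, hadef, hbdef]
        ring
      rw [hlhs, hrhs] at him
      exact him
    have hSle : ∀ w : Fin n → ℝ,
        w ⬝ᵥ (Mᵀ * Matrix.diagonal p + Matrix.diagonal p * M).mulVec w ≤ 0 := by
      intro w
      rcases eq_or_ne w 0 with rfl | hw
      · simp
      · exact (hq w hw).le
    have hab : a ≠ 0 ∨ b ≠ 0 := by
      obtain ⟨i, hi⟩ := Function.ne_iff.mp hv0
      by_contra hcon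
      push_neg at hcon
      apply hi
      have ha0 := congrFun hcon.1 i
      have hb0 := congrFun hcon.2 i
      apply Complex.ext
      · simpa [hadef] using ha0
      · simpa [hbdef] using hb0
    set c : ℝ := ∑ i, p i * (a i ^ 2 + b i ^ 2) with hcdef
    have hcpos : 0 < c := by
      obtain ⟨i, hi⟩ := Function.ne_iff.mp hv0
      have hterm : 0 < p i * (a i ^ 2 + b i ^ 2) := by
        have habi : a i ≠ 0 ∨ b i ≠ 0 := by
          by_contra hcon
          push_neg at hcon
          apply hi
          apply Complex.ext
          · simpa [hadef] using hcon.1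
          · simpa [hbdef] using hcon.2
        have : 0 < a i ^ 2 + b i ^ 2 := by
          rcases habi with h | h
          · nlinarith [mul_self_pos.mpr h, sq_nonneg (b i), sq_nonneg (a i)]
          · nlinarith [mul_self_pos.mpr h, sq_nonneg (b i), sq_nonneg (a i)]
        exact mul_pos (hp i) this
      refine Finset.sum_pos' (fun j _ => ?_) ⟨i, Finset.mem_univ i, hterm⟩
      have := sq_nonneg (a j)
      have := sq_nonneg (b j)
      have := (hp j).le
      positivity
    have ht : a ⬝ᵥ (Mᵀ * Matrix.diagonal p + Matrix.diagonal p * M).mulVec a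
        + b ⬝ᵥ (Mᵀ * Matrix.diagonal p + Matrix.diagonal p * M).mulVec b
        = 2 * μ.re * c := by
      have hsa : ∑ i, p i * a i * (M.mulVec a) i
          = ∑ i, p i * a i * (μ.re * a i - μ.im * b i) :=
        Finset.sum_congr rfl fun i _ => by rw [hMa i]
      have hsb : ∑ i, p i * b i * (M.mulVec b) i
          = ∑ i, p i * b i * (μ.im * a i + μ.re * b i) :=
        Finset.sum_congr rfl fun i _ => by rw [hMb i]
      rw [MHaux.quad_eq, MHaux.quad_eq, hsa, hsb, hcdef]
      rw [Finset.mul_sum, Finset.mul_sum, Finset.mul_sum, ← Finset.sum_add_distrib]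
      exact Finset.sum_congr rfl fun i _ => by ring
    have htneg : a ⬝ᵥ (Mᵀ * Matrix.diagonal p + Matrix.diagonal p * M).mulVec a
        + b ⬝ᵥ (Mᵀ * Matrix.diagonal p + Matrix.diagonal p * M).mulVec b < 0 := by
      rcases hab with h | h
      · have := hq a h
        have := hSle b
        linarith
      · have := hq b h
        have := hSle a
        linarith
    rw [ht] at htneg
    nlinarith
end

section
/- Let M be an n×n Metzler matrix with negative diagonal entries whose associated digraph is a single simple directed cycle, i.e., the nonzero off-diagonal entries of M are exactly m_{1,2}, m_{2,3}, ..., m_{n-1,n}, m_{n,1}, all positive. Then M is Hurwitz if and only if the cycle gain γ = ∏_{i=1}^{n-1} (m_{i,i+1}/(-m_{ii})) · (m_{n,1}/(-m_{nn})) satisfies γ < 1. -/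
open Matrix

lemma fin_ne_add_one {n : ℕ} (i : Fin (n+2)) : i ≠ i + 1 := by
  intro h
  exact one_ne_zero (left_eq_add.mp h)

open Fin.NatCast in
/-- A permutation of `Fin (n+2)` with `σ i ∈ {i, i+1}` for all `i` is either the
identity or the full rotation. -/
lemma perm_cyclic_classify {n : ℕ} (σ : Equiv.Perm (Fin (n + 2)))
    (h : ∀ i, σ i = i ∨ σ i = i + 1) : σ = 1 ∨ σ = finRotate (n + 2) := by
  by_cases he : ∀ i, σ i = i
  · exact Or.inl (Equiv.ext he)
  right
  push_neg at he
  obtain ⟨i₀, hi₀⟩ := he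
  have h1 : σ i₀ = i₀ + 1 := (h i₀).resolve_left hi₀
  have key : ∀ k : ℕ, σ (i₀ + (k : Fin (n+2))) = i₀ + (k : Fin (n+2)) + 1 := by
    intro k
    induction k with
    | zero => simpa using h1
    | succ k ih =>
      have hc : ((k+1 : ℕ) : Fin (n+2)) = (k : Fin (n+2)) + 1 := by push_cast; ring
      rw [hc, ← add_assoc]
      rcases h (i₀ + (k : Fin (n+2)) + 1) with h2 | h2
      · exfalso
        have := σ.injective (ih.trans h2.symm)
        exact fin_ne_add_one _ this
      · exact h2
  apply Equiv.ext
  intro j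
  have hj : i₀ + (((j - i₀ : Fin (n+2)).val : Fin (n+2))) = j := by
    rw [Fin.cast_val_eq_self]; exact add_sub_cancel i₀ j
  have := key (j - i₀ : Fin (n+2)).val
  rw [hj] at this
  rw [this, finRotate_succ_apply]

/-- Determinant of a matrix supported on the diagonal and cyclic superdiagonal. -/
lemma det_cyclic {n : ℕ} (N : Matrix (Fin (n+2)) (Fin (n+2)) ℂ)
    (h0 : ∀ i j, i ≠ j → j ≠ i + 1 → N i j = 0) :
    N.det = ∏ i, N i i + (-1)^(n+1) * ∏ i, N i (i+1) := by
  have hrot : (1 : Equiv.Perm (Fin (n+2))) ≠ finRotate (n+2) := by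
    intro h
    have : (0 : Fin (n+2)) = finRotate (n+2) 0 := by rw [← h]; rfl
    rw [finRotate_succ_apply, zero_add] at this
    exact one_ne_zero this.symm
  rw [← Matrix.det_transpose, Matrix.det_apply']
  rw [← Finset.sum_subset (Finset.subset_univ
      ({1, finRotate (n+2)} : Finset (Equiv.Perm (Fin (n+2)))))]
  · rw [Finset.sum_pair hrot]
    congr 1
    · simp [Matrix.transpose_apply]
    · congr 1
      · rw [sign_finRotate]; push_cast; ring
      · exact Finset.prod_congr rfl fun i _ => by rw [finRotate_succ_apply]; rfl
  · intro σ _ hσ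
    have : ¬ (∀ i, σ i = i ∨ σ i = i + 1) := by
      intro h
      rcases perm_cyclic_classify σ h with rfl | rfl
      · exact hσ (Finset.mem_insert_self _ _)
      · exact hσ (Finset.mem_insert_of_mem (Finset.mem_singleton_self _))
    push_neg at this
    obtain ⟨i, h1, h2⟩ := this
    apply mul_eq_zero_of_right
    apply Finset.prod_eq_zero (Finset.mem_univ i)
    show N i (σ i) = 0
    exact h0 i (σ i) (Ne.symm h1) h2

/-- Characterization of the spectrum of a cyclic matrix. -/
lemma spec_iff_cyclic {n : ℕ} (M : Matrix (Fin (n + 2)) (Fin (n + 2)) ℝ)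
    (hzero : ∀ i j : Fin (n + 2), i ≠ j → j ≠ i + 1 → M i j = 0) (μ : ℂ) :
    μ ∈ spectrum ℂ (M.map Complex.ofReal) ↔
      ∏ i, (μ - (M i i : ℂ)) = ∏ i, (M i (i+1) : ℂ) := by
  rw [spectrum.mem_iff]
  set S := algebraMap ℂ (Matrix (Fin (n+2)) (Fin (n+2)) ℂ) μ - M.map Complex.ofReal with hS
  have hSe : ∀ i j, S i j = (if i = j then μ else 0) - (M i j : ℂ) := by
    intro i j
    simp [hS, Matrix.algebraMap_matrix_apply, Matrix.map_apply, Algebra.algebraMap_self_apply]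
  have hdet : S.det = ∏ i, (μ - (M i i : ℂ)) - ∏ i, (M i (i+1) : ℂ) := by
    rw [det_cyclic S (fun i j h1 h2 => by rw [hSe, if_neg h1, hzero i j h1 h2]; simp)]
    have h1 : ∏ i, S i i = ∏ i, (μ - (M i i : ℂ)) :=
      Finset.prod_congr rfl fun i _ => by rw [hSe, if_pos rfl]
    have h2 : ∏ i, S i (i+1) = (-1 : ℂ)^(n+2) * ∏ i, (M i (i+1) : ℂ) := by
      calc ∏ i, S i (i+1) = ∏ i : Fin (n+2), (-1 * (M i (i+1) : ℂ)) :=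
            Finset.prod_congr rfl fun i _ => by rw [hSe, if_neg (fin_ne_add_one i)]; ring
        _ = (∏ _i : Fin (n+2), (-1 : ℂ)) * ∏ i, (M i (i+1) : ℂ) := Finset.prod_mul_distrib
        _ = (-1 : ℂ)^(n+2) * ∏ i, (M i (i+1) : ℂ) := by
            rw [Finset.prod_const, Finset.card_univ, Fintype.card_fin]
    rw [h1, h2, ← mul_assoc, ← pow_add]
    have : (-1 : ℂ) ^ (n + 1 + (n + 2)) = -1 := by
      have : n + 1 + (n + 2) = 2 * (n + 1) + 1 := by ring
      rw [this, pow_succ, pow_mul]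
      norm_num
    rw [this]; ring
  constructor
  · intro h
    have : S.det = 0 := by
      by_contra hd
      exact h ((Matrix.isUnit_iff_isUnit_det S).mpr (isUnit_iff_ne_zero.mpr hd))
    rw [hdet] at this
    linear_combination this
  · intro h hu
    have : S.det ≠ 0 := isUnit_iff_ne_zero.mp ((Matrix.isUnit_iff_isUnit_det S).mp hu)
    apply this
    rw [hdet, h]; ring

/-- A Metzler matrix of size `n + 2 ≥ 2` whose digraph is a single simple directed
cycle `1 → 2 → ⋯ → n → 1` is Hurwitz iff its cycle gain is less than one.
Here `i + 1` is cyclic addition in `Fin (n+2)`, so the entry `M i (i+1)` for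
`i = n+1` is `m_{n,1}`. -/
theorem metzler_simple_cycle_hurwitz_iff {n : ℕ}
    (M : Matrix (Fin (n + 2)) (Fin (n + 2)) ℝ)
    (hdiag : ∀ i, M i i < 0)
    (hpos : ∀ i : Fin (n + 2), 0 < M i (i + 1))
    (hzero : ∀ i j : Fin (n + 2), i ≠ j → j ≠ i + 1 → M i j = 0) :
    Hurwitz M ↔ ∏ i : Fin (n + 2), M i (i + 1) / (-M i i) < 1 := by
  have hD : (0:ℝ) < ∏ i, (-M i i) := Finset.prod_pos fun i _ => neg_pos.mpr (hdiag i)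
  have hA : (0:ℝ) < ∏ i, M i (i+1) := Finset.prod_pos fun i _ => hpos i
  have hγ : ∏ i : Fin (n+2), M i (i + 1) / (-M i i)
      = (∏ i, M i (i+1)) / ∏ i, (-M i i) := Finset.prod_div_distrib _ _
  rw [hγ, div_lt_one hD]
  constructor
  · intro hH
    by_contra hle
    push_neg at hle
    set f : ℝ → ℝ := fun x => ∏ i, (x - M i i) with hf
    have hf0 : f 0 = ∏ i, (-M i i) := by simp [hf]
    set b := max 1 (∏ i, M i (i+1)) with hb
    have hb1 : (1:ℝ) ≤ b := le_max_left _ _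
    have hb0 : (0:ℝ) ≤ b := by linarith
    have hfb : ∏ i, M i (i+1) ≤ f b := by
      calc ∏ i, M i (i+1) ≤ b := le_max_right _ _
        _ = b ^ 1 := (pow_one b).symm
        _ ≤ b ^ (n+2) := pow_le_pow_right₀ hb1 (by omega)
        _ = ∏ _i : Fin (n+2), b := by
            rw [Finset.prod_const, Finset.card_univ, Fintype.card_fin]
        _ ≤ ∏ i, (b - M i i) :=
            Finset.prod_le_prod (fun i _ => hb0) (fun i _ => by nlinarith [hdiag i])
    have hcont : ContinuousOn f (Set.Icc 0 b) :=
      (continuous_finset_prod _ fun i _ => continuous_id.sub continuous_const).continuousOn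
    obtain ⟨x, hx, hfx⟩ := intermediate_value_Icc hb0 hcont
      (Set.mem_Icc.mpr ⟨by rw [hf0]; exact hle, hfb⟩)
    have hspec : (x:ℂ) ∈ spectrum ℂ (M.map Complex.ofReal) := by
      rw [spec_iff_cyclic M hzero]
      simp only [hf] at hfx
      have := congrArg (fun t : ℝ => (t : ℂ)) hfx
      push_cast at this
      exact this
    have := hH _ hspec
    rw [Complex.ofReal_re] at this
    exact absurd hx.1 (not_le.mpr this)
  · intro hlt μ hμ
    rw [spec_iff_cyclic M hzero] at hμ
    by_contra hre
    push_neg at hre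
    have h1 : ∏ i, (-M i i) ≤ ‖∏ i, (μ - (M i i:ℂ))‖ := by
      rw [norm_prod]
      refine Finset.prod_le_prod (fun i _ => by linarith [hdiag i]) (fun i _ => ?_)
      calc -M i i ≤ μ.re - M i i := by linarith
        _ = (μ - (M i i:ℂ)).re := by simp
        _ ≤ ‖μ - (M i i:ℂ)‖ := Complex.re_le_norm _
    rw [hμ] at h1
    have h2 : ‖∏ i, ((M i (i+1):ℝ):ℂ)‖ = ∏ i, M i (i+1) := by
      rw [← Complex.ofReal_prod, Complex.norm_real, Real.norm_eq_abs, abs_of_pos hA]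
    rw [h2] at h1
    linarith
end

section
/- Let M be an n×n Metzler matrix with negative diagonal entries. Suppose there exist positive constants ψ_{ij} for each pair (i,j) with i≠j and m_{ij} > 0, such that (a) for every i, ∑_{j: m_{ij}>0, j≠i} (m_{ij}/(-m_{ii})) ψ_{ij}^{-1} < 1, and (b) for every simple directed cycle (i_1, i_2, ..., i_k, i_1) in the associated digraph of M, the product ψ_{i_2 i_1} ψ_{i_3 i_2} ⋯ ψ_{i_1 i_k} < 1. Then M is Hurwitz. -/
open Matrix

/-- Cyclic successor index in a list. -/
def cyclicNext {α : Type*} (l : List α) (t : Fin l.length) : Fin l.length :=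
  ⟨(t.1 + 1) % l.length, Nat.mod_lt _ (Nat.lt_of_le_of_lt (Nat.zero_le _) t.isLt)⟩

/-- A simple directed cycle of the digraph of \`M\` (edge from \`j\` to \`i\` when \`i ≠ j\`
and \`M i j > 0\`), recorded as a nodup list of at least two nodes: consecutive nodes
(cyclically) are joined by edges. -/
def IsCycle {n : ℕ} (M : Matrix (Fin n) (Fin n) ℝ) (l : List (Fin n)) : Prop :=
  2 ≤ l.length ∧ l.Nodup ∧
    ∀ t : Fin l.length, 0 < M (l.get (cyclicNext l t)) (l.get t)

/-- The sum-cycle gain ∏ₜ m_{i_{t+1} i_t} / (−m_{i_{t+1} i_{t+1}}) of a cycle. -/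
noncomputable def cycleGain {n : ℕ} (M : Matrix (Fin n) (Fin n) ℝ)
    (l : List (Fin n)) : ℝ :=
  ∏ t : Fin l.length,
    M (l.get (cyclicNext l t)) (l.get t) / (-M (l.get (cyclicNext l t)) (l.get (cyclicNext l t)))

open scoped Classical

namespace MetzAux

variable {n : ℕ}

/-- Edge relation: `Edge M a b` means there is a digraph edge from `a` to `b`. -/
def Edge (M : Matrix (Fin n) (Fin n) ℝ) (a b : Fin n) : Prop := a ≠ b ∧ 0 < M b a

/-- Weight of a path list `[p₀, …, p_m]` (edges `p_t → p_{t+1}`):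
product of `ψ p_{t+1} p_t`. -/
noncomputable def pw (ψ : Fin n → Fin n → ℝ) : List (Fin n) → ℝ
  | [] => 1
  | [_] => 1
  | a :: b :: t => ψ b a * pw ψ (b :: t)

theorem pw_pos {ψ : Fin n → Fin n → ℝ} {M : Matrix (Fin n) (Fin n) ℝ}
    (hψ : ∀ a b : Fin n, Edge M a b → 0 < ψ b a) :
    ∀ l : List (Fin n), l.Chain' (Edge M) → 0 < pw ψ l
  | [], _ => one_pos
  | [_], _ => one_pos
  | a :: b :: t, h => by
    rw [pw]
    rcases List.isChain_cons_cons.mp h with ⟨h1, h2⟩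
    exact mul_pos (hψ a b h1) (pw_pos hψ (b :: t) h2)

theorem pw_split (ψ : Fin n → Fin n → ℝ) :
    ∀ (as : List (Fin n)) (b : Fin n) (bs : List (Fin n)),
      pw ψ (as ++ b :: bs) = pw ψ (as ++ [b]) * pw ψ (b :: bs)
  | [], b, bs => by simp [pw]
  | [a], b, bs => by simp [pw]
  | a :: a' :: as, b, bs => by
    have ih := pw_split ψ (a' :: as) b bs
    simp only [List.cons_append] at ih ⊢
    rw [pw, pw, ih]
    ring

theorem pw_concat (ψ : Fin n → Fin n → ℝ) :
    ∀ (a : Fin n) (l : List (Fin n)) (y : Fin n),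
      pw ψ ((a :: l) ++ [y]) = pw ψ (a :: l) * ψ y (l.getLastD a)
  | a, [], y => by simp [pw]
  | a, b :: t, y => by
    have ih := pw_concat ψ b t y
    simp only [List.cons_append] at ih ⊢
    rw [pw, pw, ih, List.getLastD_cons]
    ring

theorem zip_concat {α β : Type*} (f : α → α → β) :
    ∀ (x : α) (xs : List α) (y : α),
      List.zipWith f (xs ++ [y]) (x :: xs) = List.zipWith f xs (x :: xs) ++ [f y (xs.getLastD x)]
  | x, [], y => by simp
  | x, z :: zs, y => by
    have ih := zip_concat f z zs y
    simp only [List.cons_append, List.zipWith_cons_cons, List.getLastD_cons] at ih ⊢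
    rw [ih]

theorem pw_eq_zip (ψ : Fin n → Fin n → ℝ) :
    ∀ (x : Fin n) (xs : List (Fin n)),
      pw ψ (x :: xs) = (List.zipWith ψ xs (x :: xs)).prod
  | x, [] => by simp [pw]
  | x, y :: ys => by
    have ih := pw_eq_zip ψ y ys
    simp [pw, ih]

theorem cycle_prod_eq (ψ : Fin n → Fin n → ℝ) (x : Fin n) (xs : List (Fin n)) :
    (∏ t : Fin (x :: xs).length,
        ψ ((x :: xs).get (cyclicNext (x :: xs) t)) ((x :: xs).get t))
      = pw ψ (x :: xs) * ψ x (xs.getLastD x) := by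
  set c := x :: xs with hc
  have hofn : (List.ofFn (fun t : Fin c.length => ψ (c.get (cyclicNext c t)) (c.get t)))
      = List.zipWith ψ (c.rotate 1) c := by
    apply List.ext_get
    · simp [hc]
    · intro k h1 h2
      simp only [List.get_ofFn, List.getElem_ofFn, List.get_eq_getElem, List.getElem_zipWith, List.getElem_rotate]
      rfl
  have h1 : (∏ t : Fin c.length, ψ (c.get (cyclicNext c t)) (c.get t))
      = (List.zipWith ψ (c.rotate 1) c).prod := by
    rw [← hofn, List.prod_ofFn]
  rw [h1, hc]
  rw [List.rotate_cons_succ, List.rotate_zero]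
  rw [zip_concat]
  rw [List.prod_append, List.prod_cons, List.prod_nil]
  rw [pw_eq_zip]
  ring

/-- The finite set of simple paths ending at `i`. -/
noncomputable def vPaths (M : Matrix (Fin n) (Fin n) ℝ) (i : Fin n) :
    Finset {l : List (Fin n) // l.Nodup} :=
  Finset.univ.filter (fun p => p.1 ≠ [] ∧ p.1.getLast? = some i ∧ p.1.Chain' (Edge M))

theorem vPaths_nonempty (M : Matrix (Fin n) (Fin n) ℝ) (i : Fin n) :
    (vPaths M i).Nonempty :=
  ⟨⟨[i], List.nodup_singleton i⟩, by simp [vPaths]; exact List.isChain_singleton i⟩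

noncomputable def vmax (M : Matrix (Fin n) (Fin n) ℝ) (ψ : Fin n → Fin n → ℝ) (i : Fin n) : ℝ :=
  (vPaths M i).sup' (vPaths_nonempty M i) (fun p => pw ψ p.1)

theorem one_le_vmax (M : Matrix (Fin n) (Fin n) ℝ) (ψ : Fin n → Fin n → ℝ) (i : Fin n) :
    1 ≤ vmax M ψ i := by
  have h := Finset.le_sup' (f := fun p : {l : List (Fin n) // l.Nodup} => pw ψ p.1)
    (b := ⟨[i], List.nodup_singleton i⟩) (by simp [vPaths]; exact List.isChain_singleton i : _ ∈ vPaths M i)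
  exact h

theorem vmax_pos (M : Matrix (Fin n) (Fin n) ℝ) (ψ : Fin n → Fin n → ℝ) (i : Fin n) :
    0 < vmax M ψ i := lt_of_lt_of_le one_pos (one_le_vmax M ψ i)

theorem edge_bound (M : Matrix (Fin n) (Fin n) ℝ) (ψ : Fin n → Fin n → ℝ)
    (hψpos : ∀ i j, i ≠ j → 0 < M i j → 0 < ψ i j)
    (hb : ∀ l : List (Fin n), IsCycle M l →
        ∏ t : Fin l.length, ψ (l.get (cyclicNext l t)) (l.get t) < 1)
    (i j : Fin n) (hne : j ≠ i) (hpos : 0 < M i j) :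
    ψ i j * vmax M ψ j ≤ vmax M ψ i := by
  have hψE : ∀ a b : Fin n, Edge M a b → 0 < ψ b a := fun a b hE =>
    hψpos b a (Ne.symm hE.1) hE.2
  obtain ⟨p, hp, hvp⟩ := Finset.exists_mem_eq_sup' (vPaths_nonempty M j)
    (fun p : {l : List (Fin n) // l.Nodup} => pw ψ p.1)
  simp only [vPaths, Finset.mem_filter, Finset.mem_univ, true_and] at hp
  obtain ⟨hpn, hplast, hpchain⟩ := hp
  rw [show vmax M ψ j = pw ψ p.1 from hvp]
  by_cases hi : i ∈ p.1
  · -- split:  p = p1 ++ i :: p2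
    obtain ⟨p1, p2, hsplit⟩ := List.append_of_mem hi
    have hnodup : (p1 ++ i :: p2).Nodup := hsplit ▸ p.2
    have hchain : (p1 ++ i :: p2).Chain' (Edge M) := hsplit ▸ hpchain
    have hlast : (p1 ++ i :: p2).getLast? = some j := hsplit ▸ hplast
    have hp2ne : p2 ≠ [] := by
      rintro rfl
      rw [List.getLast?_concat] at hlast
      injection hlast with h
      exact hne h.symm
    have hchain1 : (p1 ++ [i]).Chain' (Edge M) := (List.isChain_split.mp hchain).1
    have hchain2 : (i :: p2).Chain' (Edge M) := (List.isChain_split.mp hchain).2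
    have hlast2 : (i :: p2).getLast? = some j := by
      rw [hsplit] at hplast
      rwa [List.getLast?_append_of_ne_nil _ (by simp)] at hplast
    have hlastD : p2.getLastD i = j := by
      rw [List.getLastD_eq_getLast?]
      rw [List.getLast?_cons] at hlast2
      exact Option.some_inj.mp hlast2
    -- the prefix path p1 ++ [i] is a path to i
    have hnd1 : (p1 ++ [i]).Nodup := by
      have := hnodup
      rw [show p1 ++ i :: p2 = (p1 ++ [i]) ++ p2 by simp] at this
      exact this.of_append_left
    have hmem1 : (⟨p1 ++ [i], hnd1⟩ : {l : List (Fin n) // l.Nodup}) ∈ vPaths M i := by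
      simp [vPaths, List.getLast?_concat, hchain1]
    have hle1 : pw ψ (p1 ++ [i]) ≤ vmax M ψ i :=
      Finset.le_sup' (f := fun p : {l : List (Fin n) // l.Nodup} => pw ψ p.1) hmem1
    -- the cycle i :: p2
    have hnd2 : (i :: p2).Nodup := hnodup.of_append_right
    have hcyc : IsCycle M (i :: p2) := by
      refine ⟨?_, hnd2, ?_⟩
      · have : p2.length ≠ 0 := fun h => hp2ne (List.eq_nil_of_length_eq_zero h)
        simp only [List.length_cons]
        omega
      · intro t
        by_cases ht : t.1 + 1 < (i :: p2).length
        · have hnext : cyclicNext (i :: p2) t = ⟨t.1 + 1, ht⟩ := by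
            simp only [cyclicNext]
            congr 1
            exact Nat.mod_eq_of_lt ht
          rw [hnext]
          exact (List.isChain_iff_getElem.mp hchain2 t.1 (by
            simp only [List.length_cons] at ht ⊢; omega)).2
        · have hlen : t.1 + 1 = (i :: p2).length := by
            have := t.isLt; omega
          have hnext : cyclicNext (i :: p2) t = ⟨0, by simp⟩ := by
            simp only [cyclicNext]
            congr 1
            rw [hlen, Nat.mod_self]
          have hgett : (i :: p2).get t = j := by
            have hlast' : (i :: p2).getLast (by simp) = j := by
              have h2 := hlast2
              rw [List.getLast?_eq_getLast (l := i :: p2) (by simp)] at h2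
              exact Option.some_inj.mp h2
            rw [← hlast', List.getLast_eq_getElem, List.get_eq_getElem]
            congr 1
            simp only [List.length_cons] at hlen ⊢; omega
          rw [hnext, hgett]
          exact hpos
    have hprodlt := hb (i :: p2) hcyc
    rw [cycle_prod_eq, hlastD] at hprodlt
    -- assemble
    rw [hsplit, pw_split]
    have hpos1 : 0 < pw ψ (p1 ++ [i]) := pw_pos hψE _ hchain1
    have hpos2 : 0 < pw ψ (i :: p2) := pw_pos hψE _ hchain2
    calc ψ i j * (pw ψ (p1 ++ [i]) * pw ψ (i :: p2))
        = (pw ψ (i :: p2) * ψ i j) * pw ψ (p1 ++ [i]) := by ring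
      _ ≤ 1 * pw ψ (p1 ++ [i]) :=
          mul_le_mul_of_nonneg_right (le_of_lt hprodlt) (le_of_lt hpos1)
      _ = pw ψ (p1 ++ [i]) := one_mul _
      _ ≤ vmax M ψ i := hle1
  · -- extend: q = p ++ [i]
    obtain ⟨a, l, hal⟩ := List.exists_cons_of_ne_nil hpn
    have hnd : (p.1 ++ [i]).Nodup := by
      rw [List.nodup_append]
      exact ⟨p.2, List.nodup_singleton i, fun a ha b hb hab => hi (by rw [hab, List.mem_singleton.mp hb] at ha; exact ha)⟩
    have hchain : (p.1 ++ [i]).Chain' (Edge M) := by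
      change List.IsChain (Edge M) (p.1 ++ [i])
      rw [List.isChain_append]
      refine ⟨hpchain, List.isChain_singleton i, ?_⟩
      intro x hx y hy
      rw [hplast, Option.mem_def, Option.some_inj] at hx
      simp only [List.head?_cons, Option.mem_def, Option.some_inj] at hy
      subst hx; subst hy
      exact ⟨hne, hpos⟩
    have hmem : (⟨p.1 ++ [i], hnd⟩ : {l : List (Fin n) // l.Nodup}) ∈ vPaths M i := by
      simp [vPaths, List.getLast?_concat, hchain]
    have hle : pw ψ (p.1 ++ [i]) ≤ vmax M ψ i :=
      Finset.le_sup' (f := fun p : {l : List (Fin n) // l.Nodup} => pw ψ p.1) hmem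
    have hlastD : l.getLastD a = j := by
      rw [List.getLastD_eq_getLast?]
      rw [hal, List.getLast?_cons] at hplast
      exact Option.some_inj.mp hplast
    rw [hal] at hle ⊢
    rw [pw_concat, hlastD] at hle
    linarith [hle]

end MetzAux

open scoped Classical in
theorem metzler_hurwitz_of_max_gains {n : ℕ} (M : Matrix (Fin n) (Fin n) ℝ)
    (hM : Metzler M) (hdiag : ∀ i, M i i < 0)
    (ψ : Fin n → Fin n → ℝ)
    (hψpos : ∀ i j, i ≠ j → 0 < M i j → 0 < ψ i j)
    (ha : ∀ i, ∑ j ∈ Finset.univ.filter (fun j => j ≠ i ∧ 0 < M i j),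
        M i j / (-M i i) * (ψ i j)⁻¹ < 1)
    (hb : ∀ l : List (Fin n), IsCycle M l →
        ∏ t : Fin l.length, ψ (l.get (cyclicNext l t)) (l.get t) < 1) :
    Hurwitz M := by
  set v := MetzAux.vmax M ψ with hv
  have hedge : ∀ i j, j ≠ i → 0 < M i j → ψ i j * v j ≤ v i :=
    fun i j h1 h2 => MetzAux.edge_bound M ψ hψpos hb i j h1 h2
  have hvpos : ∀ i, 0 < v i := fun i => MetzAux.vmax_pos M ψ i
  -- the key row-wise strict dominance
  have key : ∀ i, ∑ j ∈ Finset.univ.erase i, M i j * v j < -M i i * v i := by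
    intro i
    have hMii : 0 < -M i i := by linarith [hdiag i]
    set s := Finset.univ.filter (fun j => j ≠ i ∧ 0 < M i j) with hs
    have hsub : s ⊆ Finset.univ.erase i := by
      intro j hj
      simp only [hs, Finset.mem_filter] at hj
      exact Finset.mem_erase.mpr ⟨hj.2.1, Finset.mem_univ j⟩
    have hzero : ∀ j ∈ Finset.univ.erase i, j ∉ s → M i j * v j = 0 := by
      intro j hj hjs
      have hji : j ≠ i := (Finset.mem_erase.mp hj).1
      have hnpos : ¬ 0 < M i j := by
        intro h
        exact hjs (by simp [hs, hji, h])
      have h0 : M i j = 0 := le_antisymm (not_lt.mp hnpos) (hM i j (Ne.symm hji))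
      simp [h0]
    have e1 : ∑ j ∈ Finset.univ.erase i, M i j * v j = ∑ j ∈ s, M i j * v j :=
      (Finset.sum_subset hsub hzero).symm
    have e2 : ∑ j ∈ s, M i j * v j
        ≤ ∑ j ∈ s, (M i j / (-M i i) * (ψ i j)⁻¹) * (-M i i * v i) := by
      apply Finset.sum_le_sum
      intro j hj
      simp only [hs, Finset.mem_filter] at hj
      obtain ⟨-, hji, hMij⟩ := hj
      have hψ : 0 < ψ i j := hψpos i j (Ne.symm hji) hMij
      have hvj : v j ≤ (ψ i j)⁻¹ * v i := by
        have h1 := hedge i j hji hMij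
        have h2 : (ψ i j)⁻¹ * (ψ i j * v j) ≤ (ψ i j)⁻¹ * v i :=
          mul_le_mul_of_nonneg_left h1 (le_of_lt (inv_pos.mpr hψ))
        rwa [inv_mul_cancel_left₀ (ne_of_gt hψ)] at h2
      have hψne : ψ i j ≠ 0 := ne_of_gt hψ
      have hMne : -M i i ≠ 0 := ne_of_gt hMii
      have hMne' : M i i ≠ 0 := fun h => hMne (by rw [h, neg_zero])
      calc M i j * v j ≤ M i j * ((ψ i j)⁻¹ * v i) :=
            mul_le_mul_of_nonneg_left hvj (le_of_lt hMij)
        _ = (M i j / (-M i i) * (ψ i j)⁻¹) * (-M i i * v i) := by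
            field_simp
    have e3 : ∑ j ∈ s, (M i j / (-M i i) * (ψ i j)⁻¹) * (-M i i * v i)
        = (∑ j ∈ s, M i j / (-M i i) * (ψ i j)⁻¹) * (-M i i * v i) :=
      (Finset.sum_mul _ _ _).symm
    have e4 : (∑ j ∈ s, M i j / (-M i i) * (ψ i j)⁻¹) * (-M i i * v i)
        < 1 * (-M i i * v i) :=
      mul_lt_mul_of_pos_right (ha i) (mul_pos hMii (hvpos i))
    calc ∑ j ∈ Finset.univ.erase i, M i j * v j
        = ∑ j ∈ s, M i j * v j := e1
      _ ≤ ∑ j ∈ s, (M i j / (-M i i) * (ψ i j)⁻¹) * (-M i i * v i) := e2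
      _ = (∑ j ∈ s, M i j / (-M i i) * (ψ i j)⁻¹) * (-M i i * v i) := e3
      _ < 1 * (-M i i * v i) := e4
      _ = -M i i * v i := one_mul _
  -- eigenvalue argument
  intro μ hμ
  rw [spectrum.mem_iff] at hμ
  have hdet : (algebraMap ℂ (Matrix (Fin n) (Fin n) ℂ) μ - M.map Complex.ofReal).det = 0 := by
    by_contra h
    exact hμ ((Matrix.isUnit_iff_isUnit_det _).mpr (isUnit_iff_ne_zero.mpr h))
  obtain ⟨x, hx0, hxe⟩ := (Matrix.exists_mulVec_eq_zero_iff).mpr hdet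
  have hAx : (M.map Complex.ofReal) *ᵥ x = μ • x := by
    have h1 : algebraMap ℂ (Matrix (Fin n) (Fin n) ℂ) μ = μ • (1 : Matrix (Fin n) (Fin n) ℂ) :=
      Algebra.algebraMap_eq_smul_one μ
    rw [h1, Matrix.sub_mulVec, Matrix.smul_mulVec, Matrix.one_mulVec, sub_eq_zero] at hxe
    exact hxe.symm
  obtain ⟨j0, hj0⟩ : ∃ j, x j ≠ 0 := Function.ne_iff.mp hx0
  have hneu : (Finset.univ : Finset (Fin n)).Nonempty := ⟨j0, Finset.mem_univ j0⟩
  obtain ⟨i, -, hmax⟩ := Finset.exists_max_image Finset.univ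
    (fun j => ‖x j‖ / v j) hneu
  set t := ‖x i‖ / v i with htdef
  have ht0 : 0 < t := by
    have h1 : ‖x j0‖ / v j0 ≤ t := hmax j0 (Finset.mem_univ j0)
    have h2 : 0 < ‖x j0‖ / v j0 :=
      div_pos (norm_pos_iff.mpr hj0) (hvpos j0)
    linarith
  have hxi : ‖x i‖ = t * v i := by
    rw [htdef, div_mul_cancel₀ _ (ne_of_gt (hvpos i))]
  have hxipos : 0 < ‖x i‖ := by
    rw [hxi]; exact mul_pos ht0 (hvpos i)
  have hrow : ∑ j, (M i j : ℂ) * x j = μ * x i := by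
    have h := congrFun hAx i
    simpa [Matrix.mulVec, dotProduct, Matrix.map_apply, Pi.smul_apply,
      smul_eq_mul] using h
  have hrear : ∑ j ∈ Finset.univ.erase i, (M i j : ℂ) * x j = (μ - (M i i : ℂ)) * x i := by
    have h1 : (M i i : ℂ) * x i + ∑ j ∈ Finset.univ.erase i, (M i j : ℂ) * x j
        = ∑ j, (M i j : ℂ) * x j :=
      Finset.add_sum_erase _ (fun j => (M i j : ℂ) * x j) (Finset.mem_univ i)
    rw [hrow] at h1
    linear_combination h1
  have habs : ‖μ - (M i i : ℂ)‖ * ‖x i‖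
      ≤ ∑ j ∈ Finset.univ.erase i, M i j * ‖x j‖ := by
    rw [← norm_mul, ← hrear]
    calc ‖∑ j ∈ Finset.univ.erase i, (M i j : ℂ) * x j‖
        ≤ ∑ j ∈ Finset.univ.erase i, ‖(M i j : ℂ) * x j‖ :=
          norm_sum_le _ _
      _ = ∑ j ∈ Finset.univ.erase i, M i j * ‖x j‖ := by
          apply Finset.sum_congr rfl
          intro j hj
          have hji : j ≠ i := (Finset.mem_erase.mp hj).1
          rw [norm_mul, Complex.norm_real, Real.norm_eq_abs, abs_of_nonneg (hM i j (Ne.symm hji))]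
  have hsum2 : ∑ j ∈ Finset.univ.erase i, M i j * ‖x j‖
      ≤ (∑ j ∈ Finset.univ.erase i, M i j * v j) * t := by
    rw [Finset.sum_mul]
    apply Finset.sum_le_sum
    intro j hj
    have hji : j ≠ i := (Finset.mem_erase.mp hj).1
    have h1 : ‖x j‖ ≤ t * v j := by
      have h2 : ‖x j‖ / v j ≤ t := hmax j (Finset.mem_univ j)
      rw [div_le_iff₀ (hvpos j)] at h2
      linarith
    calc M i j * ‖x j‖ ≤ M i j * (t * v j) :=
          mul_le_mul_of_nonneg_left h1 (hM i j (Ne.symm hji))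
      _ = M i j * v j * t := by ring
  have hfinal : ‖μ - (M i i : ℂ)‖ * ‖x i‖
      < -M i i * ‖x i‖ := by
    calc ‖μ - (M i i : ℂ)‖ * ‖x i‖
        ≤ ∑ j ∈ Finset.univ.erase i, M i j * ‖x j‖ := habs
      _ ≤ (∑ j ∈ Finset.univ.erase i, M i j * v j) * t := hsum2
      _ < (-M i i * v i) * t := mul_lt_mul_of_pos_right (key i) ht0
      _ = -M i i * (t * v i) := by ring
      _ = -M i i * ‖x i‖ := by rw [hxi]
  have h9 : ‖μ - (M i i : ℂ)‖ < -M i i :=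
    lt_of_mul_lt_mul_right hfinal (le_of_lt hxipos)
  have h10 : μ.re - M i i ≤ ‖μ - (M i i : ℂ)‖ := by
    have h := Complex.re_le_norm (μ - (M i i : ℂ))
    simpa [Complex.sub_re, Complex.ofReal_re] using h
  linarith
end

section
/- Let M be an n×n irreducible Metzler matrix with negative diagonal entries. If M is Hurwitz, then there exist positive constants ψ_{ij} for each pair (i,j) with i≠j and m_{ij} > 0, such that (a) for every i, ∑_{j: m_{ij}>0, j≠i} (m_{ij}/(-m_{ii})) ψ_{ij}^{-1} < 1, and (b) for every simple directed cycle (i_1,...,i_k,i_1) in the associated digraph of M, ψ_{i_2 i_1} ψ_{i_3 i_2} ⋯ ψ_{i_1 i_k} < 1. -/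
open Matrix
open scoped NNReal ENNReal

/-- `M` is irreducible: its digraph (edge `(j,i)` when `i ≠ j` and `M i j ≠ 0`)
is strongly connected. -/
def Irreducible' {n : ℕ} (M : Matrix (Fin n) (Fin n) ℝ) : Prop :=
  ∀ i j : Fin n, Relation.ReflTransGen (fun a b => a ≠ b ∧ M b a ≠ 0) i j


section Aux

attribute [local instance] Matrix.linftyOpNormedRing Matrix.linftyOpNormedAlgebra


lemma aux_mul_nonneg {n : ℕ} {A B : Matrix (Fin n) (Fin n) ℝ}
    (hA : ∀ i j, 0 ≤ A i j) (hB : ∀ i j, 0 ≤ B i j) : ∀ i j, 0 ≤ (A * B) i j := by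
  intro i j
  rw [Matrix.mul_apply]
  exact Finset.sum_nonneg fun k _ => mul_nonneg (hA i k) (hB k j)

lemma aux_pow_nonneg {n : ℕ} {A : Matrix (Fin n) (Fin n) ℝ}
    (hA : ∀ i j, 0 ≤ A i j) (k : ℕ) : ∀ i j, 0 ≤ (A ^ k) i j := by
  induction k with
  | zero => intro i j; simp [Matrix.one_apply]; positivity
  | succ m ih =>
      rw [pow_succ]
      exact aux_mul_nonneg ih hA

lemma aux_nnnorm_map {n : ℕ} (B : Matrix (Fin n) (Fin n) ℝ) :
    ‖B.map Complex.ofReal‖₊ = ‖B‖₊ := by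
  simp [Matrix.linfty_opNNNorm_def, Matrix.map_apply]

lemma aux_map_pow {n : ℕ} (B : Matrix (Fin n) (Fin n) ℝ) (k : ℕ) :
    (B ^ k).map Complex.ofReal = (B.map Complex.ofReal) ^ k := by
  have : (B.map Complex.ofReal) = (Complex.ofRealHom.mapMatrix B) := rfl
  simp only [this, ← map_pow]
  rfl


lemma exists_pos_mulVec_neg {n : ℕ} (hn : 0 < n) (M : Matrix (Fin n) (Fin n) ℝ)
    (hM : ∀ i j, i ≠ j → 0 ≤ M i j) (hdiag : ∀ i, M i i < 0) (hH : ∀ μ ∈ spectrum ℂ (M.map Complex.ofReal), μ.re < 0) :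
    ∃ x : Fin n → ℝ, (∀ i, 0 < x i) ∧ ∀ i, (M *ᵥ x) i < 0 := by
  classical
  haveI : NeZero n := ⟨hn.ne'⟩
  set Mc := M.map Complex.ofReal with hMc
  -- compactness and nonemptiness of spectrum
  have hK : IsCompact (spectrum ℂ Mc) := spectrum.isCompact Mc
  have hKne : (spectrum ℂ Mc).Nonempty := spectrum.nonempty Mc
  -- bound on real parts
  obtain ⟨μ₀, hμ₀K, hμ₀⟩ := hK.exists_isMaxOn hKne Complex.continuous_re.continuousOn
  set δ : ℝ := -μ₀.re with hδdef
  have hδ : 0 < δ := by simpa [hδdef] using hH μ₀ hμ₀K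
  have hre : ∀ μ ∈ spectrum ℂ Mc, μ.re ≤ -δ := by
    intro μ hμ; simpa [hδdef] using hμ₀ hμ
  -- bound on norms
  obtain ⟨μ₁, hμ₁K, hμ₁⟩ := hK.exists_isMaxOn hKne continuous_norm.continuousOn
  set R : ℝ := ‖μ₁‖ with hRdef
  have hR : ∀ μ ∈ spectrum ℂ Mc, ‖μ‖ ≤ R := fun μ hμ => hμ₁ hμ
  have hR0 : 0 ≤ R := (norm_nonneg _)
  -- choose the shift s
  set s : ℝ := R ^ 2 / (2 * δ) + (Finset.univ.sup' (Finset.univ_nonempty) fun i => -M i i) + 1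
    with hsdef
  have hsup_pos : 0 < Finset.univ.sup' (Finset.univ_nonempty) fun i : Fin n => -M i i := by
    obtain ⟨i⟩ := (inferInstance : Nonempty (Fin n))
    exact lt_of_lt_of_le (by linarith [hdiag i]) (Finset.le_sup' (fun i => -M i i) (Finset.mem_univ i))
  have hs0 : 0 < s := by
    have : 0 ≤ R ^ 2 / (2 * δ) := by positivity
    simp only [hsdef]; linarith
  have hsdiag : ∀ i, -M i i < s := by
    intro i
    have h1 : -M i i ≤ Finset.univ.sup' (Finset.univ_nonempty) fun i => -M i i :=
      Finset.le_sup' (fun i => -M i i) (Finset.mem_univ i)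
    have : 0 ≤ R ^ 2 / (2 * δ) := by positivity
    simp only [hsdef]; linarith
  have hsR : R ^ 2 < 2 * δ * s := by
    have h1 : R ^ 2 / (2 * δ) < s := by
      simp only [hsdef]; linarith
    calc R ^ 2 = (R ^ 2 / (2 * δ)) * (2 * δ) := by field_simp
    _ < s * (2 * δ) := by apply mul_lt_mul_of_pos_right h1; linarith
    _ = 2 * δ * s := by ring
  -- key spectral estimate
  have hkey : ∀ μ ∈ spectrum ℂ Mc, ‖μ + s‖ < s := by
    intro μ hμ
    have h1 : ‖μ + s‖ ^ 2 < s ^ 2 := by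
      have e1 : ‖μ + (s:ℂ)‖ ^ 2 = ‖μ‖ ^ 2 + 2 * s * μ.re + s ^ 2 := by
        rw [Complex.sq_norm, Complex.sq_norm,
          Complex.normSq_apply, Complex.normSq_apply]
        simp only [Complex.add_re, Complex.add_im, Complex.ofReal_re, Complex.ofReal_im]
        ring
      have h2 : ‖μ‖ ^ 2 ≤ R ^ 2 := by
        apply sq_le_sq' _ (hR μ hμ); linarith [norm_nonneg μ]
      have h3 : μ.re ≤ -δ := hre μ hμ
      nlinarith [hs0]
    exact lt_of_pow_lt_pow_left₀ 2 (le_of_lt hs0) h1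
  -- the shifted nonnegative matrix
  set A : Matrix (Fin n) (Fin n) ℝ := M + s • (1 : Matrix (Fin n) (Fin n) ℝ) with hAdef
  have hA : ∀ i j, 0 ≤ A i j := by
    intro i j
    by_cases hij : i = j
    · subst hij
      simp only [hAdef, Matrix.add_apply, Matrix.smul_apply, Matrix.one_apply_eq, smul_eq_mul,
        mul_one]
      linarith [hsdiag i]
    · simp only [hAdef, Matrix.add_apply, Matrix.smul_apply, Matrix.one_apply_ne hij,
        smul_eq_mul, mul_zero, add_zero]
      exact hM i j hij
  -- spectrum of A
  have hAc : A.map Complex.ofReal =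
      algebraMap ℂ (Matrix (Fin n) (Fin n) ℂ) (s : ℂ) + Mc := by
    ext i j
    simp only [hAdef, Matrix.map_apply, Matrix.add_apply, Matrix.smul_apply, hMc,
      Matrix.algebraMap_matrix_apply]
    by_cases hij : i = j <;>
      simp [hij, Matrix.one_apply, Complex.ofReal_add, add_comm]
  have hspecA : ∀ z ∈ spectrum ℂ (A.map Complex.ofReal), ‖z‖ < s := by
    intro z hz
    rw [hAc, ← spectrum.singleton_add_eq] at hz
    obtain ⟨a, ha, μ, hμ, rfl⟩ := Set.mem_add.mp hz
    rcases Set.mem_singleton_iff.mp ha with rfl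
    calc ‖(s : ℂ) + μ‖ = ‖μ + (s : ℂ)‖ := by rw [add_comm]
    _ < s := hkey μ hμ
  -- rescaled matrix
  set T : Matrix (Fin n) (Fin n) ℝ := s⁻¹ • A with hTdef
  set Tc : Matrix (Fin n) (Fin n) ℂ := T.map Complex.ofReal with hTcdef
  have hTc : Tc = ((s : ℂ)⁻¹) • (A.map Complex.ofReal) := by
    ext i j
    simp [hTcdef, hTdef, Matrix.map_apply, Matrix.smul_apply]
  have hsne : (s : ℂ) ≠ 0 := by
    simpa using hs0.ne'
  have hρ : spectralRadius ℂ Tc < (1 : ℝ≥0) := by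
    apply spectrum.spectralRadius_lt_of_forall_lt
    intro z hz
    rw [hTc] at hz
    rw [show ((s:ℂ)⁻¹) • (A.map Complex.ofReal)
        = (Units.mk0 ((s:ℂ)⁻¹) (inv_ne_zero hsne)) • (A.map Complex.ofReal) from rfl,
      spectrum.unit_smul_eq_smul] at hz
    obtain ⟨w, hw, rfl⟩ := hz
    rw [← NNReal.coe_lt_coe, coe_nnnorm, NNReal.coe_one]
    beta_reduce
    rw [norm_smul, Units.val_mk0, norm_inv]
    have hns : ‖(s : ℂ)‖ = s := by
      rw [Complex.norm_real, Real.norm_eq_abs, abs_of_pos hs0]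
    rw [hns, inv_mul_lt_iff₀ hs0, mul_one]
    exact hspecA w hw
  -- geometric bound on powers via Gelfand's formula
  obtain ⟨r, hρr, hr1⟩ := ENNReal.lt_iff_exists_nnreal_btwn.mp hρ
  have hr1' : r < 1 := by exact_mod_cast hr1
  have hlim := spectrum.limsup_pow_nnnorm_pow_one_div_le_spectralRadius Tc
  have hev : ∀ᶠ k : ℕ in Filter.atTop, (‖Tc ^ k‖₊ : ℝ≥0∞) ^ (1/(k:ℝ)) < r :=
    Filter.eventually_lt_of_limsup_lt (lt_of_le_of_lt hlim hρr)
  have hev2 : ∀ᶠ k : ℕ in Filter.atTop, ‖T ^ k‖ ≤ (r:ℝ) ^ k := by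
    filter_upwards [hev, Filter.eventually_gt_atTop 0] with k hk hk0
    have h1 : ((‖Tc ^ k‖₊ : ℝ≥0∞) ^ (1/(k:ℝ))) ^ (k:ℝ) ≤ (r : ℝ≥0∞) ^ (k:ℝ) :=
      ENNReal.rpow_le_rpow hk.le (by positivity)
    have hkne : (k:ℝ) ≠ 0 := by exact_mod_cast hk0.ne'
    have e : ((‖Tc ^ k‖₊ : ℝ≥0∞) ^ (1/(k:ℝ))) ^ (k:ℝ) = (‖Tc ^ k‖₊ : ℝ≥0∞) := by
      rw [← ENNReal.rpow_mul, one_div, inv_mul_cancel₀ hkne, ENNReal.rpow_one]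
    rw [e, ← ENNReal.coe_rpow_of_nonneg _ (by positivity), ENNReal.coe_le_coe] at h1
    have h3 : ‖T ^ k‖₊ = ‖Tc ^ k‖₊ := by rw [hTcdef, ← aux_map_pow, aux_nnnorm_map]
    calc ‖T ^ k‖ = ((‖Tc ^ k‖₊ : ℝ≥0) : ℝ) := by rw [← h3]; rfl
    _ ≤ ((r ^ (k:ℝ) : ℝ≥0) : ℝ) := by exact_mod_cast h1
    _ = (r:ℝ) ^ (k:ℝ) := by rw [NNReal.coe_rpow]
    _ = (r:ℝ) ^ k := by rw [Real.rpow_natCast]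
  -- summability of the Neumann series
  have hsum : Summable fun k : ℕ => T ^ k := by
    apply Summable.of_norm_bounded_eventually
      (summable_geometric_of_lt_one r.2 hr1')
    rw [Nat.cofinite_eq_atTop]; exact hev2
  set S : Matrix (Fin n) (Fin n) ℝ := ∑' k : ℕ, T ^ k with hSdef
  have hhs : HasSum (fun k : ℕ => T ^ k) S := hsum.hasSum
  have hT0 : Filter.Tendsto (fun k : ℕ => T ^ k) Filter.atTop (nhds 0) :=
    hsum.tendsto_atTop_zero
  -- the Neumann identity
  have hid : (1 - T) * S = 1 := by
    have h1 : HasSum (fun k : ℕ => (1 - T) * T ^ k) ((1 - T) * S) := hhs.mul_left _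
    have h2 := h1.tendsto_sum_nat
    have h3 : ∀ N : ℕ, ∑ k ∈ Finset.range N, (1 - T) * T ^ k = 1 - T ^ N := by
      intro N
      have e4 : ∀ k, (1 - T) * T ^ k = T ^ k - T ^ (k+1) := by
        intro k; rw [sub_mul, one_mul, pow_succ']
      simp_rw [e4]
      rw [Finset.sum_range_sub']
      simp
    simp only [h3] at h2
    have h4 : Filter.Tendsto (fun N : ℕ => 1 - T ^ N) Filter.atTop (nhds (1 - 0)) :=
      tendsto_const_nhds.sub hT0
    rw [sub_zero] at h4
    exact tendsto_nhds_unique h2 h4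
  -- entries of S are nonnegative
  have hT : ∀ i j, 0 ≤ T i j := by
    intro i j
    have : T i j = s⁻¹ * A i j := rfl
    rw [this]
    exact mul_nonneg (by positivity) (hA i j)
  have hSpos : ∀ i j, 0 ≤ S i j := by
    intro i j
    let L : Matrix (Fin n) (Fin n) ℝ →ₗ[ℝ] ℝ :=
      { toFun := fun X => X i j, map_add' := fun X Y => rfl, map_smul' := fun c X => rfl }
    have hLc : Continuous L := L.continuous_of_finiteDimensional
    have hentry : HasSum (fun k : ℕ => (T ^ k) i j) (S i j) := by
      have := hhs.map L.toAddMonoidHom hLc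
      exact this
    exact hentry.nonneg fun k => aux_pow_nonneg hT k i j
  -- the positive vector
  set x : Fin n → ℝ := S *ᵥ (fun _ => 1) with hxdef
  have hx0 : ∀ i, 0 ≤ x i := by
    intro i
    have : x i = ∑ j, S i j * 1 := rfl
    rw [this]
    exact Finset.sum_nonneg fun j _ => by simpa using hSpos i j
  have h5 : (1 - T) *ᵥ x = fun _ => 1 := by
    rw [hxdef, Matrix.mulVec_mulVec, hid, Matrix.one_mulVec]
  have hM' : M = s • (T - 1) := by
    rw [hTdef, smul_sub, smul_inv_smul₀ hs0.ne', hAdef]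
    abel
  have hMx : ∀ i, (M *ᵥ x) i = -s := by
    have hMxv : M *ᵥ x = (-s) • (fun _ => (1:ℝ)) := by
      rw [hM', Matrix.smul_mulVec, show T - 1 = -(1 - T) from (neg_sub _ _).symm,
        Matrix.neg_mulVec, h5]
      ext i
      simp
    intro i
    rw [hMxv]
    simp
  have hxpos : ∀ i, 0 < x i := by
    intro i
    rcases lt_or_eq_of_le (hx0 i) with h | h
    · exact h
    · exfalso
      have h6 : (M *ᵥ x) i = ∑ j, M i j * x j := rfl
      have h7 : 0 ≤ ∑ j, M i j * x j := by
        apply Finset.sum_nonneg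
        intro j _
        by_cases hji : j = i
        · subst hji
          rw [← h, mul_zero]
        · exact mul_nonneg (hM i j (Ne.symm hji)) (hx0 j)
      rw [← h6, hMx i] at h7
      linarith
  exact ⟨x, hxpos, fun i => by rw [hMx i]; linarith⟩

end Aux

open scoped Classical in
theorem metzler_hurwitz_exists_max_gains {n : ℕ} (M : Matrix (Fin n) (Fin n) ℝ)
    (hM : Metzler M) (hirr : Irreducible' M) (hdiag : ∀ i, M i i < 0)
    (hH : Hurwitz M) :
    ∃ ψ : Fin n → Fin n → ℝ,
      (∀ i j, i ≠ j → 0 < M i j → 0 < ψ i j) ∧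
      (∀ i, ∑ j ∈ Finset.univ.filter (fun j => j ≠ i ∧ 0 < M i j),
          M i j / (-M i i) * (ψ i j)⁻¹ < 1) ∧
      (∀ l : List (Fin n), IsCycle M l →
          ∏ t : Fin l.length, ψ (l.get (cyclicNext l t)) (l.get t) < 1) := by
  rcases Nat.eq_zero_or_pos n with hn | hn
  · subst hn
    refine ⟨fun _ _ => 1, fun i => i.elim0, fun i => i.elim0, ?_⟩
    intro l hl
    obtain ⟨h2, -, -⟩ := hl
    exact ((l.get ⟨0, by omega⟩).elim0)
  · obtain ⟨x, hx, hMx⟩ := exists_pos_mulVec_neg hn M hM hdiag hH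
    haveI : NeZero n := ⟨hn.ne'⟩
    -- the row sums
    set Sr : Fin n → ℝ := fun i => ∑ j ∈ Finset.univ.filter (fun j => j ≠ i ∧ 0 < M i j),
        M i j / (-M i i) * (x j / x i) with hSrdef
    have key : ∀ i, ∑ j ∈ Finset.univ.filter (fun j => j ≠ i ∧ 0 < M i j), M i j * x j
        < (-M i i) * x i := by
      intro i
      have h0 : (M *ᵥ x) i < 0 := hMx i
      have h1 : (M *ᵥ x) i = ∑ j, M i j * x j := rfl
      have h2 : ∑ j ∈ Finset.univ.filter (fun j => j ≠ i ∧ 0 < M i j), M i j * x j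
          = ∑ j ∈ Finset.univ.erase i, M i j * x j := by
        apply Finset.sum_subset
        · intro j hj
          simp only [Finset.mem_filter, Finset.mem_univ, true_and] at hj
          exact Finset.mem_erase.mpr ⟨hj.1, Finset.mem_univ j⟩
        · intro j hj hnj
          have hji : j ≠ i := (Finset.mem_erase.mp hj).1
          have : ¬ (0 < M i j) := by
            intro hpos
            exact hnj (Finset.mem_filter.mpr ⟨Finset.mem_univ j, hji, hpos⟩)
          have hz : M i j = 0 := le_antisymm (not_lt.mp this) (hM i j (Ne.symm hji))
          rw [hz, zero_mul]
      have h3 : ∑ j ∈ Finset.univ.erase i, M i j * x j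
          = (∑ j, M i j * x j) - M i i * x i :=
        Finset.sum_erase_eq_sub (Finset.mem_univ i)
      rw [h1] at h0
      rw [h2, h3]
      linarith
    have hSr_lt : ∀ i, Sr i < 1 := by
      intro i
      have hMii : 0 < -M i i := by linarith [hdiag i]
      have hd : 0 < (-M i i) * x i := mul_pos hMii (hx i)
      have he : Sr i = (∑ j ∈ Finset.univ.filter (fun j => j ≠ i ∧ 0 < M i j), M i j * x j)
          / ((-M i i) * x i) := by
        rw [hSrdef, Finset.sum_div]
        apply Finset.sum_congr rfl
        intro j hj
        field_simp
      rw [he, div_lt_one hd]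
      exact key i
    -- choose the constant c
    set c : ℝ := max (1/2) ((1 + Finset.univ.sup' Finset.univ_nonempty Sr)/2) with hcdef
    have hsup_lt : Finset.univ.sup' Finset.univ_nonempty Sr < 1 :=
      (Finset.sup'_lt_iff _).mpr fun i _ => hSr_lt i
    have hc1 : c < 1 := max_lt (by norm_num) (by linarith)
    have hc0 : 0 < c := lt_of_lt_of_le (by norm_num) (le_max_left _ _)
    have hcS : ∀ i, Sr i < c := by
      intro i
      have h1 : Sr i ≤ Finset.univ.sup' Finset.univ_nonempty Sr :=
        Finset.le_sup' Sr (Finset.mem_univ i)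
      have h2 : Finset.univ.sup' Finset.univ_nonempty Sr
          < (1 + Finset.univ.sup' Finset.univ_nonempty Sr)/2 := by linarith
      exact lt_of_le_of_lt h1 (lt_of_lt_of_le h2 (le_max_right _ _))
    refine ⟨fun i j => c * x i / x j, ?_, ?_, ?_⟩
    · intro i j _ _
      exact div_pos (mul_pos hc0 (hx i)) (hx j)
    · intro i
      have hMii : 0 < -M i i := by linarith [hdiag i]
      have he : ∀ j ∈ Finset.univ.filter (fun j => j ≠ i ∧ 0 < M i j),
          M i j / (-M i i) * (c * x i / x j)⁻¹ = M i j / (-M i i) * (x j / x i) / c := by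
        intro j hj
        have hxj := hx j
        have hxi := hx i
        field_simp
      rw [Finset.sum_congr rfl he, ← Finset.sum_div, div_lt_one hc0]
      exact hcS i
    · intro l hl
      obtain ⟨hlen, hnodup, hedge⟩ := hl
      haveI : NeZero l.length := ⟨by omega⟩
      have hcyc : ∀ t : Fin l.length, cyclicNext l t = t + 1 := by
        intro t
        apply Fin.ext
        rw [Fin.add_def]
        have h1 : ((1 : Fin l.length) : ℕ) = 1 := by
          rw [Fin.val_one']
          exact Nat.mod_eq_of_lt (by omega)
        simp [cyclicNext, h1]
      have hperm : ∏ t : Fin l.length, x (l.get (cyclicNext l t))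
          = ∏ t : Fin l.length, x (l.get t) := by
        simp_rw [hcyc]
        exact Fintype.prod_equiv (Equiv.addRight (1 : Fin l.length))
          (fun t => x (l.get (t + 1))) (fun t => x (l.get t)) (fun t => rfl)
      have hPpos : 0 < ∏ t : Fin l.length, x (l.get t) :=
        Finset.prod_pos fun t _ => hx _
      have hc : (fun i j => c * x i / x j) = fun i j => c * x i / x j := rfl
      calc ∏ t : Fin l.length, c * x (l.get (cyclicNext l t)) / x (l.get t)
          = (∏ _t : Fin l.length, c) * (∏ t : Fin l.length, x (l.get (cyclicNext l t)))
            * (∏ t : Fin l.length, (x (l.get t))⁻¹) := by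
            simp only [div_eq_mul_inv, Finset.prod_mul_distrib]
      _ = c ^ l.length * ((∏ t : Fin l.length, x (l.get t))
            * (∏ t : Fin l.length, x (l.get t))⁻¹) := by
            rw [Finset.prod_const, hperm, ← Finset.prod_inv_distrib]
            simp [Finset.card_univ, mul_assoc]
      _ = c ^ l.length := by
            rw [mul_inv_cancel₀ hPpos.ne', mul_one]
      _ < 1 := pow_lt_one₀ hc0.le hc1 (by omega)
end

section
/- Let M be an n×n Metzler matrix that is Hurwitz, and let c = (i_1, i_2, ..., i_k, i_1) be any simple directed cycle in the associated digraph of M (so m_{i_{t+1} i_t} > 0 for each consecutive pair, indices cyclic). Then the sum-cycle gain γ_c = ∏_{t=1}^{k} m_{i_{t+1} i_t}/(-m_{i_{t+1} i_{t+1}}) satisfies γ_c < 1. -/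
open Matrix

attribute [local instance] Matrix.linftyOpNormedRing Matrix.linftyOpNormedAlgebra

lemma key {n : ℕ} (M : Matrix (Fin n) (Fin n) ℝ) (hM : Metzler M) (hH : Hurwitz M)
    (x : Fin n → ℝ) (hx : ∀ i, 0 ≤ x i) (i0 : Fin n) (hx0 : 0 < x i0)
    (hMx : ∀ i, 0 ≤ M.mulVec x i) : False := by
  haveI : Nonempty (Fin n) := ⟨i0⟩
  set Mc : Matrix (Fin n) (Fin n) ℂ := M.map Complex.ofReal with hMc
  -- uniform spectral bounds
  have hR : ∀ μ ∈ spectrum ℂ Mc, ‖μ‖ ≤ ‖Mc‖ := fun μ hμ => spectrum.norm_le_norm_of_mem hμ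
  set R : ℝ := ‖Mc‖ with hRdef
  have hR0 : 0 ≤ R := norm_nonneg _
  obtain ⟨δ, hδ0, hδ2, hδ⟩ : ∃ δ : ℝ, 0 < δ ∧ δ ≤ 1/2 ∧ ∀ μ ∈ spectrum ℂ Mc, μ.re ≤ -δ := by
    rcases Set.eq_empty_or_nonempty (spectrum ℂ Mc) with he | hne
    · exact ⟨1/2, by norm_num, le_refl _, fun μ hμ => by rw [he] at hμ; exact absurd hμ (Set.notMem_empty μ)⟩
    · obtain ⟨μ₀, hμ₀, hmax⟩ := (spectrum.isCompact Mc).exists_isMaxOn hne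
        (Complex.continuous_re.continuousOn)
      refine ⟨min (1/2) (-μ₀.re), lt_min (by norm_num) (by linarith [hH μ₀ hμ₀]), min_le_left _ _,
        fun μ hμ => ?_⟩
      have h1 := hmax hμ
      have h2 := min_le_right (1/2 : ℝ) (-μ₀.re)
      simp only [IsMaxOn, IsMaxFilter] at h1
      have : μ.re ≤ μ₀.re := h1
      linarith
  -- the shift
  obtain ⟨i1, -, hmax1⟩ := Finset.exists_max_image (Finset.univ : Finset (Fin n)) x ⟨i0, Finset.mem_univ _⟩
  simp only [Finset.mem_univ, forall_true_left] at hmax1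
  have hi1pos : 0 < x i1 := lt_of_lt_of_le hx0 (hmax1 i0)
  set D : ℝ := Finset.univ.sup' ⟨i0, Finset.mem_univ _⟩ (fun i => |M i i|) with hD
  have hDi : ∀ i, |M i i| ≤ D := fun i => Finset.le_sup' (fun i => |M i i|) (Finset.mem_univ i)
  have hD0 : 0 ≤ D := le_trans (abs_nonneg _) (hDi i0)
  set s : ℝ := 1 + R^2/(2*δ) + D with hs
  clear_value s
  have hs1 : 1 ≤ s := by
    have : 0 ≤ R^2/(2*δ) := by positivity
    linarith
  have hs0 : 0 < s := by linarith
  -- B is entrywise nonneg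
  set B : Matrix (Fin n) (Fin n) ℝ := M + s • (1 : Matrix (Fin n) (Fin n) ℝ) with hB
  have hBnn : ∀ i j, 0 ≤ B i j := by
    intro i j
    by_cases h : i = j
    · subst h
      have h1 := abs_le.mp (hDi i)
      simp only [hB, Matrix.add_apply, Matrix.smul_apply, Matrix.one_apply_eq, smul_eq_mul, mul_one]
      have : 0 ≤ R^2/(2*δ) := by positivity
      linarith [h1.1]
    · simp only [hB, Matrix.add_apply, Matrix.smul_apply, Matrix.one_apply_ne h, smul_eq_mul, mul_zero, add_zero]
      exact hM i j h
  -- monotonicity and power inequality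
  have hmono : ∀ (y z : Fin n → ℝ), (∀ j, y j ≤ z j) → ∀ i, (B *ᵥ y) i ≤ (B *ᵥ z) i := by
    intro y z hyz i
    simp only [Matrix.mulVec, dotProduct]
    exact Finset.sum_le_sum fun j _ => mul_le_mul_of_nonneg_left (hyz j) (hBnn i j)
  have hBx : ∀ i, s * x i ≤ (B *ᵥ x) i := by
    intro i
    have h1 : (B *ᵥ x) i = (M *ᵥ x) i + s * x i := by
      rw [hB, Matrix.add_mulVec, Matrix.smul_mulVec, Matrix.one_mulVec]
      simp
    rw [h1]
    linarith [hMx i]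
  have hpow : ∀ (k : ℕ) (i : Fin n), s^k * x i ≤ ((B^k) *ᵥ x) i := by
    intro k
    induction k with
    | zero => intro i; simp [Matrix.one_mulVec]
    | succ k ih =>
      intro i
      have h1 : (B^(k+1)) *ᵥ x = B *ᵥ ((B^k) *ᵥ x) := by
        rw [Matrix.mulVec_mulVec, ← pow_succ']
      rw [h1]
      calc s^(k+1) * x i = s^k * (s * x i) := by ring
        _ ≤ s^k * ((B *ᵥ x) i) := mul_le_mul_of_nonneg_left (hBx i) (pow_nonneg hs0.le k)
        _ = (B *ᵥ (s^k • x)) i := by rw [Matrix.mulVec_smul]; simp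
        _ ≤ (B *ᵥ ((B^k) *ᵥ x)) i := hmono _ _ (fun j => by simpa using ih j) i
  -- complex matrix norms
  set A : Matrix (Fin n) (Fin n) ℂ := Complex.ofRealHom.mapMatrix B with hA
  set xc : Fin n → ℂ := fun j => ((x j : ℝ) : ℂ) with hxc
  have hxcnorm : ‖xc‖ ≤ x i1 := by
    rw [pi_norm_le_iff_of_nonneg hi1pos.le]
    intro j
    simp only [hxc, Complex.norm_real, Real.norm_eq_abs, abs_of_nonneg (hx j)]
    exact hmax1 j
  have hAk : ∀ k : ℕ, s^k ≤ ‖A^k‖ := by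
    intro k
    have hmap : A^k = Complex.ofRealHom.mapMatrix (B^k) := by rw [hA, map_pow]
    have h1 : ((A^k) *ᵥ xc) i1 = (((B^k) *ᵥ x) i1 : ℝ) := by
      rw [hmap, RingHom.mapMatrix_apply]
      exact (RingHom.map_mulVec Complex.ofRealHom (B^k) x i1).symm
    have h2 : s^k * x i1 ≤ ‖(A^k) *ᵥ xc‖ := by
      calc s^k * x i1 ≤ ((B^k) *ᵥ x) i1 := hpow k i1
        _ ≤ ‖((A^k) *ᵥ xc) i1‖ := by rw [h1, Complex.norm_real, Real.norm_eq_abs]; exact le_abs_self _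
        _ ≤ ‖(A^k) *ᵥ xc‖ := norm_le_pi_norm _ i1
    have h3 : ‖(A^k) *ᵥ xc‖ ≤ ‖A^k‖ * ‖xc‖ := Matrix.linfty_opNorm_mulVec _ _
    have h4 : s^k * x i1 ≤ ‖A^k‖ * x i1 := by
      refine h2.trans (h3.trans ?_)
      exact mul_le_mul_of_nonneg_left hxcnorm (norm_nonneg _)
    exact le_of_mul_le_mul_right h4 hi1pos
  -- Gelfand lower bound
  have hrad_ge : ENNReal.ofReal s ≤ spectralRadius ℂ A := by
    apply ge_of_tendsto (spectrum.pow_norm_pow_one_div_tendsto_nhds_spectralRadius A)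
    filter_upwards [Filter.eventually_ge_atTop 1] with k hk
    apply ENNReal.ofReal_le_ofReal
    have hk0 : (k : ℝ) ≠ 0 := Nat.cast_ne_zero.mpr (by omega)
    have h1 : s = (s^k) ^ (1/(k:ℝ)) := by
      rw [← Real.rpow_natCast s k, ← Real.rpow_mul hs0.le, mul_one_div, div_self hk0,
        Real.rpow_one]
    rw [h1]
    exact Real.rpow_le_rpow (by positivity) (hAk k) (by positivity)
  -- spectral upper bound
  have hAeq : A = algebraMap ℂ (Matrix (Fin n) (Fin n) ℂ) (s:ℂ) + Mc := by
    rw [Algebra.algebraMap_eq_smul_one]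
    ext i j
    by_cases h : i = j <;>
      simp [hA, hB, hMc, Matrix.map_apply, Matrix.add_apply, Matrix.smul_apply,
        Matrix.one_apply, h, add_comm]
  have hspec : ∀ ν ∈ spectrum ℂ A, ‖ν‖^2 ≤ s^2 - 2*δ := by
    intro ν hν
    rw [hAeq, ← spectrum.singleton_add_eq] at hν
    obtain ⟨r, hr, μ, hμ, hadd⟩ := Set.mem_add.mp hν
    rw [Set.mem_singleton_iff] at hr
    subst hr
    have hre := hδ μ hμ
    have hnormμ : μ.re^2 + μ.im^2 ≤ R^2 := by
      have h5 : ‖μ‖^2 ≤ R^2 := by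
        have := hR μ hμ
        nlinarith [norm_nonneg μ]
      rwa [Complex.sq_norm, Complex.normSq_apply, ← pow_two, ← pow_two] at h5
    have hν2 : ‖ν‖^2 = (s + μ.re)^2 + μ.im^2 := by
      rw [← hadd, Complex.sq_norm, Complex.normSq_apply]
      simp [Complex.add_re, Complex.add_im, Complex.ofReal_re, Complex.ofReal_im]
      ring
    have hdiv : R^2/(2*δ)*(2*δ) = R^2 := div_mul_cancel₀ _ (by positivity)
    rw [hν2]
    have h2s : 2*δ + R^2 ≤ 2*s*δ := by
      rw [hs]
      nlinarith [mul_nonneg hD0 hδ0.le]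
    nlinarith [mul_le_mul_of_nonneg_left hre (by linarith : (0:ℝ) ≤ 2*s)]
  have hbase : (0:ℝ) ≤ s^2 - 2*δ := by nlinarith
  have hσb : spectralRadius ℂ A ≤ ENNReal.ofReal (Real.sqrt (s^2 - 2*δ)) := by
    rw [spectralRadius]
    apply iSup₂_le
    intro ν hν
    rw [← ENNReal.ofReal_coe_nnreal, coe_nnnorm]
    apply ENNReal.ofReal_le_ofReal
    rw [show ‖ν‖ = Real.sqrt (‖ν‖^2) by rw [Real.sqrt_sq (norm_nonneg _)]]
    exact Real.sqrt_le_sqrt (hspec ν hν)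
  have hlt : Real.sqrt (s^2 - 2*δ) < s := by
    have h1 : Real.sqrt (s^2 - 2*δ) ^ 2 = s^2 - 2*δ := Real.sq_sqrt hbase
    nlinarith [Real.sqrt_nonneg (s^2-2*δ)]
  exact absurd (hrad_ge.trans hσb) (not_le.mpr ((ENNReal.ofReal_lt_ofReal_iff hs0).mpr hlt))

lemma diag_neg {n : ℕ} (M : Matrix (Fin n) (Fin n) ℝ) (hM : Metzler M) (hH : Hurwitz M)
    (i : Fin n) : M i i < 0 := by
  by_contra h
  push_neg at h
  refine key M hM hH (Pi.single i 1) (fun j => ?_) i (by simp) (fun j => ?_)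
  · by_cases hj : j = i
    · subst hj; simp
    · simp [Pi.single_apply, hj]
  · have : (M *ᵥ Pi.single i 1) j = M j i := by
      simp [Matrix.mulVec, dotProduct, Pi.single_apply]
    rw [this]
    by_cases hj : j = i
    · subst hj; exact h
    · exact hM j i hj

theorem metzler_hurwitz_cycleGain_lt_one {n : ℕ} (M : Matrix (Fin n) (Fin n) ℝ)
    (hM : Metzler M) (hH : Hurwitz M)
    (l : List (Fin n)) (hl : IsCycle M l) :
    cycleGain M l < 1 := by
  obtain ⟨hk2, hnd, hedge⟩ := hl
  by_contra hγ
  push_neg at hγ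
  set k := l.length with hk
  have hk0 : 0 < k := by omega
  set e' : ℕ → Fin n := fun u => l.get ⟨u % k, Nat.mod_lt _ hk0⟩ with he'
  set g : ℕ → ℝ := fun u => M (e' (u+1)) (e' u) / (-M (e' (u+1)) (e' (u+1))) with hg
  set w : ℕ → ℝ := fun t => ∏ u ∈ Finset.range t, g u with hw
  have hmod : ∀ u : ℕ, (u % k + 1) % k = (u + 1) % k := by
    intro u
    conv_rhs => rw [Nat.add_mod]
    rw [Nat.mod_eq_of_lt (show 1 < k by omega)]
  have hedge' : ∀ u : ℕ, 0 < M (e' (u+1)) (e' u) := by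
    intro u
    have h1 := hedge ⟨u % k, Nat.mod_lt _ hk0⟩
    have h2 : cyclicNext l ⟨u % k, Nat.mod_lt _ hk0⟩ = ⟨(u+1) % k, Nat.mod_lt _ hk0⟩ :=
      Fin.ext (hmod u)
    rw [h2] at h1
    exact h1
  have hdiagneg : ∀ i, 0 < -M i i := fun i => by linarith [diag_neg M hM hH i]
  have hgpos : ∀ u, 0 < g u := fun u => div_pos (hedge' u) (hdiagneg _)
  have hwpos : ∀ t, 0 < w t := fun t => Finset.prod_pos fun u _ => hgpos u
  have hrec : ∀ t : ℕ, M (e' (t+1)) (e' t) * w t = (-M (e' (t+1)) (e' (t+1))) * w (t+1) := by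
    intro t
    have hden : M (e' (t+1)) (e' (t+1)) ≠ 0 := by
      intro h
      exact absurd (by rw [h, neg_zero]) (ne_of_gt (hdiagneg (e' (t+1))))
    have h1 : w (t+1) = w t * g t := Finset.prod_range_succ g t
    rw [h1, hg]
    field_simp
  have hγk : cycleGain M l = w k := by
    rw [show w k = ∏ u ∈ Finset.range k, g u from rfl, ← Fin.prod_univ_eq_prod_range g k]
    unfold cycleGain
    refine Finset.prod_congr rfl fun t _ => ?_
    have h1 : l.get t = e' t.1 :=
      congrArg l.get (Fin.ext (Nat.mod_eq_of_lt t.isLt).symm)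
    have h2 : l.get (cyclicNext l t) = e' (t.1 + 1) :=
      congrArg l.get (Fin.ext rfl)
    rw [hg, h1, h2]
  set x : Fin n → ℝ := fun i => if h : i ∈ l then w (l.idxOf i) else 0 with hx
  have hxnn : ∀ i, 0 ≤ x i := by
    intro i
    simp only [hx]
    split
    · exact (hwpos _).le
    · exact le_rfl
  have hgetmem : ∀ t : Fin k, l.get t ∈ l := fun t => l.get_mem _
  have hxget : ∀ t : Fin k, x (l.get t) = w t.1 := by
    intro t
    simp only [hx]
    rw [dif_pos (hgetmem t), List.get_idxOf hnd]
  have hx0pos : 0 < x (l.get ⟨0, hk0⟩) := by rw [hxget]; exact hwpos 0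
  refine key M hM hH x hxnn _ hx0pos (fun i => ?_)
  have hterm : ∀ j, j ≠ i → 0 ≤ M i j * x j := by
    intro j hj
    exact mul_nonneg (hM i j (Ne.symm hj)) (hxnn j)
  by_cases hi : i ∈ l
  · -- i is on the cycle
    have hp : l.idxOf i < k := List.idxOf_lt_length_iff.mpr hi
    set p := l.idxOf i with hpdef
    have hgi : l.get ⟨p, hp⟩ = i := List.idxOf_get hp
    have hxi : x i = w p := by rw [← hgi, hxget]
    set t : ℕ := if p = 0 then k - 1 else p - 1 with ht
    have htk : t < k := by rw [ht]; split <;> omega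
    set j0 : Fin n := l.get ⟨t, htk⟩ with hj0
    have hj0e : j0 = e' t := by
      rw [hj0, he']
      congr 1
      exact Fin.ext (Nat.mod_eq_of_lt htk).symm
    have htp : t ≠ p := by rw [ht]; split <;> omega
    have hj0i : j0 ≠ i := by
      intro hcon
      rw [hj0, ← hgi] at hcon
      have := List.nodup_iff_injective_get.mp hnd hcon
      exact htp (by simpa using congrArg Fin.val this)
    have hxj0 : x j0 = w t := by rw [hj0, hxget]
    have hip : i = e' (t + 1) := by
      rw [he', ← hgi]
      congr 1
      refine Fin.ext ?_
      show p = (t + 1) % k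
      by_cases h0 : p = 0
      · rw [ht, if_pos h0, h0]
        have : k - 1 + 1 = k := by omega
        rw [this, Nat.mod_self]
      · rw [ht, if_neg h0]
        have : p - 1 + 1 = p := by omega
        rw [this, Nat.mod_eq_of_lt hp]
    have hpair : 0 ≤ M i i * x i + M i j0 * x j0 := by
      rw [hxi, hxj0]
      have hr := hrec t
      rw [← hip] at hr
      rw [hj0e]
      by_cases h0 : p = 0
      · have htk1 : t + 1 = k := by rw [ht, if_pos h0]; omega
        have hwk : 1 ≤ w (t+1) := by rw [htk1, ← hγk]; exact hγ
        have h1 : M i (e' t) * w t = (-M i i) * w (t+1) := hr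
        have h2 : (-M i i) * 1 ≤ (-M i i) * w (t+1) :=
          mul_le_mul_of_nonneg_left hwk (hdiagneg i).le
        have hp0 : w p = 1 := by rw [h0]; simp [hw]
        rw [hp0]
        linarith
      · have htp1 : t + 1 = p := by rw [ht, if_neg h0]; omega
        have h1 : M i (e' t) * w t = (-M i i) * w p := by rw [← htp1]; exact hr
        linarith
    have hsum : M i i * x i + M i j0 * x j0 ≤ (M *ᵥ x) i := by
      simp only [Matrix.mulVec, dotProduct]
      have h1 : M i i * x i + M i j0 * x j0 = ∑ j ∈ ({i, j0} : Finset (Fin n)), M i j * x j := by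
        rw [Finset.sum_pair (Ne.symm hj0i)]
      rw [h1]
      refine Finset.sum_le_sum_of_subset_of_nonneg (Finset.subset_univ _) ?_
      intro j _ hj
      have hji : j ≠ i := fun hc => hj (by rw [hc]; exact Finset.mem_insert_self _ _)
      exact hterm j hji
    linarith
  · -- i is off the cycle
    simp only [Matrix.mulVec, dotProduct]
    apply Finset.sum_nonneg
    intro j _
    by_cases hj : j = i
    · subst hj
      have : x j = 0 := by simp only [hx]; rw [dif_neg hi]
      rw [this, mul_zero]
    · exact hterm j hj
end

section
/- Let M be an n×n Metzler matrix with negative diagonal entries, let Φ = {c_1,...,c_r} be the set of simple directed cycles of its associated digraph, with sum-cycle gains γ_{c} defined as the product over the edges (i_t, i_{t+1}) of the cycle of m_{i_{t+1} i_t}/(-m_{i_{t+1} i_{t+1}}). For ℓ ≥ 1 let K_ℓ be the collection of ℓ-element subsets of Φ consisting of pairwise vertex-disjoint cycles. Then det(M) = (1 − γ_M) ∏_{j=1}^n m_{jj}, where γ_M = ∑_{ℓ=1}^{r} ∑_{{c_{i_1},...,c_{i_ℓ}} ∈ K_ℓ} (−1)^{ℓ−1} γ_{c_{i_1}} ⋯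 γ_{c_{i_ℓ}} (and γ_M = 0 if Φ is empty). -/
open Matrix

/-- A canonical representative of a simple cycle: a cycle whose list starts at its
least node. -/
def IsCanonicalCycle {n : ℕ} (M : Matrix (Fin n) (Fin n) ℝ) (l : List (Fin n)) : Prop :=
  IsCycle M l ∧ ∃ h : l ≠ [], ∀ x ∈ l, l.head h ≤ x

section Aux

open Equiv Finset

/-- noncommProd over an image of an injective-on-`s` map. -/
theorem noncommProd_image_of_injOn {α β G : Type*} [DecidableEq α] [DecidableEq β] [Monoid G]
    (s : Finset α) (g : α → β) (f : β → G) (hinj : Set.InjOn g ↑s)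
    (comm : ((s.image g : Finset β) : Set β).Pairwise (Function.onFun Commute f)) :
    (s.image g).noncommProd f comm =
      s.noncommProd (fun a => f (g a))
        (fun a ha b hb hab => comm (Finset.mem_coe.2 (Finset.mem_image_of_mem g ha))
          (Finset.mem_coe.2 (Finset.mem_image_of_mem g hb))
          fun e => hab (hinj ha hb e)) := by
  classical
  induction s using Finset.induction_on with
  | empty => simp; rfl
  | @insert a s ha ih =>
    have hga : g a ∉ s.image g := by
      simp only [Finset.mem_image, not_exists, not_and]
      intro x hx he
      exact ha (hinj (by simp [hx]) (by simp) he ▸ hx)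
    have hinj' : Set.InjOn g ↑s := hinj.mono (by simp [Set.subset_insert])
    have comm' : ((s.image g : Finset β) : Set β).Pairwise (Function.onFun Commute f) :=
      comm.mono (by intro x hx; simp only [Finset.coe_image, Finset.coe_insert] at *
                    exact Set.image_mono (Set.subset_insert a ↑s) hx)
    calc (Finset.image g (insert a s)).noncommProd f comm
        = (insert (g a) (s.image g)).noncommProd f
            (by rw [← Finset.image_insert]; exact comm) :=
          Finset.noncommProd_congr (Finset.image_insert g a s) (fun _ _ => rfl) _
      _ = f (g a) * (s.image g).noncommProd f comm' := by
          rw [Finset.noncommProd_insert_of_notMem _ _ _ _ hga]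
      _ = f (g a) * s.noncommProd (fun a => f (g a))
            (fun x hx y hy hxy => comm' (Finset.mem_coe.2 (Finset.mem_image_of_mem g hx))
              (Finset.mem_coe.2 (Finset.mem_image_of_mem g hy))
              fun e => hxy (hinj' hx hy e)) := by rw [ih hinj' comm']
      _ = (insert a s).noncommProd (fun a => f (g a))
            (fun x hx y hy hxy => comm (Finset.mem_coe.2 (Finset.mem_image_of_mem g
                (Finset.mem_coe.1 hx)))
              (Finset.mem_coe.2 (Finset.mem_image_of_mem g (Finset.mem_coe.1 hy)))
              fun e => hxy (hinj hx hy e)) := by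
          exact (Finset.noncommProd_insert_of_notMem s a (fun a => f (g a)) _ ha).symm

variable {n : ℕ}

/-- Product over cyclic shift is the same product. -/
theorem prod_cyclicNext {β : Type*} [CommMonoid β] (l : List (Fin n)) (f : Fin l.length → β) :
    ∏ t : Fin l.length, f (cyclicNext l t) = ∏ t : Fin l.length, f t := by
  apply Finset.prod_nbij' (i := cyclicNext l)
    (j := fun t => ⟨(t.1 + (l.length - 1)) % l.length,
      Nat.mod_lt _ (Nat.lt_of_le_of_lt (Nat.zero_le _) t.isLt)⟩)
  · intro a _; exact Finset.mem_univ _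
  · intro a _; exact Finset.mem_univ _
  · intro a _
    ext
    simp only [cyclicNext, Nat.mod_add_mod]
    have h1 : a.1 + 1 + (l.length - 1) = a.1 + l.length := by
      have := a.isLt; omega
    rw [h1, Nat.add_mod_right, Nat.mod_eq_of_lt a.isLt]
  · intro a _
    ext
    simp only [cyclicNext, Nat.mod_add_mod]
    have h1 : a.1 + (l.length - 1) + 1 = a.1 + l.length := by
      have := a.isLt; omega
    rw [h1, Nat.add_mod_right, Nat.mod_eq_of_lt a.isLt]
  · intro a _; rfl

theorem support_formPerm_of_cycle {l : List (Fin n)} (h2 : 2 ≤ l.length) (hnd : l.Nodup) :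
    l.formPerm.support = l.toFinset :=
  List.support_formPerm_of_nodup l hnd (fun x hx => by simp [hx] at h2)

/-- The canonical list of a permutation: its `toList` starting from the least element
of its support. -/
noncomputable def canonList (p : Equiv.Perm (Fin n)) : List (Fin n) :=
  if h : p.support.Nonempty then p.toList (p.support.min' h) else []

theorem nodup_canonList (p : Equiv.Perm (Fin n)) : (canonList p).Nodup := by
  unfold canonList; split
  · exact Equiv.Perm.nodup_toList _ _
  · exact List.nodup_nil

theorem canonList_formPerm {l : List (Fin n)} (h2 : 2 ≤ l.length) (hnd : l.Nodup)
    (hne : l ≠ []) (hmin : ∀ x ∈ l, l.head hne ≤ x) : canonList l.formPerm = l := by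
  have hsupp : l.formPerm.support = l.toFinset := support_formPerm_of_cycle h2 hnd
  have hNE : l.formPerm.support.Nonempty := by
    rw [hsupp]; exact ⟨l.head hne, List.mem_toFinset.2 (List.head_mem hne)⟩
  have hmin' : l.formPerm.support.min' hNE = l.head hne := by
    apply le_antisymm
    · exact Finset.min'_le _ _ (by rw [hsupp]; exact List.mem_toFinset.2 (List.head_mem hne))
    · apply Finset.le_min'
      intro y hy
      rw [hsupp, List.mem_toFinset] at hy
      exact hmin y hy
  have h0 : l.head hne = l.get ⟨0, by omega⟩ := by
    rw [List.head_eq_getElem_zero]; rfl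
  rw [canonList, dif_pos hNE, hmin', h0]
  exact Equiv.Perm.toList_formPerm_nontrivial l h2 hnd

theorem formPerm_inj_of_canonical {M : Matrix (Fin n) (Fin n) ℝ}
    {c c' : {l : List (Fin n) // l.Nodup}}
    (hc : IsCanonicalCycle M c.1) (hc' : IsCanonicalCycle M c'.1)
    (h : c.1.formPerm = c'.1.formPerm) : c = c' := by
  obtain ⟨⟨h2, hnd, _⟩, hne, hmin⟩ := hc
  obtain ⟨⟨h2', hnd', _⟩, hne', hmin'⟩ := hc'
  have := canonList_formPerm h2 hnd hne hmin
  have := canonList_formPerm h2' hnd' hne' hmin'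
  apply Subtype.ext
  rw [← canonList_formPerm h2 hnd hne hmin, ← canonList_formPerm h2' hnd' hne' hmin', h]

variable {M : Matrix (Fin n) (Fin n) ℝ}

/-- "Good" set of cycles: each a canonical cycle, pairwise vertex-disjoint. -/
def SGood (M : Matrix (Fin n) (Fin n) ℝ) (S : Finset {l : List (Fin n) // l.Nodup}) : Prop :=
  (∀ c ∈ S, IsCanonicalCycle M c.1) ∧
    (∀ c ∈ S, ∀ c' ∈ S, c ≠ c' → ∀ x : Fin n, x ∈ c.1 → x ∉ c'.1)

theorem sgood_perm_disjoint {S : Finset {l : List (Fin n) // l.Nodup}} (hS : SGood M S) :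
    (↑S : Set {l : List (Fin n) // l.Nodup}).Pairwise
      (fun c c' => Equiv.Perm.Disjoint c.1.formPerm c'.1.formPerm) := by
  intro c hc c' hc' hne
  rw [Equiv.Perm.disjoint_iff_disjoint_support,
    support_formPerm_of_cycle (hS.1 c hc).1.1 (hS.1 c hc).1.2.1,
    support_formPerm_of_cycle (hS.1 c' hc').1.1 (hS.1 c' hc').1.2.1]
  rw [Finset.disjoint_left]
  intro x hx hx'
  exact hS.2 c hc c' hc' hne x (List.mem_toFinset.1 hx) (List.mem_toFinset.1 hx')

theorem sgood_comm {S : Finset {l : List (Fin n) // l.Nodup}} (hS : SGood M S) :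
    (↑S : Set {l : List (Fin n) // l.Nodup}).Pairwise
      (Function.onFun Commute (fun c => c.1.formPerm)) :=
  fun c hc c' hc' hne => ((sgood_perm_disjoint hS) hc hc' hne).commute

open scoped Classical in
/-- The permutation determined by a set of disjoint cycles. -/
noncomputable def permOfS (S : Finset {l : List (Fin n) // l.Nodup}) : Equiv.Perm (Fin n) :=
  if h : (↑S : Set {l : List (Fin n) // l.Nodup}).Pairwise
      (Function.onFun Commute (fun c => c.1.formPerm)) then
    S.noncommProd (fun c => c.1.formPerm) h
  else 1

theorem permOfS_eq {S : Finset {l : List (Fin n) // l.Nodup}} (hS : SGood M S) :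
    permOfS S = S.noncommProd (fun c => c.1.formPerm) (sgood_comm hS) := by
  unfold permOfS
  rw [dif_pos (sgood_comm hS)]

theorem support_permOfS {S : Finset {l : List (Fin n) // l.Nodup}} (hS : SGood M S) :
    (permOfS S).support = S.biUnion fun c => c.1.toFinset := by
  rw [permOfS_eq hS]
  have h := Equiv.Perm.support_noncommProd (k := fun c : {l : List (Fin n) // l.Nodup} =>
    c.1.formPerm) (s := S) (sgood_perm_disjoint hS)
  rw [show S.noncommProd (fun c => c.1.formPerm) (sgood_comm hS) =
    S.noncommProd (fun c => c.1.formPerm)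
      ((sgood_perm_disjoint hS).imp (fun _ _ => Equiv.Perm.Disjoint.commute)) from rfl, h]
  apply Finset.biUnion_congr rfl
  intro c hc
  exact support_formPerm_of_cycle (hS.1 c hc).1.1 (hS.1 c hc).1.2.1

theorem cycleFactors_permOfS {S : Finset {l : List (Fin n) // l.Nodup}} (hS : SGood M S) :
    (permOfS S).cycleFactorsFinset = S.image (fun c => c.1.formPerm) := by
  rw [Equiv.Perm.cycleFactorsFinset_eq_finset]
  have hinj : Set.InjOn (fun c : {l : List (Fin n) // l.Nodup} => c.1.formPerm) ↑S :=
    fun c hc c' hc' h => formPerm_inj_of_canonical (hS.1 c hc) (hS.1 c' hc') h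
  constructor
  · intro f hf
    obtain ⟨c, hc, rfl⟩ := Finset.mem_image.1 hf
    exact List.isCycle_formPerm (hS.1 c hc).1.2.1 (hS.1 c hc).1.1
  · have hdisj : ((S.image (fun c => c.1.formPerm) : Finset (Equiv.Perm (Fin n))) :
        Set (Equiv.Perm (Fin n))).Pairwise Equiv.Perm.Disjoint := by
      intro x hx y hy hxy
      simp only [Finset.coe_image, Set.mem_image, Finset.mem_coe] at hx hy
      obtain ⟨c, hc, rfl⟩ := hx
      obtain ⟨c', hc', rfl⟩ := hy
      exact sgood_perm_disjoint hS hc hc' (fun h => hxy (by rw [h]))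
    refine ⟨hdisj, ?_⟩
    rw [noncommProd_image_of_injOn S _ id hinj, permOfS_eq hS]
    rfl

theorem permOfS_apply_mem {S : Finset {l : List (Fin n) // l.Nodup}} (hS : SGood M S)
    {c : {l : List (Fin n) // l.Nodup}} (hc : c ∈ S) {x : Fin n} (hx : x ∈ c.1.toFinset) :
    permOfS S x = c.1.formPerm x := by
  have hmem : c.1.formPerm ∈ (permOfS S).cycleFactorsFinset := by
    rw [cycleFactors_permOfS hS]; exact Finset.mem_image_of_mem _ hc
  have := (Equiv.Perm.mem_cycleFactorsFinset_iff.1 hmem).2 x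
    (by rw [support_formPerm_of_cycle (hS.1 c hc).1.1 (hS.1 c hc).1.2.1]; exact hx)
  exact this.symm

theorem permOfS_ne_one {S : Finset {l : List (Fin n) // l.Nodup}} (hS : SGood M S)
    (hne : S.Nonempty) : permOfS S ≠ 1 := by
  obtain ⟨c, hc⟩ := hne
  intro h
  have h2 := (hS.1 c hc).1.1
  have hlne : c.1 ≠ [] := by intro hh; simp [hh] at h2
  have hx : c.1.head hlne ∈ (permOfS S).support := by
    rw [support_permOfS hS]
    exact Finset.mem_biUnion.2 ⟨c, hc, List.mem_toFinset.2 (List.head_mem hlne)⟩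
  rw [h] at hx
  simp at hx

theorem good_permOfS {S : Finset {l : List (Fin n) // l.Nodup}} (hS : SGood M S) :
    ∀ i, permOfS S i ≠ i → 0 < M (permOfS S i) i := by
  intro i hi
  have hmem : i ∈ (permOfS S).support := Equiv.Perm.mem_support.2 hi
  rw [support_permOfS hS] at hmem
  obtain ⟨c, hc, hic⟩ := Finset.mem_biUnion.1 hmem
  rw [permOfS_apply_mem hS hc hic]
  rw [List.mem_toFinset] at hic
  obtain ⟨t, ht, rfl⟩ := List.mem_iff_getElem.1 hic
  have hedge := (hS.1 c hc).1.2.2 ⟨t, ht⟩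
  rw [List.formPerm_apply_getElem _ c.2]
  simpa [cyclicNext, List.get_eq_getElem] using hedge

theorem invS_aux {σ : Equiv.Perm (Fin n)}
    (hgood : ∀ i, σ i ≠ i → 0 < M (σ i) i)
    {p : Equiv.Perm (Fin n)} (hp : p ∈ σ.cycleFactorsFinset) :
    IsCanonicalCycle M (canonList p) ∧ (canonList p).formPerm = p ∧
      (canonList p).toFinset = p.support := by
  have hpc : p.IsCycle := (Equiv.Perm.mem_cycleFactorsFinset_iff.1 hp).1
  have hagree := (Equiv.Perm.mem_cycleFactorsFinset_iff.1 hp).2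
  have hsne : p.support.Nonempty := by
    rw [Finset.nonempty_iff_ne_empty, Ne, Equiv.Perm.support_eq_empty_iff]
    exact hpc.ne_one
  set m := p.support.min' hsne with hm
  have hmmem : m ∈ p.support := Finset.min'_mem _ _
  have hcl : canonList p = p.toList m := dif_pos hsne
  have hcycleOf : p.cycleOf m = p := hpc.cycleOf_eq (Equiv.Perm.mem_support.1 hmmem)
  have hform : (canonList p).formPerm = p := by
    rw [hcl, Equiv.Perm.formPerm_toList, hcycleOf]
  have hlen : (canonList p).length = p.support.card := by
    rw [hcl, Equiv.Perm.length_toList, hcycleOf]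
  have h2 : 2 ≤ (canonList p).length := by
    rw [hlen]; exact hpc.two_le_card_support
  have hnd : (canonList p).Nodup := nodup_canonList p
  have htf : (canonList p).toFinset = p.support := by
    ext y
    rw [List.mem_toFinset, hcl, Equiv.Perm.mem_toList_iff]
    constructor
    · rintro ⟨⟨k, rfl⟩, hms⟩
      exact (Equiv.Perm.zpow_apply_mem_support).2 hms
    · intro hy
      exact ⟨hpc.sameCycle (Equiv.Perm.mem_support.1 hmmem) (Equiv.Perm.mem_support.1 hy), hmmem⟩
  have hlne : canonList p ≠ [] := by intro hh; simp [hh] at h2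
  have hhead : (canonList p).head hlne = m := by
    rw [List.head_eq_getElem_zero]
    simp only [hcl]
    simpa [List.get_eq_getElem] using Equiv.Perm.toList_getElem_zero p m hmmem
  refine ⟨⟨⟨h2, hnd, ?_⟩, hlne, ?_⟩, hform, htf⟩
  · intro t
    have hget : (canonList p).get (cyclicNext (canonList p) t) = p ((canonList p).get t) := by
      have h := List.formPerm_apply_getElem (canonList p) hnd t.1 t.isLt
      rw [hform] at h
      rw [List.get_eq_getElem, List.get_eq_getElem]
      exact h.symm
    rw [hget]
    have hmem : (canonList p).get t ∈ p.support := by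
      rw [← htf]
      apply List.mem_toFinset.2
      rw [List.get_eq_getElem]
      exact List.getElem_mem _
    have hmemσ : (canonList p).get t ∈ σ.support :=
      Equiv.Perm.mem_cycleFactorsFinset_support_le hp hmem
    rw [hagree _ hmem]
    exact hgood _ (Equiv.Perm.mem_support.1 hmemσ)
  · intro x hx
    rw [hhead]
    apply Finset.min'_le
    rw [← htf]
    exact List.mem_toFinset.2 hx

/-- The set of canonical cycle lists of a permutation. -/
noncomputable def invS (σ : Equiv.Perm (Fin n)) : Finset {l : List (Fin n) // l.Nodup} :=
  σ.cycleFactorsFinset.image (fun p => ⟨canonList p, nodup_canonList p⟩)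

theorem invS_sgood {σ : Equiv.Perm (Fin n)}
    (hgood : ∀ i, σ i ≠ i → 0 < M (σ i) i) : SGood M (invS σ) := by
  constructor
  · intro c hc
    obtain ⟨p, hp, rfl⟩ := Finset.mem_image.1 hc
    exact (invS_aux hgood hp).1
  · intro c hc c' hc' hne x hx hx'
    obtain ⟨p, hp, rfl⟩ := Finset.mem_image.1 hc
    obtain ⟨q, hq, rfl⟩ := Finset.mem_image.1 hc'
    have hpq : p ≠ q := fun h => hne (by rw [h])
    have hd := Equiv.Perm.cycleFactorsFinset_pairwise_disjoint σ hp hq hpq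
    rw [Equiv.Perm.disjoint_iff_disjoint_support] at hd
    have h1 : x ∈ p.support := by
      rw [← (invS_aux hgood hp).2.2]; exact List.mem_toFinset.2 hx
    have h2 : x ∈ q.support := by
      rw [← (invS_aux hgood hq).2.2]; exact List.mem_toFinset.2 hx'
    exact Finset.disjoint_left.1 hd h1 h2

theorem invS_permOfS {S : Finset {l : List (Fin n) // l.Nodup}} (hS : SGood M S) :
    invS (permOfS S) = S := by
  unfold invS
  rw [cycleFactors_permOfS hS, Finset.image_image]
  have : ∀ c ∈ S, ((fun p => (⟨canonList p, nodup_canonList p⟩ :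
      {l : List (Fin n) // l.Nodup})) ∘ (fun c : {l : List (Fin n) // l.Nodup} =>
        c.1.formPerm)) c = id c := by
    intro c hc
    obtain ⟨⟨h2, hnd, _⟩, hne, hmin⟩ := hS.1 c hc
    exact Subtype.ext (canonList_formPerm h2 hnd hne hmin)
  rw [Finset.image_congr this, Finset.image_id]

theorem permOfS_invS {σ : Equiv.Perm (Fin n)}
    (hgood : ∀ i, σ i ≠ i → 0 < M (σ i) i) : permOfS (invS σ) = σ := by
  have hS := invS_sgood (M := M) hgood
  rw [permOfS_eq hS]
  unfold invS
  have hinj : Set.InjOn (fun p => (⟨canonList p, nodup_canonList p⟩ :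
      {l : List (Fin n) // l.Nodup})) ↑σ.cycleFactorsFinset := by
    intro p hp q hq h
    have h1 := (invS_aux hgood (Finset.mem_coe.1 hp)).2.1
    have h2 := (invS_aux hgood (Finset.mem_coe.1 hq)).2.1
    rw [← h1, ← h2]
    congr 1
    exact congrArg Subtype.val h
  rw [noncommProd_image_of_injOn _ _ _ hinj]
  have : ∀ p ∈ σ.cycleFactorsFinset,
      (⟨canonList p, nodup_canonList p⟩ : {l : List (Fin n) // l.Nodup}).1.formPerm = id p :=
    fun p hp => (invS_aux hgood hp).2.1
  refine (Finset.noncommProd_congr rfl this _).trans ?_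
  exact Equiv.Perm.cycleFactorsFinset_noncommProd σ

/-- A permutation is good if all its moved entries are positive. -/
def GoodPerm (M : Matrix (Fin n) (Fin n) ℝ) (σ : Equiv.Perm (Fin n)) : Prop :=
  ∀ i, σ i ≠ i → 0 < M (σ i) i

theorem prod_neg_finset {ι : Type*} (s : Finset ι) (f : ι → ℝ) :
    ∏ i ∈ s, (-f i) = (-1 : ℝ) ^ s.card * ∏ i ∈ s, f i := by
  calc ∏ i ∈ s, (-f i) = ∏ i ∈ s, ((-1 : ℝ) * f i) :=
        Finset.prod_congr rfl (fun i _ => by ring)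
    _ = (∏ _i ∈ s, (-1 : ℝ)) * ∏ i ∈ s, f i := Finset.prod_mul_distrib
    _ = (-1 : ℝ) ^ s.card * ∏ i ∈ s, f i := by rw [Finset.prod_const]

theorem term_eq {S : Finset {l : List (Fin n) // l.Nodup}} (hS : SGood M S)
    (hdiag : ∀ i, M i i < 0) :
    ((Equiv.Perm.sign (permOfS S) : ℤ) : ℝ) * ∏ i, M (permOfS S i) i =
      (-1 : ℝ) ^ S.card * (∏ c ∈ S, cycleGain M c.1) * ∏ j, M j j := by
  classical
  set σ := permOfS S with hσ
  have hdisjf : (↑S : Set {l : List (Fin n) // l.Nodup}).Pairwise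
      (fun c c' => Disjoint c.1.toFinset c'.1.toFinset) := by
    intro c hc c' hc' hne
    have h' : Equiv.Perm.Disjoint c.1.formPerm c'.1.formPerm :=
      sgood_perm_disjoint hS hc hc' hne
    rw [Equiv.Perm.disjoint_iff_disjoint_support,
      support_formPerm_of_cycle (hS.1 c hc).1.1 (hS.1 c hc).1.2.1,
      support_formPerm_of_cycle (hS.1 c' hc').1.1 (hS.1 c' hc').1.2.1] at h'
    exact h'
  -- split any diagonal-type product over the support
  have hsplit : ∀ f : Fin n → Fin n → ℝ,
      (∀ i, i ∉ σ.support → f (σ i) i = f i i) →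
      ∏ i, f (σ i) i = (∏ c ∈ S, ∏ x ∈ c.1.toFinset, f (σ x) x) * ∏ i ∈ σ.supportᶜ, f i i := by
    intro f hf
    rw [← Finset.prod_mul_prod_compl σ.support (fun i => f (σ i) i)]
    congr 1
    · rw [support_permOfS hS, Finset.prod_biUnion (fun c hc c' hc' hne => hdisjf hc hc' hne)]
    · exact Finset.prod_congr rfl fun i hi => hf i (Finset.mem_compl.1 hi)
  have happly : ∀ c ∈ S, ∀ x ∈ c.1.toFinset, σ x = c.1.formPerm x :=
    fun c hc x hx => permOfS_apply_mem hS hc hx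
  -- the list-indexed version of per-cycle products
  have hlistprod : ∀ (c : {l : List (Fin n) // l.Nodup}) (g : Fin n → ℝ),
      ∏ x ∈ c.1.toFinset, g x = ∏ t : Fin c.1.length, g (c.1.get t) := by
    intro c g
    rw [List.prod_toFinset _ c.2, ← Fin.prod_univ_fun_getElem c.1 g]
    rfl
  -- edge products
  set E : {l : List (Fin n) // l.Nodup} → ℝ :=
    fun c => ∏ t : Fin c.1.length, M (c.1.get (cyclicNext c.1 t)) (c.1.get t) with hE
  set P : {l : List (Fin n) // l.Nodup} → ℝ :=
    fun c => ∏ t : Fin c.1.length, M (c.1.get t) (c.1.get t) with hP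
  have hPne : ∀ c : {l : List (Fin n) // l.Nodup}, P c ≠ 0 := by
    intro c
    apply Finset.prod_ne_zero_iff.2
    intro t _
    exact ne_of_lt (hdiag _)
  -- compute ∏ i, M (σ i) i
  have hprod : ∏ i, M (σ i) i = (∏ c ∈ S, E c) * ∏ i ∈ σ.supportᶜ, M i i := by
    rw [hsplit M (fun i hi => by rw [Equiv.Perm.notMem_support.1 hi])]
    congr 1
    apply Finset.prod_congr rfl
    intro c hc
    rw [Finset.prod_congr rfl (fun x hx => by rw [happly c hc x hx]), hlistprod c
      (fun x => M (c.1.formPerm x) x)]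
    apply Finset.prod_congr rfl
    intro t _
    rw [List.get_eq_getElem, List.formPerm_apply_getElem _ c.2]
    rfl
  -- compute ∏ j, M j j
  have hdiagprod : ∏ j, M j j = (∏ c ∈ S, P c) * ∏ i ∈ σ.supportᶜ, M i i := by
    rw [hsplit (fun _ i => M i i) (fun _ _ => rfl)]
    congr 1
    exact Finset.prod_congr rfl fun c hc => hlistprod c (fun x => M x x)
  -- sign
  have hsign : ((Equiv.Perm.sign σ : ℤ) : ℝ) = ∏ c ∈ S, (-(-1 : ℝ) ^ c.1.length) := by
    rw [hσ, permOfS_eq hS, Finset.map_noncommProd _ _ _ (Equiv.Perm.sign),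
      Finset.noncommProd_eq_prod]
    have : ∀ c ∈ S, Equiv.Perm.sign c.1.formPerm = -(-1 : ℤˣ) ^ c.1.length := by
      intro c hc
      rw [(List.isCycle_formPerm (hS.1 c hc).1.2.1 (hS.1 c hc).1.1).sign,
        support_formPerm_of_cycle (hS.1 c hc).1.1 (hS.1 c hc).1.2.1,
        List.toFinset_card_of_nodup c.2]
    rw [Finset.prod_congr rfl this]
    push_cast
    rfl
  -- gain times diagonal
  have hgain : ∀ c ∈ S, cycleGain M c.1 * P c = (-1 : ℝ) ^ c.1.length * E c := by
    intro c hc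
    have hre : ∏ t : Fin c.1.length,
        (-M (c.1.get (cyclicNext c.1 t)) (c.1.get (cyclicNext c.1 t))) =
        ∏ t : Fin c.1.length, (-M (c.1.get t) (c.1.get t)) :=
      prod_cyclicNext c.1 (fun t => -M (c.1.get t) (c.1.get t))
    have hgaineq : cycleGain M c.1 = E c / ((-1 : ℝ) ^ c.1.length * P c) := by
      rw [cycleGain, Finset.prod_div_distrib, hre, prod_neg_finset]
      rw [Finset.card_univ, Fintype.card_fin]
    rw [hgaineq]
    calc E c / ((-1 : ℝ) ^ c.1.length * P c) * P c
        = E c * ((-1 : ℝ) ^ c.1.length)⁻¹ * ((P c)⁻¹ * P c) := by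
          rw [div_eq_mul_inv, mul_inv]; ring
      _ = E c * ((-1 : ℝ) ^ c.1.length)⁻¹ := by rw [inv_mul_cancel₀ (hPne c), mul_one]
      _ = (-1 : ℝ) ^ c.1.length * E c := by rw [← inv_pow, inv_neg, inv_one]; ring
  -- put it together
  rw [hprod, hdiagprod, hsign]
  have hL : (∏ c ∈ S, (-(-1 : ℝ) ^ c.1.length)) =
      (-1 : ℝ) ^ S.card * ∏ c ∈ S, ((-1 : ℝ) ^ c.1.length) :=
    prod_neg_finset S _
  have hgains : (∏ c ∈ S, cycleGain M c.1) * (∏ c ∈ S, P c) =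
      (∏ c ∈ S, ((-1 : ℝ) ^ c.1.length)) * (∏ c ∈ S, E c) := by
    rw [← Finset.prod_mul_distrib, ← Finset.prod_mul_distrib,
      Finset.prod_congr rfl hgain]
  rw [hL]
  linear_combination (-((-1 : ℝ) ^ S.card * (∏ i ∈ σ.supportᶜ, M i i))) * hgains

end Aux

set_option maxHeartbeats 1000000 in
open scoped Classical in
theorem metzler_det_eq_one_sub_totalCycleGain {n : ℕ}
    (M : Matrix (Fin n) (Fin n) ℝ) (hM : Metzler M) (hdiag : ∀ i, M i i < 0) :
    M.det =
      (1 - ∑ S ∈ ((Finset.univ.filter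
            (fun l : {l : List (Fin n) // l.Nodup} => IsCanonicalCycle M l.1)).powerset.filter
            (fun S => S.Nonempty ∧
              ∀ c ∈ S, ∀ c' ∈ S, c ≠ c' →
                ∀ x : Fin n, x ∈ c.1 → x ∉ c'.1)),
          (-1 : ℝ) ^ (S.card - 1) * ∏ c ∈ S, cycleGain M c.1) *
        ∏ j, M j j := by
  set D := ((Finset.univ.filter
      (fun l : {l : List (Fin n) // l.Nodup} => IsCanonicalCycle M l.1)).powerset.filter
      (fun S => S.Nonempty ∧
        ∀ c ∈ S, ∀ c' ∈ S, c ≠ c' →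
          ∀ x : Fin n, x ∈ c.1 → x ∉ c'.1)) with hD
  have hDmem : ∀ S ∈ D, SGood M S ∧ S.Nonempty := by
    intro S hS
    rw [hD, Finset.mem_filter, Finset.mem_powerset] at hS
    refine ⟨⟨fun c hc => ?_, hS.2.2⟩, hS.2.1⟩
    have := hS.1 hc
    rw [Finset.mem_filter] at this
    exact this.2
  have hterm : ∀ σ : Equiv.Perm (Fin n),
      (Equiv.Perm.sign σ) • ∏ i, M (σ i) i = ((Equiv.Perm.sign σ : ℤ) : ℝ) * ∏ i, M (σ i) i :=
    fun σ => by simp [Units.smul_def, zsmul_eq_mul]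
  rw [Matrix.det_apply]
  simp_rw [hterm]
  -- restrict to "good" permutations
  have hzero : ∀ σ ∈ Finset.univ.filter (fun σ => ¬ GoodPerm M σ),
      ((Equiv.Perm.sign σ : ℤ) : ℝ) * ∏ i, M (σ i) i = 0 := by
    intro σ hσ
    rw [Finset.mem_filter] at hσ
    have hσ' := hσ.2
    unfold GoodPerm at hσ'
    push_neg at hσ'
    obtain ⟨i, hi, hle⟩ := hσ'
    have h0 : M (σ i) i = 0 := le_antisymm hle (hM _ _ (fun h => hi (by rw [h])))
    have hz : ∏ j, M (σ j) j = 0 := Finset.prod_eq_zero (Finset.mem_univ i) h0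
    rw [hz, mul_zero]
  rw [← Finset.sum_filter_add_sum_filter_not Finset.univ (GoodPerm M),
    Finset.sum_eq_zero hzero, add_zero]
  -- pull out the identity permutation
  have h1good : (1 : Equiv.Perm (Fin n)) ∈ Finset.univ.filter (GoodPerm M) := by
    rw [Finset.mem_filter]
    exact ⟨Finset.mem_univ _, fun i hi => absurd rfl hi⟩
  rw [← Finset.add_sum_erase _ _ h1good]
  have hid : ((Equiv.Perm.sign (1 : Equiv.Perm (Fin n)) : ℤ) : ℝ) *
      ∏ i, M ((1 : Equiv.Perm (Fin n)) i) i = ∏ j, M j j := by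
    simp
  rw [hid]
  -- the bijection between nontrivial good permutations and D
  have hbij : ∑ σ ∈ (Finset.univ.filter (GoodPerm M)).erase 1,
      ((Equiv.Perm.sign σ : ℤ) : ℝ) * ∏ i, M (σ i) i =
      ∑ S ∈ D, (-1 : ℝ) ^ S.card * (∏ c ∈ S, cycleGain M c.1) * ∏ j, M j j := by
    refine Finset.sum_nbij' (i := invS) (j := permOfS) ?_ ?_ ?_ ?_ ?_
    · -- invS maps into D
      intro σ hσ
      rw [Finset.mem_erase, Finset.mem_filter] at hσ
      obtain ⟨hne1, _, hg⟩ := hσ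
      have hS := invS_sgood (M := M) hg
      rw [hD, Finset.mem_filter, Finset.mem_powerset]
      refine ⟨?_, ?_, hS.2⟩
      · intro c hc
        rw [Finset.mem_filter]
        exact ⟨Finset.mem_univ _, hS.1 c hc⟩
      · exact Finset.Nonempty.image (by
          rw [Finset.nonempty_iff_ne_empty, Ne, Equiv.Perm.cycleFactorsFinset_eq_empty_iff]
          exact hne1) _
    · -- permOfS maps into good nontrivial permutations
      intro S hS
      obtain ⟨hSg, hSne⟩ := hDmem S hS
      rw [Finset.mem_erase, Finset.mem_filter]
      exact ⟨permOfS_ne_one hSg hSne, Finset.mem_univ _, good_permOfS hSg⟩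
    · intro σ hσ
      rw [Finset.mem_erase, Finset.mem_filter] at hσ
      exact permOfS_invS hσ.2.2
    · intro S hS
      exact invS_permOfS (hDmem S hS).1
    · intro σ hσ
      rw [Finset.mem_erase, Finset.mem_filter] at hσ
      have hg := hσ.2.2
      conv_lhs => rw [← permOfS_invS (M := M) hg]
      exact term_eq (invS_sgood hg) hdiag
  rw [hbij, sub_mul, one_mul, Finset.sum_mul]
  have hsum : ∑ S ∈ D, (-1 : ℝ) ^ S.card * (∏ c ∈ S, cycleGain M c.1) * ∏ j, M j j =
      -∑ S ∈ D, (-1 : ℝ) ^ (S.card - 1) * (∏ c ∈ S, cycleGain M c.1) * ∏ j, M j j := by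
    rw [← Finset.sum_neg_distrib]
    apply Finset.sum_congr rfl
    intro S hS
    have hpos : 1 ≤ S.card := Finset.card_pos.2 (hDmem S hS).2
    have hcard : (-1 : ℝ) ^ S.card = -(-1 : ℝ) ^ (S.card - 1) := by
      have h1 : S.card = (S.card - 1) + 1 := by omega
      rw [h1, pow_succ]
      have h2 : S.card - 1 + 1 - 1 = S.card - 1 := by omega
      rw [h2]
      ring
    rw [hcard]
    ring
  rw [hsum]
  ring
end

section
/- Let M be an n×n Metzler matrix (n ≥ 2) with negative diagonal entries, partitioned as M = [[M', b],[cᵀ, d]] where d < 0 is a scalar, b ≥ 0 is a column vector and cᵀ ≥ 0 a row vector. Then M is Hurwitz if and only if the Schur complement M' − (b cᵀ)/d is a Metzler matrix that is Hurwitz. -/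
open Matrix Filter Topology

lemma eigvec_of_mem_spectrum {n : ℕ} (M : Matrix (Fin n) (Fin n) ℂ) {μ : ℂ}
    (h : μ ∈ spectrum ℂ M) : ∃ v : Fin n → ℂ, v ≠ 0 ∧ M.mulVec v = μ • v := by
  rw [spectrum.mem_iff] at h
  have hdet : (algebraMap ℂ (Matrix (Fin n) (Fin n) ℂ) μ - M).det = 0 := by
    by_contra hd
    exact h ((Matrix.isUnit_iff_isUnit_det _).2 (isUnit_iff_ne_zero.2 hd))
  obtain ⟨v, hv0, hv⟩ := (Matrix.exists_mulVec_eq_zero_iff).2 hdet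
  refine ⟨v, hv0, ?_⟩
  rw [sub_mulVec] at hv
  have h1 : (algebraMap ℂ (Matrix (Fin n) (Fin n) ℂ) μ).mulVec v = μ • v := by
    ext i
    simp [Matrix.algebraMap_eq_diagonal, mulVec_diagonal, Pi.algebraMap_apply,
      Algebra.algebraMap_self_apply]
  rw [h1] at hv
  have := sub_eq_zero.mp hv
  exact this.symm

lemma mem_spectrum_of_eigvec {n : ℕ} (M : Matrix (Fin n) (Fin n) ℝ) {l : ℝ} {v : Fin n → ℝ}
    (hv : v ≠ 0) (h : M.mulVec v = l • v) : (l : ℂ) ∈ spectrum ℂ (M.map Complex.ofReal) := by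
  rw [spectrum.mem_iff]
  intro hu
  have hdet := (Matrix.isUnit_iff_isUnit_det _).1 hu
  have hdetR : (algebraMap ℝ (Matrix (Fin n) (Fin n) ℝ) l - M).det = 0 := by
    rw [← Matrix.exists_mulVec_eq_zero_iff]
    refine ⟨v, hv, ?_⟩
    rw [sub_mulVec, h]
    have h2 : (algebraMap ℝ (Matrix (Fin n) (Fin n) ℝ) l).mulVec v = l • v := by
      ext i
      simp [Matrix.algebraMap_eq_diagonal, mulVec_diagonal, Pi.algebraMap_apply,
        Algebra.algebraMap_self_apply]
    rw [h2, sub_self]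
  have hmap : (algebraMap ℂ (Matrix (Fin n) (Fin n) ℂ) (l:ℂ) - M.map Complex.ofReal)
      = (algebraMap ℝ (Matrix (Fin n) (Fin n) ℝ) l - M).map Complex.ofReal := by
    ext i j
    simp [Matrix.algebraMap_eq_diagonal, Matrix.diagonal, Matrix.map_apply]
    split <;> simp
  rw [hmap] at hdet
  have h3 : ((algebraMap ℝ (Matrix (Fin n) (Fin n) ℝ) l - M).map Complex.ofReal).det = 0 := by
    rw [show (Complex.ofReal : ℝ → ℂ) = ⇑Complex.ofRealHom from rfl, ← RingHom.mapMatrix_apply, ← RingHom.map_det, hdetR,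
      map_zero]
  rw [h3] at hdet
  simp at hdet

lemma hurwitz_of_exists_pos {n : ℕ} {M : Matrix (Fin n) (Fin n) ℝ} (hM : Metzler M)
    {x : Fin n → ℝ} (hx : ∀ i, 0 < x i) (hMx : ∀ i, M.mulVec x i < 0) : Hurwitz M := by
  intro μ hμ
  obtain ⟨v, hv0, hveq⟩ := eigvec_of_mem_spectrum _ hμ
  -- pick index maximizing ‖v i‖ / x i
  obtain ⟨j, hvj⟩ : ∃ j, v j ≠ 0 := by
    by_contra hc; push_neg at hc; exact hv0 (funext hc)
  obtain ⟨i0, -, hi0⟩ := Finset.exists_max_image Finset.univ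
    (fun i => ‖v i‖ / x i) ⟨j, Finset.mem_univ j⟩
  set t : ℝ := ‖v i0‖ / x i0 with ht
  have htpos : 0 < t := by
    have h1 : 0 < ‖v j‖ / x j :=
      div_pos (by simpa using hvj) (hx j)
    exact lt_of_lt_of_le h1 (hi0 j (Finset.mem_univ j))
  have hvle : ∀ i, ‖v i‖ ≤ t * x i := by
    intro i
    have := hi0 i (Finset.mem_univ i)
    calc ‖v i‖ = (‖v i‖ / x i) * x i :=
          (div_mul_cancel₀ _ (ne_of_gt (hx i))).symm
      _ ≤ t * x i := mul_le_mul_of_nonneg_right this (le_of_lt (hx i))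
  have hvi0 : ‖v i0‖ = t * x i0 := by
    rw [ht]; exact (div_mul_cancel₀ _ (ne_of_gt (hx i0))).symm
  -- row i0 of the eigenvalue equation
  have hrow : ∑ k, (M i0 k : ℂ) * v k = μ * v i0 := by
    have := congrFun hveq i0
    simpa [mulVec, dotProduct, Matrix.map_apply] using this
  have hsplit : (μ - (M i0 i0 : ℂ)) * v i0
      = ∑ k ∈ Finset.univ.erase i0, (M i0 k : ℂ) * v k := by
    have h := Finset.add_sum_erase Finset.univ (fun k => (M i0 k : ℂ) * v k)
      (Finset.mem_univ i0)
    rw [← h] at hrow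
    beta_reduce at hrow
    linear_combination -hrow
  have habs : ‖μ - (M i0 i0 : ℂ)‖ * (t * x i0)
      ≤ ∑ k ∈ Finset.univ.erase i0, M i0 k * (t * x k) := by
    calc ‖μ - (M i0 i0 : ℂ)‖ * (t * x i0)
        = ‖(μ - (M i0 i0 : ℂ)) * v i0‖ := by
          rw [norm_mul, hvi0]
      _ ≤ ∑ k ∈ Finset.univ.erase i0, ‖(M i0 k : ℂ) * v k‖ := by
          rw [hsplit]; exact norm_sum_le _ _
      _ ≤ ∑ k ∈ Finset.univ.erase i0, M i0 k * (t * x k) := by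
          apply Finset.sum_le_sum
          intro k hk
          have hMk : 0 ≤ M i0 k := hM i0 k (fun h => (Finset.mem_erase.mp hk).1 h.symm) 
          rw [norm_mul]
          simp only [Complex.norm_real, Real.norm_eq_abs, abs_of_nonneg hMk]
          exact mul_le_mul_of_nonneg_left (hvle k) hMk
  have hsum : ∑ k ∈ Finset.univ.erase i0, M i0 k * (t * x k)
      = t * (M.mulVec x i0 - M i0 i0 * x i0) := by
    have hmv : M.mulVec x i0 = M i0 i0 * x i0 + ∑ k ∈ Finset.univ.erase i0, M i0 k * x k := by
      rw [mulVec, dotProduct, ← Finset.add_sum_erase Finset.univ _ (Finset.mem_univ i0)]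
    rw [hmv, add_sub_cancel_left, Finset.mul_sum]
    exact Finset.sum_congr rfl fun k _ => by ring
  have hkey : ‖μ - (M i0 i0 : ℂ)‖ < - M i0 i0 := by
    have h2 : t * (M.mulVec x i0 - M i0 i0 * x i0) < t * (- M i0 i0 * x i0) := by
      apply mul_lt_mul_of_pos_left _ htpos
      have := hMx i0; linarith
    have h3 : ‖μ - (M i0 i0 : ℂ)‖ * (t * x i0) < (- M i0 i0) * (t * x i0) := by
      rw [hsum] at habs
      calc ‖μ - (M i0 i0 : ℂ)‖ * (t * x i0) ≤ _ := habs
        _ < t * (- M i0 i0 * x i0) := h2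
        _ = (- M i0 i0) * (t * x i0) := by ring
    exact lt_of_mul_lt_mul_right h3 (le_of_lt (mul_pos htpos (hx i0)))
  have hre : μ.re - M i0 i0 ≤ ‖μ - (M i0 i0 : ℂ)‖ := by
    have := Complex.re_le_norm (μ - (M i0 i0 : ℂ))
    simpa using this
  linarith

lemma exists_pos_of_hurwitz {n : ℕ} {M : Matrix (Fin n) (Fin n) ℝ} (hM : Metzler M)
    (hH : Hurwitz M) : ∃ x : Fin n → ℝ, (∀ i, 0 < x i) ∧ ∀ i, M.mulVec x i < 0 := by
  rcases isEmpty_or_nonempty (Fin n) with he | hne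
  · exact ⟨fun _ => 1, fun i => isEmptyElim i, fun i => isEmptyElim i⟩
  have hn0 : 0 < n := Fin.pos_iff_nonempty.mpr hne
  have hnR : 0 < (n : ℝ) := by exact_mod_cast hn0
  -- the shift s and the nonnegative matrix A
  set s : ℝ := ∑ i, |M i i| with hs
  have hsge : ∀ i, -M i i ≤ s := fun i =>
    le_trans (neg_le_abs _) (Finset.single_le_sum (f := fun i => |M i i|)
      (fun j _ => abs_nonneg _) (Finset.mem_univ i))
  set A : Matrix (Fin n) (Fin n) ℝ := fun i j => M i j + if i = j then s else 0 with hA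
  have hA0 : ∀ i j, 0 ≤ A i j := by
    intro i j
    by_cases hij : i = j
    · subst hij
      have hAe : A i i = M i i + s := by rw [hA]; simp
      rw [hAe]; linarith [hsge i]
    · have hAe : A i j = M i j := by rw [hA]; simp [hij]
      rw [hAe]; exact hM i j hij
  have hAmul : ∀ (x : Fin n → ℝ) i, A.mulVec x i = M.mulVec x i + s * x i := by
    intro x i
    simp only [hA, mulVec, dotProduct, add_mul, ite_mul, zero_mul, Finset.sum_add_distrib]
    congr 1
    rw [Finset.sum_ite_eq Finset.univ i (fun j => s * x j)]
    simp
  have hAmulnn : ∀ (x : Fin n → ℝ), (∀ i, 0 ≤ x i) → ∀ i, 0 ≤ A.mulVec x i := by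
    intro x hx i
    simp only [mulVec, dotProduct]
    exact Finset.sum_nonneg fun j _ => mul_nonneg (hA0 i j) (hx j)
  -- the simplex
  set Δ : Set (Fin n → ℝ) := {y | (∀ i, 0 ≤ y i) ∧ ∑ i, y i = 1} with hΔ
  have hsumcont : Continuous (fun y : Fin n → ℝ => ∑ i, y i) :=
    continuous_finset_sum _ fun i _ => continuous_apply i
  have hΔclosed : IsClosed Δ := by
    have : Δ = (⋂ i, {y : Fin n → ℝ | 0 ≤ y i}) ∩ {y | ∑ i, y i = 1} := by
      ext y; simp [hΔ, Set.mem_iInter, forall_and]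
    rw [this]
    exact IsClosed.inter (isClosed_iInter fun i =>
      isClosed_le continuous_const (continuous_apply i))
      (isClosed_eq hsumcont continuous_const)
  have hΔle1 : ∀ y ∈ Δ, ∀ i, y i ≤ 1 := by
    intro y hy i
    calc y i ≤ ∑ j, y j := Finset.single_le_sum (fun j _ => hy.1 j) (Finset.mem_univ i)
      _ = 1 := hy.2
  have hΔc : IsCompact Δ := by
    apply Metric.isCompact_of_isClosed_isBounded hΔclosed
    apply Bornology.IsBounded.subset (Metric.isBounded_closedBall (x := (0 : Fin n → ℝ)) (r := 1))
    intro y hy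
    simp only [Metric.mem_closedBall, dist_zero_right]
    rw [pi_norm_le_iff_of_nonneg zero_le_one]
    intro i
    rw [Real.norm_eq_abs, abs_of_nonneg (hy.1 i)]
    exact hΔle1 y hy i
  -- the perturbed matrices
  set eps : ℕ → ℝ := fun k => 1 / (k + 1) with heps
  have heps0 : ∀ k, 0 < eps k := fun k => by positivity
  have heps1 : ∀ k, eps k ≤ 1 := fun k => by
    simp only [heps]; rw [div_le_one (by positivity)]; push_cast; linarith
  set B : ℕ → Matrix (Fin n) (Fin n) ℝ := fun k => fun i j => A i j + eps k with hB
  have hBpos : ∀ k i j, 0 < B k i j := fun k i j => lt_of_lt_of_le (heps0 k)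
    (by simp only [hB]; linarith [hA0 i j])
  have hBmul : ∀ k (y : Fin n → ℝ) i, (B k).mulVec y i = A.mulVec y i + eps k * ∑ j, y j := by
    intro k y i
    simp only [hB, mulVec, dotProduct, add_mul, Finset.sum_add_distrib, Finset.mul_sum]
  -- the uniform bound C
  set C : ℝ := n * ∑ i, ∑ j, (A i j + 1) with hC
  have hfeas : ∀ (k : ℕ) (t : ℝ) (y : Fin n → ℝ), 0 ≤ t → y ∈ Δ →
      (∀ i, t * y i ≤ (B k).mulVec y i) → t ≤ C := by
    intro k t y ht hy hineq
    obtain ⟨i, -, hi⟩ : ∃ i ∈ Finset.univ, (1:ℝ)/n ≤ y i := by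
      apply Finset.exists_le_of_sum_le Finset.univ_nonempty
      rw [hy.2, Finset.sum_const, Finset.card_univ, Fintype.card_fin, nsmul_eq_mul]
      rw [mul_one_div, div_self (ne_of_gt hnR)]
    have h1 : t * (1/n) ≤ (B k).mulVec y i := le_trans
      (mul_le_mul_of_nonneg_left hi ht) (hineq i)
    have h2 : (B k).mulVec y i ≤ ∑ j, (A i j + 1) := by
      simp only [mulVec, dotProduct]
      apply Finset.sum_le_sum
      intro j _
      calc B k i j * y j ≤ (A i j + 1) * 1 := by
            apply mul_le_mul _ (hΔle1 y hy j) (hy.1 j) (by linarith [hA0 i j])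
            simp only [hB]; linarith [heps1 k]
        _ = A i j + 1 := mul_one _
    have h3 : ∑ j, (A i j + 1) ≤ ∑ i, ∑ j, (A i j + 1) :=
      Finset.single_le_sum (f := fun i => ∑ j, (A i j + 1))
        (fun i _ => Finset.sum_nonneg fun j _ => by linarith [hA0 i j]) (Finset.mem_univ i)
    have h4 : t * (1/n) ≤ ∑ i, ∑ j, (A i j + 1) := le_trans h1 (le_trans h2 h3)
    rw [hC]
    calc t = n * (t * (1/n)) := by field_simp
      _ ≤ n * ∑ i, ∑ j, (A i j + 1) := mul_le_mul_of_nonneg_left h4 (le_of_lt hnR)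
  -- the feasible sets
  set K : ℕ → Set (ℝ × (Fin n → ℝ)) := fun k =>
    {q | (0 ≤ q.1 ∧ q.1 ≤ C) ∧ q.2 ∈ Δ ∧ ∀ i, q.1 * q.2 i ≤ (B k).mulVec q.2 i} with hK
  have hmvcont : ∀ (N : Matrix (Fin n) (Fin n) ℝ) i,
      Continuous (fun y : Fin n → ℝ => N.mulVec y i) := by
    intro N i
    simp only [mulVec, dotProduct]
    exact continuous_finset_sum _ fun j _ => continuous_const.mul (continuous_apply j)
  have hKc : ∀ k, IsCompact (K k) := by
    intro k
    apply IsCompact.of_isClosed_subset ((isCompact_Icc (a := (0:ℝ)) (b := C)).prod hΔc)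
    · apply IsClosed.inter
      · apply IsClosed.inter (isClosed_le continuous_const continuous_fst)
          (isClosed_le continuous_fst continuous_const)
      apply IsClosed.inter (hΔclosed.preimage continuous_snd)
      have hset : {p : ℝ × (Fin n → ℝ) | ∀ i, p.1 * p.2 i ≤ (B k).mulVec p.2 i}
          = ⋂ i, {p : ℝ × (Fin n → ℝ) | p.1 * p.2 i ≤ (B k).mulVec p.2 i} := by
        ext p; simp [Set.mem_iInter]
      show IsClosed {p : ℝ × (Fin n → ℝ) | ∀ i, p.1 * p.2 i ≤ (B k).mulVec p.2 i}
      rw [hset]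
      apply isClosed_iInter
      intro i
      exact isClosed_le (continuous_fst.mul ((continuous_apply i).comp continuous_snd))
        ((hmvcont (B k) i).comp continuous_snd)
    · rintro ⟨t, y⟩ ⟨⟨h1, h2⟩, h3, -⟩
      exact ⟨⟨h1, h2⟩, h3⟩
  have hKne : ∀ k, (K k).Nonempty := by
    intro k
    refine ⟨(0, fun _ => (n:ℝ)⁻¹), ⟨le_refl 0, ?_⟩, ⟨fun i => by positivity, ?_⟩, ?_⟩
    · rw [hC]
      apply mul_nonneg (le_of_lt hnR)
      exact Finset.sum_nonneg fun i _ => Finset.sum_nonneg fun j _ => by linarith [hA0 i j]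
    · rw [Finset.sum_const, Finset.card_univ, Fintype.card_fin, nsmul_eq_mul,
        mul_inv_cancel₀ (ne_of_gt hnR)]
    · intro i
      simp only [zero_mul, mulVec, dotProduct]
      exact Finset.sum_nonneg fun j _ => mul_nonneg (le_of_lt (hBpos k i j)) (by positivity)
  have hmaxex : ∀ k, ∃ q, q ∈ K k ∧ ∀ q' ∈ K k, q'.1 ≤ q.1 := by
    intro k
    obtain ⟨q, hq, hqmax⟩ := (hKc k).exists_isMaxOn (hKne k) continuous_fst.continuousOn
    exact ⟨q, hq, fun q' hq' => hqmax hq'⟩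
  choose q hqK hqmax using hmaxex
  -- eigen-equation for the maximizers
  have heig : ∀ k i, (B k).mulVec (q k).2 i = (q k).1 * (q k).2 i := by
    intro k
    by_contra hc
    push_neg at hc
    obtain ⟨i1, hi1⟩ := hc
    have hy : (q k).2 ∈ Δ := (hqK k).2.1
    have ht0 : 0 ≤ (q k).1 := (hqK k).1.1
    have hineq : ∀ i, (q k).1 * (q k).2 i ≤ (B k).mulVec (q k).2 i := (hqK k).2.2
    have hi1' : (q k).1 * (q k).2 i1 < (B k).mulVec (q k).2 i1 :=
      lt_of_le_of_ne (hineq i1) (fun h => hi1 h.symm)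
    set w : Fin n → ℝ := (B k).mulVec (q k).2 with hw
    have hyj : ∃ j, 0 < (q k).2 j := by
      by_contra hcon
      push_neg at hcon
      have hz : ∑ i, (q k).2 i = 0 :=
        Finset.sum_eq_zero fun j _ => le_antisymm (hcon j) (hy.1 j)
      rw [hy.2] at hz; exact one_ne_zero hz
    obtain ⟨j0, hj0⟩ := hyj
    have hwpos : ∀ i, 0 < w i := by
      intro i
      rw [hw]
      simp only [mulVec, dotProduct]
      apply Finset.sum_pos' (fun j _ => mul_nonneg (le_of_lt (hBpos k i j)) (hy.1 j))
      exact ⟨j0, Finset.mem_univ j0, mul_pos (hBpos k i j0) hj0⟩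
    have hBw : ∀ i, (q k).1 * w i < (B k).mulVec w i := by
      intro i
      have hstep : ∑ j, B k i j * ((q k).1 * (q k).2 j) < ∑ j, B k i j * w j := by
        apply Finset.sum_lt_sum
        · exact fun j _ => mul_le_mul_of_nonneg_left (hineq j) (le_of_lt (hBpos k i j))
        · exact ⟨i1, Finset.mem_univ i1, mul_lt_mul_of_pos_left hi1' (hBpos k i i1)⟩
      calc (q k).1 * w i = ∑ j, B k i j * ((q k).1 * (q k).2 j) := by
            rw [hw]
            simp only [mulVec, dotProduct, Finset.mul_sum]
            exact Finset.sum_congr rfl fun j _ => by ring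
        _ < ∑ j, B k i j * w j := hstep
        _ = (B k).mulVec w i := by simp only [mulVec, dotProduct]
    set t' : ℝ := Finset.univ.inf' Finset.univ_nonempty (fun i => (B k).mulVec w i / w i)
      with ht'
    have htlt : (q k).1 < t' := by
      rw [ht', Finset.lt_inf'_iff]
      intro i _
      rw [lt_div_iff₀ (hwpos i)]
      exact hBw i
    have ht'w : ∀ i, t' * w i ≤ (B k).mulVec w i := by
      intro i
      have hle : t' ≤ (B k).mulVec w i / w i := by
        rw [ht']
        exact Finset.inf'_le _ (Finset.mem_univ i)
      calc t' * w i ≤ ((B k).mulVec w i / w i) * w i :=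
            mul_le_mul_of_nonneg_right hle (le_of_lt (hwpos i))
        _ = (B k).mulVec w i := div_mul_cancel₀ _ (ne_of_gt (hwpos i))
    set σ : ℝ := ∑ i, w i with hσ
    have hσpos : 0 < σ := Finset.sum_pos (fun i _ => hwpos i) Finset.univ_nonempty
    have hwΔ : (fun i => w i / σ) ∈ Δ := by
      constructor
      · intro i; exact div_nonneg (le_of_lt (hwpos i)) (le_of_lt hσpos)
      · rw [← Finset.sum_div, ← hσ, div_self (ne_of_gt hσpos)]
    have hfeasw : ∀ i, t' * ((fun i => w i / σ) i) ≤ (B k).mulVec (fun i => w i / σ) i := by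
      intro i
      have hsmul : (B k).mulVec (fun i => w i / σ) i = (B k).mulVec w i / σ := by
        simp only [mulVec, dotProduct, Finset.sum_div]
        exact Finset.sum_congr rfl fun j _ => by ring
      rw [hsmul, ← mul_div_assoc]
      gcongr
      exact ht'w i
    have ht'0 : 0 ≤ t' := le_trans ht0 (le_of_lt htlt)
    have hmem : (t', fun i => w i / σ) ∈ K k :=
      ⟨⟨ht'0, hfeas k t' _ ht'0 hwΔ hfeasw⟩, hwΔ, hfeasw⟩
    have hle := hqmax k _ hmem
    simp only at hle
    linarith
  -- the eigen-equation in terms of A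
  have heq : ∀ k i, A.mulVec (q k).2 i + eps k = (q k).1 * (q k).2 i := by
    intro k i
    have h1 := heig k i
    rw [hBmul k (q k).2 i, (hqK k).2.1.2, mul_one] at h1
    exact h1
  -- r is antitone
  have hant : ∀ k, (q (k+1)).1 ≤ (q k).1 := by
    intro k
    apply hqmax k
    refine ⟨(hqK (k+1)).1, (hqK (k+1)).2.1, ?_⟩
    intro i
    calc (q (k+1)).1 * (q (k+1)).2 i ≤ (B (k+1)).mulVec (q (k+1)).2 i := (hqK (k+1)).2.2 i
      _ ≤ (B k).mulVec (q (k+1)).2 i := by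
          rw [hBmul, hBmul, (hqK (k+1)).2.1.2, mul_one, mul_one]
          have : eps (k+1) ≤ eps k := by
            simp only [heps]
            apply one_div_le_one_div_of_le (by positivity)
            push_cast; linarith
          linarith
  have hrant : Antitone (fun k => (q k).1) := antitone_nat_of_succ_le hant
  have hrbd : BddBelow (Set.range (fun k => (q k).1)) := by
    refine ⟨0, ?_⟩
    rintro x ⟨k, rfl⟩
    exact (hqK k).1.1
  set rstar : ℝ := ⨅ k, (q k).1 with hrstar
  have hrtend : Tendsto (fun k => (q k).1) atTop (𝓝 rstar) := tendsto_atTop_ciInf hrant hrbd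
  -- convergent subsequence of the maximizing vectors
  obtain ⟨xstar, hxΔ, φ, hφmono, hxtend⟩ := hΔc.tendsto_subseq (fun k => (hqK k).2.1)
  have hepsφ : Tendsto (fun k => eps (φ k)) atTop (𝓝 0) := by
    have hb : ∀ k : ℕ, eps (φ k) ≤ 1 / ((k:ℝ) + 1) := by
      intro k
      simp only [heps]
      apply one_div_le_one_div_of_le (by positivity)
      have h : (k:ℝ) ≤ (φ k : ℝ) := by exact_mod_cast hφmono.le_apply
      linarith
    exact squeeze_zero (fun k => le_of_lt (heps0 (φ k))) hb
      tendsto_one_div_add_atTop_nhds_zero_nat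
  have hAx : ∀ i, A.mulVec xstar i = rstar * xstar i := by
    intro i
    have h1 : Tendsto (fun k => A.mulVec ((q (φ k)).2) i + eps (φ k)) atTop
        (𝓝 (A.mulVec xstar i)) := by
      have hc := ((hmvcont A i).tendsto xstar).comp hxtend
      simpa using hc.add hepsφ
    have h2 : Tendsto (fun k => (q (φ k)).1 * (q (φ k)).2 i) atTop (𝓝 (rstar * xstar i)) := by
      apply Tendsto.mul (hrtend.comp (hφmono.tendsto_atTop))
      exact ((continuous_apply i).tendsto xstar).comp hxtend
    have hfe : (fun k => A.mulVec ((q (φ k)).2) i + eps (φ k))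
        = (fun k => (q (φ k)).1 * (q (φ k)).2 i) := funext fun k => heq (φ k) i
    rw [hfe] at h1
    exact tendsto_nhds_unique h1 h2
  have hx0 : xstar ≠ 0 := by
    intro h
    have h1 := hxΔ.2
    rw [h] at h1
    simp at h1
  have hMx : M.mulVec xstar = (rstar - s) • xstar := by
    ext i
    have h1 := hAmul xstar i
    rw [hAx i] at h1
    simp only [Pi.smul_apply, smul_eq_mul]
    linarith
  have hrs : rstar < s := by
    have hsp := hH _ (mem_spectrum_of_eigvec M hx0 hMx)
    rw [Complex.ofReal_re] at hsp
    linarith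
  obtain ⟨k, hk⟩ := (hrtend.eventually_lt_const hrs).exists
  have hxpos : ∀ i, 0 < (q k).2 i := by
    intro i
    have h1 := heq k i
    have h2 : 0 < (q k).1 * (q k).2 i := by
      have := hAmulnn (q k).2 (hqK k).2.1.1 i
      linarith [heps0 k]
    by_contra hcon
    push_neg at hcon
    have : (q k).1 * (q k).2 i ≤ 0 := mul_nonpos_of_nonneg_of_nonpos (hqK k).1.1 hcon
    linarith
  refine ⟨(q k).2, hxpos, ?_⟩
  intro i
  have h1 := heq k i
  have h2 := hAmul (q k).2 i
  have h3 : ((q k).1 - s) * (q k).2 i < 0 :=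
    mul_neg_of_neg_of_pos (by linarith) (hxpos i)
  nlinarith [heps0 k]

/-- Schur-complement step: an (n+1)×(n+1) Metzler matrix with negative diagonal,
written with last row/column singled out, is Hurwitz iff the Schur complement
M' − b cᵀ / d is a Metzler matrix that is Hurwitz. -/
theorem metzler_hurwitz_iff_schur_complement {n : ℕ}
    (M : Matrix (Fin (n + 1)) (Fin (n + 1)) ℝ)
    (hM : Metzler M) (hdiag : ∀ i, M i i < 0) :
    Hurwitz M ↔
      (Metzler (fun i j : Fin n =>
          M i.castSucc j.castSucc -
            M i.castSucc (Fin.last n) * M (Fin.last n) j.castSucc / M (Fin.last n) (Fin.last n)) ∧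
       Hurwitz (fun i j : Fin n =>
          M i.castSucc j.castSucc -
            M i.castSucc (Fin.last n) * M (Fin.last n) j.castSucc / M (Fin.last n) (Fin.last n))) := by
  set S : Matrix (Fin n) (Fin n) ℝ := fun i j : Fin n =>
      M i.castSucc j.castSucc -
        M i.castSucc (Fin.last n) * M (Fin.last n) j.castSucc / M (Fin.last n) (Fin.last n)
    with hS
  have hdneg : M (Fin.last n) (Fin.last n) < 0 := hdiag _
  have hbnn : ∀ i : Fin n, 0 ≤ M i.castSucc (Fin.last n) :=
    fun i => hM _ _ (Fin.castSucc_lt_last i).ne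
  have hcnn : ∀ j : Fin n, 0 ≤ M (Fin.last n) j.castSucc :=
    fun j => hM _ _ (Fin.castSucc_lt_last j).ne'
  have hSM : Metzler S := by
    intro i j hij
    have h1 : (0:ℝ) ≤ M i.castSucc j.castSucc := by
      apply hM
      simpa [Fin.castSucc_inj] using hij
    have h2 : M i.castSucc (Fin.last n) * M (Fin.last n) j.castSucc
        / M (Fin.last n) (Fin.last n) ≤ 0 :=
      div_nonpos_of_nonneg_of_nonpos (mul_nonneg (hbnn i) (hcnn j)) (le_of_lt hdneg)
    have h3 : S i j = M i.castSucc j.castSucc -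
        M i.castSucc (Fin.last n) * M (Fin.last n) j.castSucc / M (Fin.last n) (Fin.last n) := by
      rw [hS]
    rw [h3]
    linarith
  have hsplit : ∀ (x : Fin (n+1) → ℝ) (i : Fin n), M.mulVec x i.castSucc
      = (∑ j : Fin n, M i.castSucc j.castSucc * x j.castSucc)
        + M i.castSucc (Fin.last n) * x (Fin.last n) := by
    intro x i
    simp only [mulVec, dotProduct]
    exact Fin.sum_univ_castSucc (f := fun j => M i.castSucc j * x j)
  have hsplitlast : ∀ (x : Fin (n+1) → ℝ), M.mulVec x (Fin.last n)
      = (∑ j : Fin n, M (Fin.last n) j.castSucc * x j.castSucc)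
        + M (Fin.last n) (Fin.last n) * x (Fin.last n) := by
    intro x
    simp only [mulVec, dotProduct]
    exact Fin.sum_univ_castSucc (f := fun j => M (Fin.last n) j * x j)
  have hSmul : ∀ (y : Fin n → ℝ) (i : Fin n), S.mulVec y i
      = (∑ j : Fin n, M i.castSucc j.castSucc * y j)
        - M i.castSucc (Fin.last n) * (∑ j : Fin n, M (Fin.last n) j.castSucc * y j)
          / M (Fin.last n) (Fin.last n) := by
    intro y i
    have hterm : ∀ j : Fin n, S i j * y j = M i.castSucc j.castSucc * y j
        - M i.castSucc (Fin.last n) * (M (Fin.last n) j.castSucc * y j)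
          / M (Fin.last n) (Fin.last n) := by
      intro j
      have h3 : S i j = M i.castSucc j.castSucc -
          M i.castSucc (Fin.last n) * M (Fin.last n) j.castSucc
            / M (Fin.last n) (Fin.last n) := by rw [hS]
      rw [h3]; ring
    simp only [mulVec, dotProduct]
    rw [Finset.sum_congr rfl (fun j _ => hterm j), Finset.sum_sub_distrib,
      ← Finset.sum_div, ← Finset.mul_sum]
  constructor
  · -- forward
    intro hHM
    refine ⟨hSM, ?_⟩
    obtain ⟨x, hxpos, hxneg⟩ := exists_pos_of_hurwitz hM hHM
    apply hurwitz_of_exists_pos hSM (x := fun i => x i.castSucc) (fun i => hxpos _)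
    intro i
    have hrow := hxneg i.castSucc
    rw [hsplit] at hrow
    have hlast := hxneg (Fin.last n)
    rw [hsplitlast] at hlast
    have hγ : 0 ≤ ∑ j : Fin n, M (Fin.last n) j.castSucc * x j.castSucc :=
      Finset.sum_nonneg fun j _ => mul_nonneg (hcnn j) (le_of_lt (hxpos _))
    rw [hSmul]
    have h1 : -(x (Fin.last n)) < (∑ j : Fin n, M (Fin.last n) j.castSucc * x j.castSucc)
        / M (Fin.last n) (Fin.last n) := by
      rw [lt_div_iff_of_neg hdneg]
      nlinarith [hlast]
    have h2 : M i.castSucc (Fin.last n) *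
        (-((∑ j : Fin n, M (Fin.last n) j.castSucc * x j.castSucc)
          / M (Fin.last n) (Fin.last n)))
        ≤ M i.castSucc (Fin.last n) * x (Fin.last n) :=
      mul_le_mul_of_nonneg_left (by linarith) (hbnn i)
    have h3 : M i.castSucc (Fin.last n) *
        (-((∑ j : Fin n, M (Fin.last n) j.castSucc * x j.castSucc)
          / M (Fin.last n) (Fin.last n)))
        = -(M i.castSucc (Fin.last n) * (∑ j : Fin n, M (Fin.last n) j.castSucc * x j.castSucc)
          / M (Fin.last n) (Fin.last n)) := by ring
    linarith
  · -- backward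
    rintro ⟨hSM', hSH⟩
    obtain ⟨x', hx'pos, hx'neg⟩ := exists_pos_of_hurwitz hSM' hSH
    have hγ : 0 ≤ ∑ j : Fin n, M (Fin.last n) j.castSucc * x' j :=
      Finset.sum_nonneg fun j _ => mul_nonneg (hcnn j) (le_of_lt (hx'pos j))
    obtain ⟨ε, hε0, hεlt⟩ : ∃ ε > 0, ∀ i : Fin n,
        M i.castSucc (Fin.last n) * ε < -(S.mulVec x' i) := by
      rcases isEmpty_or_nonempty (Fin n) with he | hne
      · exact ⟨1, one_pos, fun i => isEmptyElim i⟩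
      · refine ⟨Finset.univ.inf' Finset.univ_nonempty
          (fun i => -(S.mulVec x' i) / (M i.castSucc (Fin.last n) + 1)), ?_, ?_⟩
        · rw [gt_iff_lt, Finset.lt_inf'_iff]
          intro i _
          exact div_pos (neg_pos.2 (hx'neg i)) (by linarith [hbnn i])
        · intro i
          have hq : 0 < -(S.mulVec x' i) / (M i.castSucc (Fin.last n) + 1) :=
            div_pos (neg_pos.2 (hx'neg i)) (by linarith [hbnn i])
          have h1 := Finset.inf'_le
            (fun i => -(S.mulVec x' i) / (M i.castSucc (Fin.last n) + 1))
            (Finset.mem_univ i)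
          calc M i.castSucc (Fin.last n) * Finset.univ.inf' Finset.univ_nonempty
                (fun i => -(S.mulVec x' i) / (M i.castSucc (Fin.last n) + 1))
              ≤ M i.castSucc (Fin.last n) *
                (-(S.mulVec x' i) / (M i.castSucc (Fin.last n) + 1)) :=
                mul_le_mul_of_nonneg_left h1 (hbnn i)
            _ < (M i.castSucc (Fin.last n) + 1) *
                (-(S.mulVec x' i) / (M i.castSucc (Fin.last n) + 1)) :=
                mul_lt_mul_of_pos_right (lt_add_one _) hq
            _ = -(S.mulVec x' i) := by
                have hb1 : M i.castSucc (Fin.last n) + 1 ≠ 0 := by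
                  have := hbnn i; intro h; linarith
                rw [mul_comm, div_mul_cancel₀ _ hb1]
    set t : ℝ := -((∑ j : Fin n, M (Fin.last n) j.castSucc * x' j)
        / M (Fin.last n) (Fin.last n)) + ε with ht
    have htpos : 0 < t := by
      rw [ht]
      have : 0 ≤ -((∑ j : Fin n, M (Fin.last n) j.castSucc * x' j)
          / M (Fin.last n) (Fin.last n)) := by
        rw [neg_nonneg]
        exact div_nonpos_of_nonneg_of_nonpos hγ (le_of_lt hdneg)
      linarith
    apply hurwitz_of_exists_pos hM (x := Fin.snoc x' t)
    · intro i
      refine Fin.lastCases ?_ ?_ i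
      · rw [Fin.snoc_last]; exact htpos
      · intro j; rw [Fin.snoc_castSucc]; exact hx'pos j
    · intro i
      refine Fin.lastCases ?_ ?_ i
      · rw [hsplitlast]
        simp only [Fin.snoc_last, Fin.snoc_castSucc]
        have hd0 : M (Fin.last n) (Fin.last n) ≠ 0 := ne_of_lt hdneg
        have hkey : (∑ j : Fin n, M (Fin.last n) j.castSucc * x' j)
            + M (Fin.last n) (Fin.last n) * t = M (Fin.last n) (Fin.last n) * ε := by
          rw [ht, mul_add, mul_neg, ← mul_div_assoc, mul_div_cancel_left₀ _ hd0]
          ring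
        rw [hkey]
        exact mul_neg_of_neg_of_pos hdneg hε0
      · intro i
        rw [hsplit]
        simp only [Fin.snoc_last, Fin.snoc_castSucc]
        have hSm := hSmul x' i
        have hkey : (∑ j : Fin n, M i.castSucc j.castSucc * x' j)
            + M i.castSucc (Fin.last n) * t
            = S.mulVec x' i + M i.castSucc (Fin.last n) * ε := by
          rw [hSm, ht]
          ring
        rw [hkey]
        linarith [hεlt i]
end
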